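/- arXiv:math/0703278 — 5 statements merged into one kernel-verified Lean document; each statement's English description precedes it below -/
import Mathlib

section
/- Let n ≥ 5 be an integer. Then the group S_n^+ is isomorphic to the alternating group A_n on n letters. -/
set_option maxRecDepth 10000
set_option maxHeartbeats 1000000
set_option linter.unusedVariables false


/-- The defining relators of the group `Sₙ⁺`: generators `x_1, …, x_{n-2}` are
represented by `Fin (n-2)` (the generator with paper index `i` is `i - 1`).
(R) `xᵢ³ = 1`; (S) `(xᵢ·xᵢ₊₁)² = 1`; (Q) `xᵢ·xⱼ = xⱼ·xᵢ` for `|i-j| > 2`;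
(T) `xᵢ·xᵢ₊₁⁻¹·xᵢ₊₂ = xᵢ₊₂·xᵢ`. -/
def altRels (n : ℕ) : Set (FreeGroup (Fin (n - 2))) :=
  { r | (∃ i : Fin (n - 2), r = (FreeGroup.of i) ^ 3) ∨
        (∃ i j : Fin (n - 2), (i : ℕ) + 1 = (j : ℕ) ∧
          r = (FreeGroup.of i * FreeGroup.of j) ^ 2) ∨
        (∃ i j : Fin (n - 2), ((i : ℕ) + 2 < (j : ℕ) ∨ (j : ℕ) + 2 < (i : ℕ)) ∧
          r = FreeGroup.of i * FreeGroup.of j * (FreeGroup.of i)⁻¹ * (FreeGroup.of j)⁻¹) ∨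
        (∃ i j k : Fin (n - 2), (i : ℕ) + 1 = (j : ℕ) ∧ (i : ℕ) + 2 = (k : ℕ) ∧
          r = FreeGroup.of i * (FreeGroup.of j)⁻¹ * FreeGroup.of k *
            (FreeGroup.of i)⁻¹ * (FreeGroup.of k)⁻¹) }

/-- The group `Sₙ⁺` presented by the relations (R), (S), (Q), (T). -/
abbrev SnPlus (n : ℕ) : Type := PresentedGroup (altRels n)
open Equiv Equiv.Perm

variable {α : Type*} [DecidableEq α]

def cyc (x y z : α) : Perm α := swap x y * swap y z

lemma viaEmbedding_swap {β : Type*} [DecidableEq β] (ι : α ↪ β) (a b : α) :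
    (swap a b).viaEmbedding ι = swap (ι a) (ι b) := by
  ext t
  by_cases ht : t ∈ Set.range ι
  · obtain ⟨x, rfl⟩ := ht
    rw [Perm.viaEmbedding_apply]
    rcases eq_or_ne x a with rfl | hxa
    · simp
    · rcases eq_or_ne x b with rfl | hxb
      · simp
      · rw [swap_apply_of_ne_of_ne hxa hxb,
          swap_apply_of_ne_of_ne (fun h => hxa (ι.injective h)) (fun h => hxb (ι.injective h))]
  · rw [Perm.viaEmbedding_apply_of_notMem _ _ _ ht,
      swap_apply_of_ne_of_ne (fun h => ht ⟨a, h.symm⟩) (fun h => ht ⟨b, h.symm⟩)]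

lemma cyc_via {β : Type*} [DecidableEq β] (ι : α ↪ β) (a b c : α) :
    Perm.viaEmbeddingHom ι (cyc a b c) = cyc (ι a) (ι b) (ι c) := by
  rw [cyc, map_mul, cyc]
  simp only [Perm.viaEmbeddingHom_apply, viaEmbedding_swap]

lemma cyc_cube {x y z : α} (h1 : x ≠ y) (h2 : x ≠ z) (h3 : y ≠ z) :
    cyc x y z ^ 3 = 1 := by
  have hinj : Function.Injective ![x, y, z] := by
    intro a b hab
    fin_cases a <;> fin_cases b <;> simp_all
  let ι : Fin 3 ↪ α := ⟨![x,y,z], hinj⟩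
  have h0 : (cyc (0:Fin 3) 1 2)^3 = 1 := by decide
  have := congrArg (Perm.viaEmbeddingHom ι) h0
  rw [map_pow, map_one, cyc_via] at this
  simpa [ι] using this

lemma cyc_sq2 {x y z w : α} (h1 : x ≠ y) (h2 : x ≠ z) (h3 : x ≠ w) (h4 : y ≠ z)
    (h5 : y ≠ w) (h6 : z ≠ w) : (cyc x y z * cyc y z w) ^ 2 = 1 := by
  have hinj : Function.Injective ![x, y, z, w] := by
    intro a b hab
    fin_cases a <;> fin_cases b <;> simp_all
  let ι : Fin 4 ↪ α := ⟨![x,y,z,w], hinj⟩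
  have h0 : (cyc (0:Fin 4) 1 2 * cyc 1 2 3)^2 = 1 := by decide
  have := congrArg (Perm.viaEmbeddingHom ι) h0
  rw [map_pow, map_mul, map_one, cyc_via, cyc_via] at this
  simpa [ι] using this

lemma cyc_T {x y z w v : α} (h1 : x ≠ y) (h2 : x ≠ z) (h3 : x ≠ w) (h4 : x ≠ v)
    (h5 : y ≠ z) (h6 : y ≠ w) (h7 : y ≠ v) (h8 : z ≠ w) (h9 : z ≠ v) (h10 : w ≠ v) :
    cyc x y z * (cyc y z w)⁻¹ * cyc z w v = cyc z w v * cyc x y z := by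
  have hinj : Function.Injective ![x, y, z, w, v] := by
    intro a b hab
    fin_cases a <;> fin_cases b <;> simp_all
  let ι : Fin 5 ↪ α := ⟨![x,y,z,w,v], hinj⟩
  have h0 : cyc (0:Fin 5) 1 2 * (cyc 1 2 3)⁻¹ * cyc 2 3 4 = cyc 2 3 4 * cyc 0 1 2 := by decide
  have := congrArg (Perm.viaEmbeddingHom ι) h0
  rw [map_mul, map_mul, map_inv, map_mul, cyc_via, cyc_via, cyc_via] at this
  simpa [ι] using this

lemma cyc_apply_of_ne {x y z t : α} (h1 : t ≠ x) (h2 : t ≠ y) (h3 : t ≠ z) :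
    cyc x y z t = t := by
  rw [cyc, Perm.mul_apply, swap_apply_of_ne_of_ne h2 h3, swap_apply_of_ne_of_ne h1 h2]

lemma cyc_comm {x y z u v w : α} (h1 : x ≠ u) (h2 : x ≠ v) (h3 : x ≠ w)
    (h4 : y ≠ u) (h5 : y ≠ v) (h6 : y ≠ w) (h7 : z ≠ u) (h8 : z ≠ v) (h9 : z ≠ w)
    (hxy : x ≠ y) (hxz : x ≠ z) (hyz : y ≠ z) (huv : u ≠ v) (huw : u ≠ w) (hvw : v ≠ w) :
    cyc x y z * cyc u v w = cyc u v w * cyc x y z := by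
  have hd : Perm.Disjoint (cyc x y z) (cyc u v w) := by
    intro t
    by_cases hx : t = x ∨ t = y ∨ t = z
    · right
      rcases hx with rfl | rfl | rfl
      · exact cyc_apply_of_ne h1 h2 h3
      · exact cyc_apply_of_ne h4 h5 h6
      · exact cyc_apply_of_ne h7 h8 h9
    · left
      push_neg at hx
      exact cyc_apply_of_ne hx.1 hx.2.1 hx.2.2
  exact hd.commute

section relIdents
variable {G : Type*} [Group G] {x y z : G}

-- cube: x⁻¹ = x*x
lemma cube_inv (hx : x*x*x = 1) : x⁻¹ = x*x := by
  have : x*(x*x) = 1 := by rw [← hx]; group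
  exact inv_eq_of_mul_eq_one_right this

-- from (x*y)^2 = 1 in the form x*y*x*y = 1
lemma rel2_aba (h : x*y*x*y = 1) : x*y*x = y⁻¹ := by
  have : (x*y*x)*y = 1 := by rw [← h]
  exact (inv_eq_of_mul_eq_one_left this).symm

lemma rel2_symm (h : x*y*x*y = 1) : y*x*y*x = 1 := by
  have h2 := rel2_aba h
  have : y*x*y = x⁻¹ := by
    rw [eq_inv_iff_mul_eq_one]
    calc y*x*y*x = y*(x*y*x*y)*y⁻¹ := by group
    _ = 1 := by rw [h]; group
  rw [this]; group

lemma rel2_swap (h : x*y*x*y = 1) : x*y = y⁻¹*x⁻¹ := by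
  have := rel2_aba h
  calc x*y = (x*y*x)*x⁻¹ := by group
  _ = y⁻¹*x⁻¹ := by rw [this]

-- conj by x of y :  x*y*x⁻¹ = y⁻¹*x   (needs x³=1)
lemma rel2_conj (hx : x*x*x = 1) (h : x*y*x*y = 1) : x*y*x⁻¹ = y⁻¹*x := by
  have h1 := rel2_aba h
  have h2 := cube_inv hx
  rw [h2]
  calc x*y*(x*x) = (x*y*x)*x := by group
  _ = y⁻¹*x := by rw [h1]

end relIdents

section cover
variable {G : Type*} [Group G]

/-- Generic Todd-Coxeter style covering lemma. -/
lemma cover_aux (H : Subgroup G) (S : Set G) (hS : Subgroup.closure S = ⊤)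
    (T : Set G) (h1 : (1:G) ∈ T)
    (hcube : ∀ s ∈ S, s*s*s = 1)
    (hstep : ∀ t ∈ T, ∀ s ∈ S, ∃ h ∈ H, ∃ t' ∈ T, t * s = h * t') :
    ∀ g : G, ∃ h ∈ H, ∃ t ∈ T, g = h * t := by
  set U : Set G := {g | ∃ h ∈ H, ∃ t ∈ T, g = h * t} with hU
  have hU1 : (1:G) ∈ U := ⟨1, one_mem _, 1, h1, by simp⟩
  have key : ∀ s ∈ S, ∀ u ∈ U, u * s ∈ U := by
    rintro s hs u ⟨h, hh, t, ht, rfl⟩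
    obtain ⟨h', hh', t', ht', heq⟩ := hstep t ht s hs
    exact ⟨h * h', mul_mem hh hh', t', ht', by rw [mul_assoc, heq, mul_assoc]⟩
  have key' : ∀ s ∈ S, ∀ u ∈ U, u * s⁻¹ ∈ U := by
    intro s hs u hu
    have : s⁻¹ = s * s := cube_inv (hcube s hs)
    rw [this, ← mul_assoc]
    exact key s hs _ (key s hs u hu)
  intro g
  let V : Subgroup G :=
    { carrier := {v | ∀ u ∈ U, u * v ∈ U ∧ u * v⁻¹ ∈ U}
      one_mem' := by
        intro u hu
        rw [mul_one, inv_one, mul_one]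
        exact ⟨hu, hu⟩
      mul_mem' := by
        rintro a b ha hb
        intro u hu
        constructor
        · rw [← mul_assoc]; exact (hb _ ((ha u hu).1)).1
        · rw [mul_inv_rev, ← mul_assoc]; exact (ha _ ((hb u hu).2)).2
      inv_mem' := by
        rintro a ha u hu
        exact ⟨(ha u hu).2, by rw [inv_inv]; exact (ha u hu).1⟩ }
  have hSV : S ⊆ V := fun s hs => fun u hu => ⟨key s hs u hu, key' s hs u hu⟩
  have : g ∈ V := by
    have : (⊤ : Subgroup G) ≤ V := by rw [← hS]; exact Subgroup.closure_le V |>.mpr hSV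
    exact this trivial
  exact (by simpa using (this 1 hU1).1 : g ∈ U)

end cover
/-- the `i`-th generator of `SnPlus (m+1)`, as a total function of `i : ℕ`. -/
def XG (m : ℕ) (i : ℕ) : SnPlus (m + 1) :=
  if h : 0 < m - 1 then
    PresentedGroup.of (⟨i % (m - 1), Nat.mod_lt _ h⟩ : Fin (m + 1 - 2)) else 1

lemma XG_eq (m i : ℕ) (h : i < m - 1) :
    XG m i = PresentedGroup.of (⟨i, h⟩ : Fin (m + 1 - 2)) := by
  rw [XG, dif_pos (by omega : 0 < m - 1)]
  congr 1
  exact Fin.ext (Nat.mod_eq_of_lt h)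

lemma relator_eq_one (m : ℕ) {r : FreeGroup (Fin (m + 1 - 2))} (hr : r ∈ altRels (m+1)) :
    PresentedGroup.mk (altRels (m+1)) r = 1 :=
  (QuotientGroup.eq_one_iff r).mpr (Subgroup.subset_normalClosure hr)

lemma XG_of (m : ℕ) (x : Fin (m + 1 - 2)) :
    PresentedGroup.of (rels := altRels (m+1)) x = XG m x.val := by
  rw [XG_eq m x.val (by have := x.isLt; omega)]

lemma relR (m i : ℕ) : XG m i * XG m i * XG m i = 1 := by
  by_cases h : 0 < m - 1
  · rw [XG, dif_pos h]
    set idx : Fin (m + 1 - 2) := ⟨i % (m - 1), Nat.mod_lt _ h⟩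
    have hone := relator_eq_one m (Or.inl ⟨idx, rfl⟩ :
      (FreeGroup.of idx)^3 ∈ altRels (m+1))
    rw [map_pow] at hone
    calc PresentedGroup.of idx * PresentedGroup.of idx * PresentedGroup.of idx
        = (PresentedGroup.mk (altRels (m+1)) (FreeGroup.of idx))^3 := by
          rw [pow_succ, pow_succ, pow_one]; rfl
    _ = 1 := hone
  · rw [XG, dif_neg h]; group

lemma relS (m i : ℕ) (h : i + 1 ≤ m - 2) :
    XG m i * XG m (i+1) * XG m i * XG m (i+1) = 1 := by
  have hi : i < m - 1 := by omega
  have hj : i + 1 < m - 1 := by omega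
  rw [XG_eq m i hi, XG_eq m (i+1) hj]
  set a : Fin (m + 1 - 2) := ⟨i, hi⟩
  set b : Fin (m + 1 - 2) := ⟨i+1, hj⟩
  have hone := relator_eq_one m (Or.inr (Or.inl ⟨a, b, rfl, rfl⟩) :
    (FreeGroup.of a * FreeGroup.of b)^2 ∈ altRels (m+1))
  rw [map_pow, map_mul] at hone
  calc PresentedGroup.of a * PresentedGroup.of b * PresentedGroup.of a * PresentedGroup.of b
      = (PresentedGroup.mk (altRels (m+1)) (FreeGroup.of a) *
         PresentedGroup.mk (altRels (m+1)) (FreeGroup.of b))^2 := by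
        rw [pow_two]; rfl
  _ = 1 := hone

lemma relQ (m i j : ℕ) (h1 : i + 2 < j) (h2 : j ≤ m - 2) :
    XG m i * XG m j = XG m j * XG m i := by
  have hi : i < m - 1 := by omega
  have hj : j < m - 1 := by omega
  rw [XG_eq m i hi, XG_eq m j hj]
  set a : Fin (m + 1 - 2) := ⟨i, hi⟩
  set b : Fin (m + 1 - 2) := ⟨j, hj⟩
  have hone := relator_eq_one m (Or.inr (Or.inr (Or.inl ⟨a, b, Or.inl h1, rfl⟩)) :
    FreeGroup.of a * FreeGroup.of b * (FreeGroup.of a)⁻¹ * (FreeGroup.of b)⁻¹ ∈ altRels (m+1))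
  simp only [map_mul, map_inv] at hone
  rw [← mul_inv_eq_one]
  show PresentedGroup.mk (altRels (m+1)) (FreeGroup.of a) *
      PresentedGroup.mk (altRels (m+1)) (FreeGroup.of b) *
      (PresentedGroup.mk (altRels (m+1)) (FreeGroup.of b) *
       PresentedGroup.mk (altRels (m+1)) (FreeGroup.of a))⁻¹ = 1
  calc PresentedGroup.mk (altRels (m+1)) (FreeGroup.of a) *
      PresentedGroup.mk (altRels (m+1)) (FreeGroup.of b) *
      (PresentedGroup.mk (altRels (m+1)) (FreeGroup.of b) *
       PresentedGroup.mk (altRels (m+1)) (FreeGroup.of a))⁻¹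
      = PresentedGroup.mk (altRels (m+1)) (FreeGroup.of a) *
        PresentedGroup.mk (altRels (m+1)) (FreeGroup.of b) *
        (PresentedGroup.mk (altRels (m+1)) (FreeGroup.of a))⁻¹ *
        (PresentedGroup.mk (altRels (m+1)) (FreeGroup.of b))⁻¹ := by group
  _ = 1 := hone

lemma relT (m i : ℕ) (h : i + 2 ≤ m - 2) :
    XG m i * (XG m (i+1))⁻¹ * XG m (i+2) = XG m (i+2) * XG m i := by
  have hi : i < m - 1 := by omega
  have hj : i + 1 < m - 1 := by omega
  have hk : i + 2 < m - 1 := by omega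
  rw [XG_eq m i hi, XG_eq m (i+1) hj, XG_eq m (i+2) hk]
  set a : Fin (m + 1 - 2) := ⟨i, hi⟩
  set b : Fin (m + 1 - 2) := ⟨i+1, hj⟩
  set c : Fin (m + 1 - 2) := ⟨i+2, hk⟩
  have hone := relator_eq_one m (Or.inr (Or.inr (Or.inr ⟨a, b, c, rfl, rfl, rfl⟩)) :
    FreeGroup.of a * (FreeGroup.of b)⁻¹ * FreeGroup.of c * (FreeGroup.of a)⁻¹ *
      (FreeGroup.of c)⁻¹ ∈ altRels (m+1))
  simp only [map_mul, map_inv] at hone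
  rw [← mul_inv_eq_one]
  show PresentedGroup.mk (altRels (m+1)) (FreeGroup.of a) *
      (PresentedGroup.mk (altRels (m+1)) (FreeGroup.of b))⁻¹ *
      PresentedGroup.mk (altRels (m+1)) (FreeGroup.of c) *
      (PresentedGroup.mk (altRels (m+1)) (FreeGroup.of c) *
       PresentedGroup.mk (altRels (m+1)) (FreeGroup.of a))⁻¹ = 1
  calc PresentedGroup.mk (altRels (m+1)) (FreeGroup.of a) *
      (PresentedGroup.mk (altRels (m+1)) (FreeGroup.of b))⁻¹ *
      PresentedGroup.mk (altRels (m+1)) (FreeGroup.of c) *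
      (PresentedGroup.mk (altRels (m+1)) (FreeGroup.of c) *
       PresentedGroup.mk (altRels (m+1)) (FreeGroup.of a))⁻¹
      = PresentedGroup.mk (altRels (m+1)) (FreeGroup.of a) *
        (PresentedGroup.mk (altRels (m+1)) (FreeGroup.of b))⁻¹ *
        PresentedGroup.mk (altRels (m+1)) (FreeGroup.of c) *
        (PresentedGroup.mk (altRels (m+1)) (FreeGroup.of a))⁻¹ *
        (PresentedGroup.mk (altRels (m+1)) (FreeGroup.of c))⁻¹ := by group
  _ = 1 := hone
-- continuation: assumes t3/t4/t5 content above
def wG (n : ℕ) : ℕ → SnPlus (n+1)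
  | 0 => 1
  | (j+1) => wG n j * XG n (n - 4 - j)

def tG (n k : ℕ) : SnPlus (n+1) :=
  if k = n then 1 else if k = n - 1 then XG n (n-2)
  else XG n (n-2) * XG n (n-2) * wG n (n - 2 - k)

/-- the action of right multiplication by `XG n i` on coset indices -/
def sg (i k : ℕ) : ℕ :=
  if k = i then i+2 else if k = i+1 then i else if k = i+2 then i+1 else k

lemma sg_val1 {i k : ℕ} (h : k = i) : sg i k = i + 2 := by rw [sg, if_pos h]
lemma sg_val2 {i k : ℕ} (h : k = i + 1) : sg i k = i := by
  rw [sg, if_neg (by omega), if_pos h]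
lemma sg_val3 {i k : ℕ} (h : k = i + 2) : sg i k = i + 1 := by
  rw [sg, if_neg (by omega), if_neg (by omega), if_pos h]
lemma sg_val4 {i k : ℕ} (h1 : k ≠ i) (h2 : k ≠ i + 1) (h3 : k ≠ i + 2) : sg i k = k := by
  rw [sg, if_neg h1, if_neg h2, if_neg h3]

def HH (n : ℕ) : Subgroup (SnPlus (n+1)) :=
  Subgroup.closure {g | ∃ i, i < n - 2 ∧ g = XG n i}

lemma XG_mem_HH {n i : ℕ} (h : i < n - 2) : XG n i ∈ HH n :=
  Subgroup.subset_closure ⟨i, h, rfl⟩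

lemma tG_top (n : ℕ) : tG n n = 1 := by rw [tG, if_pos rfl]

lemma tG_top1 {n : ℕ} (hn : 1 ≤ n) : tG n (n-1) = XG n (n-2) := by
  rw [tG, if_neg (by omega), if_pos rfl]

lemma tG_top2 {n : ℕ} (hn : 2 ≤ n) : tG n (n-2) = XG n (n-2) * XG n (n-2) := by
  rw [tG, if_neg (by omega), if_neg (by omega), (by omega : n - 2 - (n-2) = 0)]
  show _ * wG n 0 = _
  rw [wG, mul_one]

lemma tG_rec {n k : ℕ} (hn : 4 ≤ n) (hk : k ≤ n - 3) :
    tG n k = tG n (k+1) * XG n (k-1) := by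
  rw [tG, if_neg (by omega), if_neg (by omega)]
  rw [tG, if_neg (by omega), if_neg (by omega)]
  rw [(by omega : n - 2 - k = (n - 2 - (k+1)) + 1)]
  show _ * wG n (n - 2 - (k+1) + 1) = _
  rw [wG, (by omega : n - 4 - (n - 2 - (k+1)) = k - 1)]
  group
lemma cube_inv2 {G : Type*} [Group G] {x : G} (hx : x*x*x = 1) : x⁻¹ * x⁻¹ = x := by
  rw [cube_inv hx]
  calc x*x*(x*x) = x*(x*x*x) := by group
  _ = x := by rw [hx, mul_one]

section TransBases
variable {n : ℕ}

lemma trans_base_top (hn : 4 ≤ n) :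
    ∀ i ≤ n - 2, ∃ h ∈ HH n, tG n n * XG n i = h * tG n (sg i n) := by
  intro i hi
  by_cases hi2 : i = n - 2
  · subst hi2
    refine ⟨1, one_mem _, ?_⟩
    rw [sg_val3 (by omega), (by omega : n - 2 + 1 = n - 1), tG_top, tG_top1 (by omega)]
  · refine ⟨XG n i, XG_mem_HH (by omega), ?_⟩
    rw [sg_val4 (by omega) (by omega) (by omega), tG_top, one_mul, mul_one]

lemma trans_base_top1 (hn : 4 ≤ n) :
    ∀ i ≤ n - 2, ∃ h ∈ HH n, tG n (n-1) * XG n i = h * tG n (sg i (n-1)) := by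
  intro i hi
  by_cases hi2 : i = n - 2
  · subst hi2
    refine ⟨1, one_mem _, ?_⟩
    rw [sg_val2 (by omega), tG_top1 (by omega), tG_top2 (by omega), one_mul]
  · by_cases hi3 : i = n - 3
    · subst hi3
      have hS := relS n (n-3) (by omega)
      rw [(by omega : n - 3 + 1 = n - 2)] at hS
      refine ⟨(XG n (n-3))⁻¹, inv_mem (XG_mem_HH (by omega)), ?_⟩
      rw [sg_val3 (by omega), (by omega : n - 3 + 1 = n - 2), tG_top1 (by omega),
        tG_top2 (by omega)]
      calc XG n (n-2) * XG n (n-3)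
          = (XG n (n-3))⁻¹ * (XG n (n-3) * XG n (n-2) * XG n (n-3)) := by group
      _ = (XG n (n-3))⁻¹ * (XG n (n-2))⁻¹ := by rw [rel2_aba hS]
      _ = (XG n (n-3))⁻¹ * (XG n (n-2) * XG n (n-2)) := by rw [cube_inv (relR n (n-2))]
      _ = _ := by group
    · by_cases hi4 : i = n - 4
      · subst hi4
        have hT := relT n (n-4) (by omega)
        rw [(by omega : n - 4 + 1 = n - 3), (by omega : n - 4 + 2 = n - 2)] at hT
        refine ⟨XG n (n-4) * (XG n (n-3))⁻¹,
          mul_mem (XG_mem_HH (by omega)) (inv_mem (XG_mem_HH (by omega))), ?_⟩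
        rw [sg_val4 (by omega) (by omega) (by omega), tG_top1 (by omega)]
        calc XG n (n-2) * XG n (n-4) = XG n (n-4) * (XG n (n-3))⁻¹ * XG n (n-2) := hT.symm
        _ = _ := by group
      · -- i ≤ n-5
        refine ⟨XG n i, XG_mem_HH (by omega), ?_⟩
        rw [sg_val4 (by omega) (by omega) (by omega), tG_top1 (by omega)]
        exact (relQ n i (n-2) (by omega) (by omega)).symm

lemma trans_base_top2 (hn : 4 ≤ n) :
    ∀ i ≤ n - 2, ∃ h ∈ HH n, tG n (n-2) * XG n i = h * tG n (sg i (n-2)) := by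
  intro i hi
  have ha := relR n (n-2)
  by_cases hi2 : i = n - 2
  · subst hi2
    refine ⟨1, one_mem _, ?_⟩
    rw [sg_val1 (by omega), (by omega : n - 2 + 2 = n), tG_top, tG_top2 (by omega),
      one_mul, ha]
  · by_cases hi3 : i = n - 3
    · subst hi3
      have hS := relS n (n-3) (by omega)
      rw [(by omega : n - 3 + 1 = n - 2)] at hS
      have hT := relT n (n-4) (by omega)
      rw [(by omega : n - 4 + 1 = n - 3), (by omega : n - 4 + 2 = n - 2)] at hT
      set s := XG n (n-3)
      set a := XG n (n-2)
      set b := XG n (n-4)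
      have hT' : a * b = b * s⁻¹ * a := hT.symm
      have A2 : a * s * a = s⁻¹ := rel2_aba (rel2_symm hS)
      have hsi : s⁻¹ = s * s := cube_inv (relR n (n-3))
      have hai : a⁻¹ = a * a := cube_inv (relR n (n-2))
      have E : a * s⁻¹ * a = a * a * s * (a * a) := by
        calc a * s⁻¹ * a = a * (a*s*a) * a := by rw [← A2]
        _ = _ := by group
      have P : s * (a * a * s) = a * a * s * (a * a) := by
        calc s * (a * a * s) = (s*a) * (a*s) := by group
        _ = (a⁻¹ * s⁻¹) * (a*s) := by rw [rel2_swap hS]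
        _ = (a⁻¹ * s⁻¹) * (s⁻¹ * a⁻¹) := by rw [rel2_swap (rel2_symm hS)]
        _ = a⁻¹ * (s⁻¹ * s⁻¹) * a⁻¹ := by group
        _ = a⁻¹ * s * a⁻¹ := by rw [cube_inv2 (relR n (n-3))]
        _ = (a*a) * s * (a*a) := by rw [← hai]
      have key : a * a * b = b * (a * a * s) := by
        calc a*a*b = a*(a*b) := by group
        _ = a*(b*s⁻¹*a) := by rw [hT']
        _ = (a*b)*(s⁻¹*a) := by group
        _ = (b*s⁻¹*a)*(s⁻¹*a) := by rw [hT']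
        _ = b*s⁻¹*(a*s⁻¹*a) := by group
        _ = b*s⁻¹*(a*a*s*(a*a)) := by rw [E]
        _ = b*s⁻¹*(s*(a*a*s)) := by rw [P]
        _ = b*(a*a*s) := by group
      refine ⟨b⁻¹, inv_mem (XG_mem_HH (by omega)), ?_⟩
      rw [sg_val2 (by omega), tG_rec hn (by omega : n - 3 ≤ n - 3),
        (by omega : n - 3 + 1 = n - 2), (by omega : n - 3 - 1 = n - 4), tG_top2 (by omega)]
      calc a * a * s = b⁻¹ * (b * (a*a*s)) := by group
      _ = b⁻¹ * (a * a * b) := by rw [key]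
    · by_cases hi4 : i = n - 4
      · subst hi4
        refine ⟨1, one_mem _, ?_⟩
        rw [sg_val3 (by omega), (by omega : n - 4 + 1 = n - 3),
          tG_rec hn (by omega : n - 3 ≤ n - 3), (by omega : n - 3 + 1 = n - 2),
          (by omega : n - 3 - 1 = n - 4), one_mul]
      · refine ⟨XG n i, XG_mem_HH (by omega), ?_⟩
        rw [sg_val4 (by omega) (by omega) (by omega), tG_top2 (by omega)]
        have hq := relQ n i (n-2) (by omega) (by omega)
        calc XG n (n-2) * XG n (n-2) * XG n i = XG n (n-2) * (XG n (n-2) * XG n i) := by group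
        _ = XG n (n-2) * (XG n i * XG n (n-2)) := by rw [← hq]
        _ = (XG n (n-2) * XG n i) * XG n (n-2) := by group
        _ = (XG n i * XG n (n-2)) * XG n (n-2) := by rw [← hq]
        _ = _ := by group

end TransBases
lemma inv_tree {G : Type*} [Group G] {A B h x : G} (heq : A * x = h * B) :
    B * x⁻¹ = h⁻¹ * A := by
  calc B * x⁻¹ = h⁻¹ * ((h * B) * x⁻¹) := by group
  _ = h⁻¹ * ((A * x) * x⁻¹) := by rw [heq]
  _ = h⁻¹ * A := by group

section KeyIdents
variable {n : ℕ}

lemma keyA2 (hn : 4 ≤ n) :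
    XG n (n-2) * XG n (n-3) * XG n (n-2) = (XG n (n-3))⁻¹ := by
  have hS := relS n (n-3) (by omega)
  rw [(by omega : n - 3 + 1 = n - 2)] at hS
  exact rel2_aba (rel2_symm hS)

lemma keyab (hn : 4 ≤ n) :
    XG n (n-2) * XG n (n-2) * XG n (n-4) =
      XG n (n-4) * (XG n (n-2) * XG n (n-2) * XG n (n-3)) := by
  have hS := relS n (n-3) (by omega)
  rw [(by omega : n - 3 + 1 = n - 2)] at hS
  have hT := relT n (n-4) (by omega)
  rw [(by omega : n - 4 + 1 = n - 3), (by omega : n - 4 + 2 = n - 2)] at hT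
  set s := XG n (n-3)
  set a := XG n (n-2)
  set b := XG n (n-4)
  have hT' : a * b = b * s⁻¹ * a := hT.symm
  have A2 : a * s * a = s⁻¹ := keyA2 hn
  have E : a * s⁻¹ * a = a * a * s * (a * a) := by
    calc a * s⁻¹ * a = a * (a*s*a) * a := by rw [← A2]
    _ = _ := by group
  have P : s * (a * a * s) = a * a * s * (a * a) := by
    calc s * (a * a * s) = (s*a) * (a*s) := by group
    _ = (a⁻¹ * s⁻¹) * (a*s) := by rw [rel2_swap hS]
    _ = (a⁻¹ * s⁻¹) * (s⁻¹ * a⁻¹) := by rw [rel2_swap (rel2_symm hS)]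
    _ = a⁻¹ * (s⁻¹ * s⁻¹) * a⁻¹ := by group
    _ = a⁻¹ * s * a⁻¹ := by rw [cube_inv2 (relR n (n-3))]
    _ = (a*a) * s * (a*a) := by rw [← cube_inv (relR n (n-2))]
  calc a*a*b = a*(a*b) := by group
  _ = a*(b*s⁻¹*a) := by rw [hT']
  _ = (a*b)*(s⁻¹*a) := by group
  _ = (b*s⁻¹*a)*(s⁻¹*a) := by rw [hT']
  _ = b*s⁻¹*(a*s⁻¹*a) := by group
  _ = b*s⁻¹*(a*a*s*(a*a)) := by rw [E]
  _ = b*s⁻¹*(s*(a*a*s)) := by rw [P]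
  _ = b*(a*a*s) := by group

lemma keyP (hn : 4 ≤ n) :
    XG n (n-3) * (XG n (n-2) * XG n (n-2) * XG n (n-3)) =
      XG n (n-2) * XG n (n-2) * XG n (n-3) * (XG n (n-2) * XG n (n-2)) := by
  have hS := relS n (n-3) (by omega)
  rw [(by omega : n - 3 + 1 = n - 2)] at hS
  set s := XG n (n-3)
  set a := XG n (n-2)
  calc s * (a * a * s) = (s*a) * (a*s) := by group
  _ = (a⁻¹ * s⁻¹) * (a*s) := by rw [rel2_swap hS]
  _ = (a⁻¹ * s⁻¹) * (s⁻¹ * a⁻¹) := by rw [rel2_swap (rel2_symm hS)]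
  _ = a⁻¹ * (s⁻¹ * s⁻¹) * a⁻¹ := by group
  _ = a⁻¹ * s * a⁻¹ := by rw [cube_inv2 (relR n (n-3))]
  _ = (a*a) * s * (a*a) := by rw [← cube_inv (relR n (n-2))]

lemma key2 (hn : 4 ≤ n) :
    XG n (n-2) * XG n (n-2) * (XG n (n-3))⁻¹ = XG n (n-3) * XG n (n-2) := by
  set s := XG n (n-3)
  set a := XG n (n-2)
  calc a*a*s⁻¹ = a*a*(a*s*a) := by rw [← keyA2 hn]
  _ = (a*a*a)*(s*a) := by group
  _ = 1*(s*a) := by rw [relR n (n-2)]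
  _ = s*a := by group

lemma key3' (hn : 4 ≤ n) :
    XG n (n-3) * (XG n (n-2) * XG n (n-2) * XG n (n-3) * XG n (n-2)) =
      XG n (n-2) * XG n (n-2) * XG n (n-3) := by
  set s := XG n (n-3)
  set a := XG n (n-2)
  calc s * (a*a*s*a) = (s*(a*a*s))*a := by group
  _ = (a*a*s*(a*a))*a := by rw [keyP hn]
  _ = a*a*s*(a*a*a) := by group
  _ = a*a*s*1 := by rw [relR n (n-2)]
  _ = a*a*s := by group

lemma id_B6 (hn : 4 ≤ n) (j : ℕ) (hj : j + 2 ≤ n - 2) :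
    (XG n (j+1))⁻¹ * (XG n j * XG n (j+2) * XG n j) = XG n j * XG n (j+2) := by
  have hS := relS n j (by omega)
  have hT := relT n j hj
  set x := XG n j
  set y := XG n (j+1)
  set z := XG n (j+2)
  calc y⁻¹*(x*z*x) = y⁻¹*x*(z*x) := by group
  _ = y⁻¹*x*(x*y⁻¹*z) := by rw [← hT]
  _ = y⁻¹*(x*x)*(y⁻¹*z) := by group
  _ = y⁻¹*x⁻¹*(y⁻¹*z) := by rw [← cube_inv (relR n j)]
  _ = (y⁻¹*x⁻¹)*y⁻¹*z := by group
  _ = (x*y)*y⁻¹*z := by rw [← rel2_swap hS]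
  _ = x*z := by group

end KeyIdents
section TransStep
variable {n : ℕ}

lemma trans_step (hn : 4 ≤ n) (k : ℕ) (hk : k ≤ n - 3)
    (IH : ∀ k', k < k' → k' ≤ n → ∀ i, i ≤ n - 2 →
      ∃ h ∈ HH n, tG n k' * XG n i = h * tG n (sg i k')) :
    ∀ i, i ≤ n - 2 → ∃ h ∈ HH n, tG n k * XG n i = h * tG n (sg i k) := by
  intro i hi
  by_cases hk0 : k = 0
  · -- level 0
    subst hk0
    have hrec0 : tG n 0 = tG n 1 * XG n 0 := by
      have := tG_rec hn (by omega : 0 ≤ n - 3)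
      rwa [(by omega : 0 - 1 = 0), (by norm_num : 0 + 1 = 1)] at this
    have hrec1 : tG n 1 = tG n 2 * XG n 0 := by
      have := tG_rec hn (by omega : 1 ≤ n - 3)
      rwa [(by omega : 1 - 1 = 0), (by norm_num : 1 + 1 = 2)] at this
    by_cases hi0 : i = 0
    · subst hi0
      refine ⟨1, one_mem _, ?_⟩
      rw [sg_val1 rfl, (by norm_num : 0 + 2 = 2)]
      calc tG n 0 * XG n 0 = tG n 2 * (XG n 0 * XG n 0 * XG n 0) := by
            rw [hrec0, hrec1]; group
      _ = tG n 2 * 1 := by rw [relR n 0]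
      _ = 1 * tG n 2 := by group
    · by_cases hi1 : i = 1
      · subst hi1
        have hS := relS n 0 (by omega)
        rw [(by norm_num : 0 + 1 = 1)] at hS
        obtain ⟨h1, hh1, heq1⟩ := IH 2 (by omega) (by omega) 1 (by omega)
        rw [sg_val2 rfl] at heq1
        have hinv1 : tG n 1 * (XG n 1)⁻¹ = h1⁻¹ * tG n 2 := inv_tree heq1
        refine ⟨h1⁻¹, inv_mem hh1, ?_⟩
        rw [sg_val4 (by omega) (by omega) (by omega)]
        calc tG n 0 * XG n 1 = tG n 1 * (XG n 0 * XG n 1) := by rw [hrec0]; group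
        _ = tG n 1 * ((XG n 1)⁻¹ * (XG n 0)⁻¹) := by rw [rel2_swap hS]
        _ = (tG n 1 * (XG n 1)⁻¹) * (XG n 0)⁻¹ := by group
        _ = (h1⁻¹ * tG n 2) * (XG n 0)⁻¹ := by rw [hinv1]
        _ = h1⁻¹ * (tG n 2 * (XG n 0 * XG n 0)) := by rw [← cube_inv (relR n 0)]; group
        _ = h1⁻¹ * ((tG n 2 * XG n 0) * XG n 0) := by group
        _ = h1⁻¹ * (tG n 1 * XG n 0) := by rw [← hrec1]
        _ = h1⁻¹ * tG n 0 := by rw [← hrec0]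
      · by_cases hi2 : i = 2
        · subst hi2
          obtain ⟨h1, hh1, heq1⟩ := IH 2 (by omega) (by omega) 1 (by omega)
          rw [sg_val2 rfl] at heq1
          have hinv1 : tG n 1 * (XG n 1)⁻¹ = h1⁻¹ * tG n 2 := inv_tree heq1
          obtain ⟨h2, hh2, heq2⟩ := IH 1 (by omega) (by omega) 2 (by omega)
          rw [sg_val4 (by omega) (by omega) (by omega)] at heq2
          have hid := id_B6 hn 0 (by omega)
          rw [(by norm_num : 0 + 1 = 1), (by norm_num : 0 + 2 = 2)] at hid
          refine ⟨h1⁻¹ * h2, mul_mem (inv_mem hh1) hh2, ?_⟩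
          rw [sg_val4 (by omega) (by omega) (by omega)]
          calc tG n 0 * XG n 2 = tG n 1 * (XG n 0 * XG n 2) := by rw [hrec0]; group
          _ = tG n 1 * ((XG n 1)⁻¹ * (XG n 0 * XG n 2 * XG n 0)) := by rw [hid]
          _ = (tG n 1 * (XG n 1)⁻¹) * (XG n 0 * XG n 2 * XG n 0) := by group
          _ = (h1⁻¹ * tG n 2) * (XG n 0 * XG n 2 * XG n 0) := by rw [hinv1]
          _ = h1⁻¹ * (((tG n 2 * XG n 0) * XG n 2) * XG n 0) := by group
          _ = h1⁻¹ * ((tG n 1 * XG n 2) * XG n 0) := by rw [← hrec1]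
          _ = h1⁻¹ * ((h2 * tG n 1) * XG n 0) := by rw [heq2]
          _ = (h1⁻¹ * h2) * (tG n 1 * XG n 0) := by group
          _ = (h1⁻¹ * h2) * tG n 0 := by rw [← hrec0]
        · -- i ≥ 3
          have hi3 : 3 ≤ i := by omega
          have hq := relQ n 0 i (by omega) hi
          obtain ⟨h1, hh1, heq1⟩ := IH 1 (by omega) (by omega) i hi
          rw [sg_val4 (by omega) (by omega) (by omega)] at heq1
          refine ⟨h1, hh1, ?_⟩
          rw [sg_val4 (by omega) (by omega) (by omega)]
          calc tG n 0 * XG n i = tG n 1 * (XG n 0 * XG n i) := by rw [hrec0]; group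
          _ = tG n 1 * (XG n i * XG n 0) := by rw [hq]
          _ = (tG n 1 * XG n i) * XG n 0 := by group
          _ = (h1 * tG n 1) * XG n 0 := by rw [heq1]
          _ = h1 * tG n 0 := by rw [hrec0]; group
  · -- 1 ≤ k
    have hk1 : 1 ≤ k := by omega
    have hrec : tG n k = tG n (k+1) * XG n (k-1) := tG_rec hn hk
    by_cases hB1 : i + 4 ≤ k
    · -- B1 : far below
      have hq := relQ n i (k-1) (by omega) (by omega)
      obtain ⟨h, hh, heq⟩ := IH (k+1) (by omega) (by omega) i hi
      rw [sg_val4 (by omega) (by omega) (by omega)] at heq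
      refine ⟨h, hh, ?_⟩
      rw [sg_val4 (by omega) (by omega) (by omega)]
      calc tG n k * XG n i = tG n (k+1) * (XG n (k-1) * XG n i) := by rw [hrec]; group
      _ = tG n (k+1) * (XG n i * XG n (k-1)) := by rw [← hq]
      _ = (tG n (k+1) * XG n i) * XG n (k-1) := by group
      _ = (h * tG n (k+1)) * XG n (k-1) := by rw [heq]
      _ = h * tG n k := by rw [hrec]; group
    · by_cases hB2 : i + 3 = k
      · -- B2 : i = k-3
        have hT := relT n i (by omega)
        rw [(by omega : i + 2 = k - 1)] at hT
        obtain ⟨h1, hh1, heq1⟩ := IH (k+1) (by omega) (by omega) i hi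
        rw [sg_val4 (by omega) (by omega) (by omega)] at heq1
        obtain ⟨h2, hh2, heq2⟩ := IH (k+1) (by omega) (by omega) (i+1) (by omega)
        rw [sg_val4 (by omega) (by omega) (by omega)] at heq2
        have hinv2 : tG n (k+1) * (XG n (i+1))⁻¹ = h2⁻¹ * tG n (k+1) := inv_tree heq2
        refine ⟨h1 * h2⁻¹, mul_mem hh1 (inv_mem hh2), ?_⟩
        rw [sg_val4 (by omega) (by omega) (by omega)]
        calc tG n k * XG n i = tG n (k+1) * (XG n (k-1) * XG n i) := by rw [hrec]; group
        _ = tG n (k+1) * (XG n i * (XG n (i+1))⁻¹ * XG n (k-1)) := by rw [hT]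
        _ = ((tG n (k+1) * XG n i) * (XG n (i+1))⁻¹) * XG n (k-1) := by group
        _ = ((h1 * tG n (k+1)) * (XG n (i+1))⁻¹) * XG n (k-1) := by rw [heq1]
        _ = (h1 * (tG n (k+1) * (XG n (i+1))⁻¹)) * XG n (k-1) := by group
        _ = (h1 * (h2⁻¹ * tG n (k+1))) * XG n (k-1) := by rw [hinv2]
        _ = (h1 * h2⁻¹) * (tG n (k+1) * XG n (k-1)) := by group
        _ = (h1 * h2⁻¹) * tG n k := by rw [← hrec]
      · by_cases hB3 : i + 2 = k
        · -- B3 : tree edge, h = 1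
          have hrec' : tG n (i+1) = tG n k * XG n i := by
            have := tG_rec hn (by omega : i + 1 ≤ n - 3)
            rwa [(by omega : i + 1 + 1 = k), (by omega : i + 1 - 1 = i)] at this
          refine ⟨1, one_mem _, ?_⟩
          rw [sg_val3 hB3.symm, ← hrec', one_mul]
        · by_cases hB4 : i + 1 = k
          · -- B4
            have hrec' : tG n i = tG n k * XG n (i-1) := by
              have := tG_rec hn (by omega : i ≤ n - 3)
              rwa [(by omega : i + 1 = k)] at this
            by_cases hk1' : k = 1
            · -- i = 0, tree edge
              refine ⟨1, one_mem _, ?_⟩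
              have h0 : i = 0 := by omega
              subst h0
              rw [sg_val2 hB4.symm, ← (by rwa [(by omega : (0:ℕ) - 1 = 0)] at hrec' :
                tG n 0 = tG n k * XG n 0), one_mul]
            · -- k ≥ 2, i = k-1 ≥ 1
              have hS := relS n (i-1) (by omega)
              rw [(by omega : i - 1 + 1 = i)] at hS
              obtain ⟨h0, hh0, heq0⟩ := IH (k+1) (by omega) (by omega) (i-1) (by omega)
              rw [sg_val4 (by omega) (by omega) (by omega)] at heq0
              have hrk : XG n (k-1) = XG n i := by rw [(by omega : k - 1 = i)]
              refine ⟨h0, hh0, ?_⟩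
              rw [sg_val2 hB4.symm]
              calc tG n k * XG n i = tG n (k+1) * (XG n i * XG n i) := by
                    rw [hrec, hrk]; group
              _ = tG n (k+1) * (XG n i)⁻¹ := by rw [← cube_inv (relR n i)]
              _ = tG n (k+1) * (XG n (i-1) * XG n i * XG n (i-1)) := by
                    rw [rel2_aba hS]
              _ = ((tG n (k+1) * XG n (i-1)) * XG n i) * XG n (i-1) := by group
              _ = ((h0 * tG n (k+1)) * XG n i) * XG n (i-1) := by rw [heq0]
              _ = h0 * ((tG n (k+1) * XG n i) * XG n (i-1)) := by group
              _ = h0 * ((tG n (k+1) * XG n (k-1)) * XG n (i-1)) := by rw [hrk]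
              _ = h0 * (tG n k * XG n (i-1)) := by rw [← hrec]
              _ = h0 * tG n i := by rw [← hrec']
          · by_cases hB5 : i = k
            · -- B5
              subst hB5
              by_cases hkn4 : i ≤ n - 4
              · -- main subcase
                have hS := relS n (i-1) (by omega)
                rw [(by omega : i - 1 + 1 = i)] at hS
                have hrec2 : tG n (i+1) = tG n (i+2) * XG n i := by
                  have := tG_rec hn (by omega : i + 1 ≤ n - 3)
                  rwa [(by omega : i + 1 - 1 = i)] at this
                obtain ⟨h0, hh0, heq0⟩ := IH (i+2) (by omega) (by omega) (i-1) (by omega)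
                rw [sg_val4 (by omega) (by omega) (by omega)] at heq0
                have hinv0 : tG n (i+2) * (XG n (i-1))⁻¹ = h0⁻¹ * tG n (i+2) := inv_tree heq0
                refine ⟨h0⁻¹, inv_mem hh0, ?_⟩
                rw [sg_val1 rfl]
                calc tG n i * XG n i
                    = tG n (i+1) * (XG n (i-1) * XG n i) := by rw [hrec]; group
                _ = tG n (i+1) * ((XG n i)⁻¹ * (XG n (i-1))⁻¹) := by rw [rel2_swap hS]
                _ = (tG n (i+2) * XG n i) * (XG n i)⁻¹ * (XG n (i-1))⁻¹ := by
                      rw [← hrec2]; group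
                _ = tG n (i+2) * (XG n (i-1))⁻¹ := by group
                _ = h0⁻¹ * tG n (i+2) := hinv0
              · -- i = k = n-3 : edge
                have hkn3 : i = n - 3 := by omega
                subst hkn3
                have ht3 : tG n (n-3) = XG n (n-2) * XG n (n-2) * XG n (n-4) := by
                  rw [hrec, (by omega : n - 3 + 1 = n - 2), (by omega : n - 3 - 1 = n - 4),
                    tG_top2 (by omega)]
                refine ⟨XG n (n-4) * XG n (n-3),
                  mul_mem (XG_mem_HH (by omega)) (XG_mem_HH (by omega)), ?_⟩
                rw [sg_val1 rfl, (by omega : n - 3 + 2 = n - 1), tG_top1 (by omega), ht3]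
                set s := XG n (n-3)
                set a := XG n (n-2)
                set b := XG n (n-4)
                calc a*a*b*s = (b*(a*a*s))*s := by rw [keyab hn]
                _ = b*(a*a*(s*s)) := by group
                _ = b*(a*a*s⁻¹) := by rw [← cube_inv (relR n (n-3))]
                _ = b*(s*a) := by rw [(rfl : a*a*s⁻¹ = a*a*(XG n (n-3))⁻¹), key2 hn]
                _ = (b*s)*a := by group
            · by_cases hB6 : i = k + 1
              · -- B6 / B8
                by_cases hin2 : i = n - 2
                · -- B8 : k = n-3, letter a
                  have hkn3 : k = n - 3 := by omega
                  subst hkn3; subst hin2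
                  have ht3 : tG n (n-3) = XG n (n-2) * XG n (n-2) * XG n (n-4) := by
                    rw [hrec, (by omega : n - 3 + 1 = n - 2), (by omega : n - 3 - 1 = n - 4),
                      tG_top2 (by omega)]
                  have hSbs := relS n (n-4) (by omega)
                  rw [(by omega : n - 4 + 1 = n - 3)] at hSbs
                  refine ⟨(XG n (n-4))⁻¹ * XG n (n-3),
                    mul_mem (inv_mem (XG_mem_HH (by omega))) (XG_mem_HH (by omega)), ?_⟩
                  rw [sg_val4 (by omega) (by omega) (by omega), ht3]
                  set s := XG n (n-3)
                  set a := XG n (n-2)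
                  set b := XG n (n-4)
                  have lhs_eq : a*a*b*a = b*(s⁻¹*(a*a*s)) := by
                    calc a*a*b*a = (b*(a*a*s))*a := by rw [keyab hn]
                    _ = b*(s⁻¹*(s*(a*a*s*a))) := by group
                    _ = b*(s⁻¹*(a*a*s)) := by rw [key3' hn]
                  have rhs_eq : (b⁻¹*s)*(a*a*b) = b*(s⁻¹*(a*a*s)) := by
                    calc (b⁻¹*s)*(a*a*b) = b⁻¹*s*(b*(a*a*s)) := by rw [keyab hn]
                    _ = b⁻¹*(s*b)*(a*a*s) := by group
                    _ = b⁻¹*(b⁻¹*s⁻¹)*(a*a*s) := by rw [rel2_swap (rel2_symm hSbs)]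
                    _ = (b⁻¹*b⁻¹)*(s⁻¹*(a*a*s)) := by group
                    _ = b*(s⁻¹*(a*a*s)) := by rw [cube_inv2 (relR n (n-4))]
                  rw [lhs_eq, rhs_eq]
                · -- B6 main : i = k+1 ≤ n-3
                  subst hB6
                  have hrec2 : tG n (k+1) = tG n (k+2) * XG n k := by
                    have := tG_rec hn (by omega : k + 1 ≤ n - 3)
                    rwa [(by omega : k + 1 - 1 = k)] at this
                  have hinv2 : tG n (k+1) * (XG n k)⁻¹ = tG n (k+2) := by
                    rw [hrec2]; group
                  have hid := id_B6 hn (k-1) (by omega)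
                  rw [(by omega : k - 1 + 1 = k), (by omega : k - 1 + 2 = k + 1)] at hid
                  obtain ⟨hA, hhA, heqA⟩ := IH (k+2) (by omega) (by omega) (k-1) (by omega)
                  rw [sg_val4 (by omega) (by omega) (by omega)] at heqA
                  obtain ⟨hB, hhB, heqB⟩ := IH (k+2) (by omega) (by omega) (k+1) (by omega)
                  rw [sg_val2 rfl] at heqB
                  refine ⟨hA * hB, mul_mem hhA hhB, ?_⟩
                  rw [sg_val4 (by omega) (by omega) (by omega)]
                  calc tG n k * XG n (k+1)
                      = tG n (k+1) * (XG n (k-1) * XG n (k+1)) := by rw [hrec]; group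
                  _ = tG n (k+1) * ((XG n k)⁻¹ *
                        (XG n (k-1) * XG n (k+1) * XG n (k-1))) := by rw [hid]
                  _ = (tG n (k+1) * (XG n k)⁻¹) *
                        (XG n (k-1) * XG n (k+1) * XG n (k-1)) := by group
                  _ = tG n (k+2) * (XG n (k-1) * XG n (k+1) * XG n (k-1)) := by rw [hinv2]
                  _ = ((tG n (k+2) * XG n (k-1)) * XG n (k+1)) * XG n (k-1) := by group
                  _ = ((hA * tG n (k+2)) * XG n (k+1)) * XG n (k-1) := by rw [heqA]
                  _ = hA * ((tG n (k+2) * XG n (k+1)) * XG n (k-1)) := by group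
                  _ = hA * ((hB * tG n (k+1)) * XG n (k-1)) := by rw [heqB]
                  _ = (hA * hB) * (tG n (k+1) * XG n (k-1)) := by group
                  _ = (hA * hB) * tG n k := by rw [← hrec]
              · -- B7 : i ≥ k+2
                have hik : k + 2 ≤ i := by omega
                have hq := relQ n (k-1) i (by omega) hi
                obtain ⟨h1, hh1, heq1⟩ := IH (k+1) (by omega) (by omega) i hi
                rw [sg_val4 (by omega) (by omega) (by omega)] at heq1
                refine ⟨h1, hh1, ?_⟩
                rw [sg_val4 (by omega) (by omega) (by omega)]
                calc tG n k * XG n i = tG n (k+1) * (XG n (k-1) * XG n i) := by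
                      rw [hrec]; group
                _ = tG n (k+1) * (XG n i * XG n (k-1)) := by rw [hq]
                _ = (tG n (k+1) * XG n i) * XG n (k-1) := by group
                _ = (h1 * tG n (k+1)) * XG n (k-1) := by rw [heq1]
                _ = h1 * tG n k := by rw [hrec]; group

end TransStep
lemma sg_le {n i k : ℕ} (hk : k ≤ n) (hi : i ≤ n - 2) (hn : 2 ≤ n) : sg i k ≤ n := by
  rw [sg]; split_ifs <;> omega

lemma trans_all {n : ℕ} (hn : 4 ≤ n) :
    ∀ k ≤ n, ∀ i ≤ n - 2, ∃ h ∈ HH n, tG n k * XG n i = h * tG n (sg i k) := by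
  have main : ∀ m k, k ≤ n → n - k = m → ∀ i, i ≤ n - 2 →
      ∃ h ∈ HH n, tG n k * XG n i = h * tG n (sg i k) := by
    intro m
    induction m using Nat.strong_induction_on with
    | _ m IH =>
      intro k hkn hm i hi
      by_cases h1 : k = n
      · subst h1; exact trans_base_top hn i hi
      · by_cases h2 : k = n - 1
        · subst h2; exact trans_base_top1 hn i hi
        · by_cases h3 : k = n - 2
          · subst h3; exact trans_base_top2 hn i hi
          · have hk3 : k ≤ n - 3 := by omega
            exact trans_step hn k hk3
              (fun k' hk' hk'n i' hi' => IH (n - k') (by omega) k' hk'n rfl i' hi') i hi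
  exact fun k hk i hi => main (n - k) k hk rfl i hi

lemma cover_final {n : ℕ} (hn : 4 ≤ n) :
    ∀ g : SnPlus (n+1), ∃ h ∈ HH n, ∃ k ≤ n, g = h * tG n k := by
  have hS : Subgroup.closure (Set.range (PresentedGroup.of : Fin (n+1-2) →
      SnPlus (n+1))) = ⊤ := PresentedGroup.closure_range_of _
  have hc := cover_aux (HH n) _ hS (tG n '' Set.Iic n)
    ⟨n, Set.mem_Iic.mpr le_rfl, tG_top n⟩
    (by
      rintro s ⟨x, rfl⟩
      rw [XG_of n x]
      exact relR n x.val)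
    (by
      rintro t ⟨k, hk, rfl⟩ s ⟨x, rfl⟩
      rw [XG_of n x]
      obtain ⟨h, hh, heq⟩ := trans_all hn k (Set.mem_Iic.mp hk) x.val
        (by have := x.isLt; omega)
      exact ⟨h, hh, tG n (sg x.val k), ⟨sg x.val k,
        Set.mem_Iic.mpr (sg_le (Set.mem_Iic.mp hk) (by have := x.isLt; omega) (by omega)),
        rfl⟩, heq⟩)
  intro g
  obtain ⟨h, hh, t, ⟨k, hk, rfl⟩, hg⟩ := hc g
  exact ⟨h, hh, k, Set.mem_Iic.mp hk, hg⟩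
section StepCard
variable {n : ℕ}

/-- The homomorphism `SnPlus n →* SnPlus (n+1)` sending generator `i` to generator `i`. -/
noncomputable def iotaG (hn : 4 ≤ n) : SnPlus n →* SnPlus (n+1) :=
  PresentedGroup.toGroup (f := fun x : Fin (n - 2) => XG n x.val)
    (by
      intro r hr
      rcases hr with ⟨i, rfl⟩ | ⟨i, j, hij, rfl⟩ | ⟨i, j, hij, rfl⟩ | ⟨i, j, k, hij, hik, rfl⟩
      · simp only [map_pow, FreeGroup.lift_apply_of]
        rw [pow_succ, pow_succ, pow_one]
        exact relR n i.val
      · simp only [map_pow, map_mul, FreeGroup.lift_apply_of]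
        have hj : XG n (j : ℕ) = XG n ((i : ℕ) + 1) := by rw [hij]
        have hS := relS n i.val (by have := j.isLt; omega)
        rw [pow_two, hj]
        calc XG n i.val * XG n (i.val + 1) * (XG n i.val * XG n (i.val + 1))
            = XG n i.val * XG n (i.val + 1) * XG n i.val * XG n (i.val + 1) := by group
        _ = 1 := hS
      · simp only [map_mul, map_inv, FreeGroup.lift_apply_of]
        have hq : XG n i.val * XG n j.val = XG n j.val * XG n i.val := by
          rcases hij with h | h
          · exact relQ n i.val j.val h (by have := j.isLt; omega)
          · exact (relQ n j.val i.val h (by have := i.isLt; omega)).symm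
        rw [← mul_inv_eq_one]
        calc XG n i.val * XG n j.val * (XG n i.val)⁻¹ * (XG n j.val)⁻¹ *
              (1 : SnPlus (n+1))⁻¹
            = XG n i.val * XG n j.val * (XG n j.val * XG n i.val)⁻¹ := by group
        _ = XG n i.val * XG n j.val * (XG n i.val * XG n j.val)⁻¹ := by rw [← hq]
        _ = 1 := by group
      · simp only [map_mul, map_inv, FreeGroup.lift_apply_of]
        have hj : XG n (j : ℕ) = XG n ((i : ℕ) + 1) := by rw [hij]
        have hk : XG n (k : ℕ) = XG n ((i : ℕ) + 2) := by rw [hik]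
        have hT := relT n i.val (by have := k.isLt; omega)
        rw [hj, hk, ← mul_inv_eq_one]
        calc XG n i.val * (XG n (i.val+1))⁻¹ * XG n (i.val+2) * (XG n i.val)⁻¹ *
              (XG n (i.val+2))⁻¹ * (1 : SnPlus (n+1))⁻¹
            = XG n i.val * (XG n (i.val+1))⁻¹ * XG n (i.val+2) *
              (XG n (i.val+2) * XG n i.val)⁻¹ := by group
        _ = XG n i.val * (XG n (i.val+1))⁻¹ * XG n (i.val+2) *
              (XG n i.val * (XG n (i.val+1))⁻¹ * XG n (i.val+2))⁻¹ := by rw [← hT]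
        _ = 1 := by group)

lemma HH_le_range (hn : 4 ≤ n) : HH n ≤ (iotaG hn).range := by
  rw [HH]
  apply (Subgroup.closure_le _).mpr
  rintro g ⟨i, hilt, rfl⟩
  refine ⟨PresentedGroup.of (⟨i, by omega⟩ : Fin (n-2)), ?_⟩
  rw [iotaG, PresentedGroup.toGroup.of]

lemma step_card (hn : 4 ≤ n) (hfin : Finite (SnPlus n))
    (hcard : 2 * Nat.card (SnPlus n) ≤ Nat.factorial n) :
    Finite (SnPlus (n+1)) ∧ 2 * Nat.card (SnPlus (n+1)) ≤ Nat.factorial (n+1) := by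
  have hrangefin : (Set.range (iotaG hn)).Finite := Set.finite_range _
  have hHsub : ((HH n : Subgroup (SnPlus (n+1))) : Set (SnPlus (n+1))) ⊆
      Set.range (iotaG hn) := by
    intro g hg
    obtain ⟨y, hy⟩ := HH_le_range hn hg
    exact ⟨y, hy⟩
  have hHfin : Finite ↥(HH n) := (hrangefin.subset hHsub).to_subtype
  -- card bound for HH n
  have hcardH : Nat.card ↥(HH n) ≤ Nat.card (SnPlus n) := by
    have h1 : Nat.card ↥(HH n) ≤ Nat.card ↥(Set.range (iotaG hn)) := by
      have : Finite ↥(Set.range (iotaG hn)) := hrangefin.to_subtype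
      exact Nat.card_le_card_of_injective _ (Set.inclusion_injective hHsub)
    have h2 : Nat.card ↥(Set.range (iotaG hn)) ≤ Nat.card (SnPlus n) :=
      Nat.card_le_card_of_surjective _ Set.rangeFactorization_surjective
    omega
  -- surjection onto SnPlus (n+1)
  have hsurj : Function.Surjective
      (fun p : ↥(HH n) × Fin (n+1) => (p.1 : SnPlus (n+1)) * tG n p.2.val) := by
    intro g
    obtain ⟨h, hh, k, hk, rfl⟩ := cover_final hn g
    exact ⟨(⟨h, hh⟩, ⟨k, by omega⟩), rfl⟩
  have hfin' : Finite (SnPlus (n+1)) := Finite.of_surjective _ hsurj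
  refine ⟨hfin', ?_⟩
  have hle : Nat.card (SnPlus (n+1)) ≤ Nat.card (↥(HH n) × Fin (n+1)) :=
    Nat.card_le_card_of_surjective _ hsurj
  rw [Nat.card_prod, Nat.card_eq_fintype_card (α := Fin (n+1)), Fintype.card_fin] at hle
  calc 2 * Nat.card (SnPlus (n+1)) ≤ 2 * (Nat.card ↥(HH n) * (n+1)) :=
        Nat.mul_le_mul_left 2 hle
  _ = (2 * Nat.card ↥(HH n)) * (n+1) := by ring
  _ ≤ (2 * Nat.card (SnPlus n)) * (n+1) :=
        Nat.mul_le_mul_right _ (Nat.mul_le_mul_left 2 hcardH)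
  _ ≤ Nat.factorial n * (n+1) := Nat.mul_le_mul_right _ hcard
  _ = Nat.factorial (n+1) := by rw [Nat.factorial_succ]; ring

end StepCard
section Base4

lemma base4 : Finite (SnPlus 4) ∧ 2 * Nat.card (SnPlus 4) ≤ Nat.factorial 4 := by
  have hS : (XG 3 0) * (XG 3 1) * (XG 3 0) * (XG 3 1) = 1 := relS 3 0 (by norm_num)
  set s : SnPlus 4 := XG 3 0 with hs
  set a : SnPlus 4 := XG 3 1 with ha
  have hra : a*a*a = 1 := relR 3 1
  have hrs : s*s*s = 1 := relR 3 0
  have haba : s*a*s = a⁻¹ := rel2_aba hS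
  have haa : s*a*s = a*a := by rw [haba, cube_inv hra]
  have hasa : a*s*a = s⁻¹ := rel2_aba (rel2_symm hS)
  have hk2 : a*a*s⁻¹ = s*a := by
    calc a*a*s⁻¹ = a*a*(a*s*a) := by rw [hasa]
    _ = (a*a*a)*(s*a) := by group
    _ = 1*(s*a) := by rw [hra]
    _ = s*a := by group
  let H4 : Subgroup (SnPlus 4) := Subgroup.closure {s}
  have hsH : s ∈ H4 := Subgroup.subset_closure rfl
  have hcov := cover_aux H4 (Set.range (PresentedGroup.of : Fin (4-2) → SnPlus 4))
    (PresentedGroup.closure_range_of _) {1, a, a*a, a*a*s}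
    (by left; rfl)
    (by
      rintro s' ⟨x, rfl⟩
      rw [XG_of 3 x]
      exact relR 3 x.val)
    (by
      rintro t ht s' ⟨x, rfl⟩
      rw [XG_of 3 x]
      have hx : x.val = 0 ∨ x.val = 1 := by omega
      rcases ht with rfl | rfl | rfl | rfl <;> rcases hx with hx | hx <;> rw [hx]
      · -- 1 * s
        rw [← hs]
        exact ⟨s, hsH, 1, by left; rfl, by group⟩
      · -- 1 * a
        rw [← ha]
        exact ⟨1, one_mem _, a, by right; left; rfl, by group⟩
      · -- a * s
        rw [← hs]
        refine ⟨s⁻¹, inv_mem hsH, a*a, by right; right; left; rfl, ?_⟩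
        calc a * s = s⁻¹*(s*a*s) := by group
        _ = s⁻¹*(a*a) := by rw [haa]
      · -- a * a
        rw [← ha]
        exact ⟨1, one_mem _, a*a, by right; right; left; rfl, by group⟩
      · -- a*a * s
        rw [← hs]
        exact ⟨1, one_mem _, a*a*s, by right; right; right; rfl, by group⟩
      · -- a*a * a
        rw [← ha]
        refine ⟨1, one_mem _, 1, by left; rfl, ?_⟩
        rw [hra]; group
      · -- a*a*s * s
        rw [← hs]
        refine ⟨s, hsH, a, by right; left; rfl, ?_⟩
        calc a*a*s*s = a*a*s⁻¹*(s*s*s) := by group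
        _ = a*a*s⁻¹ := by rw [hrs]; group
        _ = s*a := hk2
      · -- a*a*s * a
        rw [← ha]
        refine ⟨s⁻¹, inv_mem hsH, a*a*s, by right; right; right; rfl, ?_⟩
        calc a*a*s*a = a*a*(s*a) := by group
        _ = a*a*(a⁻¹*s⁻¹) := by rw [rel2_swap hS]
        _ = a*s⁻¹ := by group
        _ = s⁻¹*((s*a*s)*s)*(s*s*s)⁻¹ := by group
        _ = s⁻¹*((a*a)*s)*(1:SnPlus 4)⁻¹ := by rw [haa, hrs]
        _ = s⁻¹*(a*a*s) := by group)
  -- finiteness and cardinality of H4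
  have hzp : H4 = Subgroup.zpowers s := (Subgroup.zpowers_eq_closure s).symm
  have hfo : IsOfFinOrder s := by
    rw [isOfFinOrder_iff_pow_eq_one]
    exact ⟨3, by norm_num, by rw [pow_succ, pow_succ, pow_one]; exact hrs⟩
  have hH4fin : Finite ↥H4 := by
    rw [hzp]
    exact hfo.finite_zpowers.to_subtype
  have hcardH4 : Nat.card ↥H4 ≤ 3 := by
    rw [hzp, Nat.card_zpowers]
    refine Nat.le_of_dvd (by norm_num) (orderOf_dvd_of_pow_eq_one ?_)
    rw [pow_succ, pow_succ, pow_one]; exact hrs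
  -- surjection
  have hsurj : Function.Surjective (fun p : ↥H4 × Fin 4 =>
      (p.1 : SnPlus 4) * (![1, a, a*a, a*a*s] p.2)) := by
    intro g
    obtain ⟨h, hh, t, ht, rfl⟩ := hcov g
    rcases ht with rfl | rfl | rfl | rfl
    · exact ⟨(⟨h, hh⟩, 0), rfl⟩
    · exact ⟨(⟨h, hh⟩, 1), rfl⟩
    · exact ⟨(⟨h, hh⟩, 2), rfl⟩
    · exact ⟨(⟨h, hh⟩, 3), rfl⟩
  have hfin : Finite (SnPlus 4) := Finite.of_surjective _ hsurj
  refine ⟨hfin, ?_⟩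
  have hle : Nat.card (SnPlus 4) ≤ Nat.card (↥H4 × Fin 4) :=
    Nat.card_le_card_of_surjective _ hsurj
  rw [Nat.card_prod, Nat.card_eq_fintype_card (α := Fin 4), Fintype.card_fin] at hle
  have : Nat.card (SnPlus 4) ≤ 12 := by
    calc Nat.card (SnPlus 4) ≤ Nat.card ↥H4 * 4 := hle
    _ ≤ 3 * 4 := Nat.mul_le_mul_right _ hcardH4
    _ = 12 := by norm_num
  calc 2 * Nat.card (SnPlus 4) ≤ 2 * 12 := by omega
  _ ≤ Nat.factorial 4 := by decide

end Base4

/-- finiteness and cardinality bound for all `n ≥ 4`. -/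
lemma snplus_card : ∀ n, 4 ≤ n → Finite (SnPlus n) ∧ 2 * Nat.card (SnPlus n) ≤ Nat.factorial n := by
  intro n hn
  induction n, hn using Nat.le_induction with
  | base => exact base4
  | succ n hn ih => exact step_card hn ih.1 ih.2
section Phi
open Equiv Equiv.Perm

lemma cyc_congr {α : Type*} [DecidableEq α] {x y z x' y' z' : α}
    (h1 : x = x') (h2 : y = y') (h3 : z = z') : cyc x y z = cyc x' y' z' := by
  subst h1; subst h2; subst h3; rfl

/-- the permutation images of the generators -/
def cg (n : ℕ) (i : Fin (n-2)) : Perm (Fin n) :=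
  cyc ⟨i.val, by have := i.isLt; omega⟩ ⟨i.val + 1, by have := i.isLt; omega⟩
    ⟨i.val + 2, by have := i.isLt; omega⟩

lemma cg_mem (n : ℕ) (i : Fin (n-2)) : cg n i ∈ alternatingGroup (Fin n) := by
  rw [mem_alternatingGroup, cg, cyc, map_mul, sign_swap (by simp [Fin.ext_iff]),
    sign_swap (by simp [Fin.ext_iff])]
  norm_num

lemma cg_lift_rels (n : ℕ) :
    ∀ r ∈ altRels n, FreeGroup.lift (cg n) r = 1 := by
  intro r hr
  rcases hr with ⟨i, rfl⟩ | ⟨i, j, hij, rfl⟩ | ⟨i, j, hij, rfl⟩ | ⟨i, j, k, hij, hik, rfl⟩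
  · simp only [map_pow, FreeGroup.lift_apply_of]
    exact cyc_cube (by simp [Fin.ext_iff]) (by simp [Fin.ext_iff]) (by simp [Fin.ext_iff])
  · simp only [map_pow, map_mul, FreeGroup.lift_apply_of]
    have hcgj : cg n j = cyc (⟨i.val+1, by have := j.isLt; omega⟩ : Fin n)
        ⟨i.val+2, by have := j.isLt; omega⟩ ⟨i.val+3, by have := j.isLt; omega⟩ := by
      rw [cg]
      exact cyc_congr (Fin.ext (show (j:ℕ) = (i:ℕ)+1 by omega))
        (Fin.ext (show (j:ℕ)+1 = (i:ℕ)+2 by omega))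
        (Fin.ext (show (j:ℕ)+2 = (i:ℕ)+3 by omega))
    rw [cg, hcgj]
    exact cyc_sq2 (by simp [Fin.ext_iff]) (by simp [Fin.ext_iff]) (by simp [Fin.ext_iff])
      (by simp [Fin.ext_iff]) (by simp [Fin.ext_iff]) (by simp [Fin.ext_iff])
  · simp only [map_mul, map_inv, FreeGroup.lift_apply_of]
    have hcomm : cg n i * cg n j = cg n j * cg n i := by
      rw [cg, cg]
      rcases hij with h | h
      · exact cyc_comm (by simp [Fin.ext_iff]; omega) (by simp [Fin.ext_iff]; omega)
          (by simp [Fin.ext_iff]; omega) (by simp [Fin.ext_iff]; omega)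
          (by simp [Fin.ext_iff]; omega) (by simp [Fin.ext_iff]; omega)
          (by simp [Fin.ext_iff]; omega) (by simp [Fin.ext_iff]; omega)
          (by simp [Fin.ext_iff]; omega) (by simp [Fin.ext_iff])
          (by simp [Fin.ext_iff]) (by simp [Fin.ext_iff]) (by simp [Fin.ext_iff])
          (by simp [Fin.ext_iff]) (by simp [Fin.ext_iff])
      · exact cyc_comm (by simp [Fin.ext_iff]; omega) (by simp [Fin.ext_iff]; omega)
          (by simp [Fin.ext_iff]; omega) (by simp [Fin.ext_iff]; omega)
          (by simp [Fin.ext_iff]; omega) (by simp [Fin.ext_iff]; omega)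
          (by simp [Fin.ext_iff]; omega) (by simp [Fin.ext_iff]; omega)
          (by simp [Fin.ext_iff]; omega) (by simp [Fin.ext_iff])
          (by simp [Fin.ext_iff]) (by simp [Fin.ext_iff]) (by simp [Fin.ext_iff])
          (by simp [Fin.ext_iff]) (by simp [Fin.ext_iff])
    rw [← mul_inv_eq_one]
    calc cg n i * cg n j * (cg n i)⁻¹ * (cg n j)⁻¹ * (1:Perm (Fin n))⁻¹
        = cg n i * cg n j * (cg n j * cg n i)⁻¹ := by group
    _ = cg n i * cg n j * (cg n i * cg n j)⁻¹ := by rw [← hcomm]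
    _ = 1 := by group
  · simp only [map_mul, map_inv, FreeGroup.lift_apply_of]
    have hcgj : cg n j = cyc (⟨i.val+1, by have := j.isLt; omega⟩ : Fin n)
        ⟨i.val+2, by have := j.isLt; omega⟩ ⟨i.val+3, by have := j.isLt; omega⟩ := by
      rw [cg]
      exact cyc_congr (Fin.ext (show (j:ℕ) = (i:ℕ)+1 by omega))
        (Fin.ext (show (j:ℕ)+1 = (i:ℕ)+2 by omega))
        (Fin.ext (show (j:ℕ)+2 = (i:ℕ)+3 by omega))
    have hcgk : cg n k = cyc (⟨i.val+2, by have := k.isLt; omega⟩ : Fin n)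
        ⟨i.val+3, by have := k.isLt; omega⟩ ⟨i.val+4, by have := k.isLt; omega⟩ := by
      rw [cg]
      exact cyc_congr (Fin.ext (show (k:ℕ) = (i:ℕ)+2 by omega))
        (Fin.ext (show (k:ℕ)+1 = (i:ℕ)+3 by omega))
        (Fin.ext (show (k:ℕ)+2 = (i:ℕ)+4 by omega))
    have hTc := cyc_T (x := (⟨i.val, by have := i.isLt; omega⟩ : Fin n))
      (y := ⟨i.val+1, by have := j.isLt; omega⟩) (z := ⟨i.val+2, by have := k.isLt; omega⟩)
      (w := ⟨i.val+3, by have := k.isLt; omega⟩) (v := ⟨i.val+4, by have := k.isLt; omega⟩)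
      (by simp [Fin.ext_iff]) (by simp [Fin.ext_iff]) (by simp [Fin.ext_iff])
      (by simp [Fin.ext_iff]) (by simp [Fin.ext_iff]) (by simp [Fin.ext_iff])
      (by simp [Fin.ext_iff]) (by simp [Fin.ext_iff]) (by simp [Fin.ext_iff])
      (by simp [Fin.ext_iff])
    rw [cg, hcgj, hcgk, ← mul_inv_eq_one]
    set A := cyc (⟨i.val, by have := i.isLt; omega⟩ : Fin n)
      ⟨i.val+1, by have := j.isLt; omega⟩ ⟨i.val+2, by have := k.isLt; omega⟩ with hA
    set B := cyc (⟨i.val+1, by have := j.isLt; omega⟩ : Fin n)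
      ⟨i.val+2, by have := k.isLt; omega⟩ ⟨i.val+3, by have := k.isLt; omega⟩ with hB
    set C := cyc (⟨i.val+2, by have := k.isLt; omega⟩ : Fin n)
      ⟨i.val+3, by have := k.isLt; omega⟩ ⟨i.val+4, by have := k.isLt; omega⟩ with hC
    calc A * B⁻¹ * C * A⁻¹ * C⁻¹ * (1:Perm (Fin n))⁻¹ = A * B⁻¹ * C * (C * A)⁻¹ := by group
    _ = A * B⁻¹ * C * (A * B⁻¹ * C)⁻¹ := by rw [← hTc]
    _ = 1 := by group

/-- the canonical homomorphism `SnPlus n →* alternatingGroup (Fin n)` -/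
noncomputable def phiG (n : ℕ) : SnPlus n →* alternatingGroup (Fin n) :=
  PresentedGroup.toGroup (f := fun i => ⟨cg n i, cg_mem n i⟩)
    (by
      intro r hr
      have hcomp : (alternatingGroup (Fin n)).subtype.comp
          (FreeGroup.lift (fun i => (⟨cg n i, cg_mem n i⟩ : alternatingGroup (Fin n)))) =
          FreeGroup.lift (cg n) := by
        apply FreeGroup.ext_hom
        intro a
        simp [FreeGroup.lift_apply_of]
      have := cg_lift_rels n r hr
      rw [← hcomp] at this
      exact Subtype.ext this)

end Phi
section Surj
open Equiv Equiv.Perm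

variable {n : ℕ}

/-- adjacent transposition, total -/
def swn (n j : ℕ) : Perm (Fin n) :=
  if h : j + 1 < n then Equiv.swap ⟨j, by omega⟩ ⟨j+1, h⟩ else 1

lemma swn_eq {j : ℕ} (h : j + 1 < n) :
    swn n j = Equiv.swap (⟨j, by omega⟩ : Fin n) ⟨j+1, h⟩ := by rw [swn, dif_pos h]

lemma swn_inv (j : ℕ) : (swn n j)⁻¹ = swn n j := by
  rw [swn]; split_ifs
  · exact Equiv.swap_inv _ _
  · exact inv_one

lemma swn_mul_self (j : ℕ) : swn n j * swn n j = 1 := by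
  rw [swn]; split_ifs
  · exact Equiv.swap_mul_self _ _
  · exact one_mul 1

variable (K : Subgroup (Perm (Fin n)))

lemma tele_gen (hgen : ∀ i, i + 1 < n - 1 → swn n i * swn n (i+1) ∈ K) :
    ∀ i j, i + 1 < n → j + 1 < n → swn n i * swn n j ∈ K := by
  have up : ∀ d i, i + d + 1 < n → swn n i * swn n (i + d) ∈ K := by
    intro d
    induction d with
    | zero =>
      intro i hi
      simp only [Nat.add_zero]
      rw [swn_mul_self]
      exact one_mem K
    | succ d ihd =>
      intro i hi
      have h1 : swn n i * swn n (i + d) ∈ K := ihd i (by omega)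
      have h2 : swn n (i + d) * swn n (i + d + 1) ∈ K := hgen (i + d) (by omega)
      have : swn n i * swn n (i + (d+1)) =
          (swn n i * swn n (i + d)) * (swn n (i + d) * swn n (i + d + 1)) := by
        rw [(by omega : i + (d + 1) = i + d + 1)]
        calc swn n i * swn n (i+d+1)
            = swn n i * ((swn n (i+d) * swn n (i+d)) * swn n (i+d+1)) := by
              rw [swn_mul_self]; group
        _ = _ := by group
      rw [this]
      exact mul_mem h1 h2
  intro i j hi hj
  rcases le_or_gt i j with h | h
  · obtain ⟨d, rfl⟩ := Nat.exists_eq_add_of_le h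
    exact up d i (by omega)
  · have := up (i - j) j (by omega)
    rw [(by omega : j + (i - j) = i)] at this
    have h2 := inv_mem this
    rwa [mul_inv_rev, swn_inv, swn_inv] at h2

lemma swap_in_K (hgen : ∀ i, i + 1 < n - 1 → swn n i * swn n (i+1) ∈ K) :
    ∀ j, j + 1 < n → ∀ x y : Fin n, x ≠ y → swn n j * Equiv.swap x y ∈ K := by
  have main : ∀ b : ℕ, ∀ x y : Fin n, y.val = b → x.val < y.val → ∀ j, j + 1 < n →
      swn n j * Equiv.swap x y ∈ K := by
    intro b
    induction b using Nat.strong_induction_on with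
    | _ b IH =>
      intro x y hyb hxy j hj
      by_cases hadj : x.val + 1 = y.val
      · have hx1 : x.val + 1 < n := by have := y.isLt; omega
        have hswap : Equiv.swap x y = swn n x.val := by
          rw [swn_eq hx1]
          have e1 : x = (⟨x.val, by omega⟩ : Fin n) := Fin.ext rfl
          have e2 : y = (⟨x.val+1, hx1⟩ : Fin n) := Fin.ext (show y.val = x.val + 1 by omega)
          rw [← e1, ← e2]
        rw [hswap]
        exact tele_gen K hgen j x.val hj hx1
      · -- x.val + 1 < y.val
        have hq : x.val < y.val - 1 := by omega
        set q : Fin n := ⟨y.val - 1, by have := y.isLt; omega⟩ with hqdef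
        have hqn : (y.val - 1) + 1 < n := by have := y.isLt; omega
        have hpi : swn n (y.val - 1) = Equiv.swap q y := by
          rw [swn_eq hqn]
          congr 1
          first
          | exact Fin.ext (show (y.val - 1) + 1 = y.val by omega)
          | exact Fin.ext (show y.val = (y.val - 1) + 1 by omega)
        set π := swn n (y.val - 1) with hπ
        have hπx : π x = x := by
          rw [hpi]
          exact Equiv.swap_apply_of_ne_of_ne
            (Fin.ne_of_val_ne (show x.val ≠ y.val - 1 by omega))
            (Fin.ne_of_val_ne (show x.val ≠ y.val by omega))
        have hπq : π q = y := by rw [hpi]; exact Equiv.swap_apply_left _ _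
        have hswap : Equiv.swap x y = π * Equiv.swap x q * π⁻¹ := by
          have h := Equiv.swap_apply_apply π x q
          rwa [hπx, hπq] at h
        have h1 : swn n j * π ∈ K := tele_gen K hgen j (y.val - 1) hj hqn
        have h2 : swn n (y.val - 1) * Equiv.swap x q ∈ K :=
          IH (y.val - 1) (by omega) x q rfl (by simpa [hqdef]) (y.val - 1) hqn
        have h3 : Equiv.swap x q * π ∈ K := by
          have := inv_mem h2
          rwa [mul_inv_rev, swn_inv, Equiv.swap_inv, ← hπ] at this
        have : swn n j * Equiv.swap x y = (swn n j * π) * (Equiv.swap x q * π) := by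
          rw [hswap]
          calc swn n j * (π * Equiv.swap x q * π⁻¹)
              = swn n j * π * Equiv.swap x q * π⁻¹ := by group
          _ = swn n j * π * Equiv.swap x q * π := by rw [hπ, swn_inv]
          _ = _ := by group
        rw [this]
        exact mul_mem h1 h3
  intro j hj x y hxy
  rcases Nat.lt_or_ge x.val y.val with h | h
  · exact main y.val x y rfl h j hj
  · have hyx : y.val < x.val := by
      rcases Nat.lt_or_ge y.val x.val with h' | h'
      · exact h'
      · exact absurd (Fin.ext (by omega)) hxy
    rw [Equiv.swap_comm]
    exact main x.val y x rfl hyx j hj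

lemma swap_pair_in_K (hn : 5 ≤ n) (hgen : ∀ i, i + 1 < n - 1 → swn n i * swn n (i+1) ∈ K) :
    ∀ x y z w : Fin n, x ≠ y → z ≠ w → Equiv.swap x y * Equiv.swap z w ∈ K := by
  intro x y z w hxy hzw
  have h0 : (0:ℕ) + 1 < n := by omega
  have h1 : swn n 0 * Equiv.swap z w ∈ K := swap_in_K K hgen 0 h0 z w hzw
  have h2 : swn n 0 * Equiv.swap x y ∈ K := swap_in_K K hgen 0 h0 x y hxy
  have h3 : Equiv.swap x y * swn n 0 ∈ K := by
    have := inv_mem h2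
    rwa [mul_inv_rev, swn_inv, Equiv.swap_inv] at this
  have : Equiv.swap x y * Equiv.swap z w =
      (Equiv.swap x y * swn n 0) * (swn n 0 * Equiv.swap z w) := by
    calc Equiv.swap x y * Equiv.swap z w
        = Equiv.swap x y * ((swn n 0 * swn n 0) * Equiv.swap z w) := by
          rw [swn_mul_self]; group
    _ = _ := by group
  rw [this]
  exact mul_mem h3 h1

lemma alt_le_K (hn : 5 ≤ n) (hgen : ∀ i, i + 1 < n - 1 → swn n i * swn n (i+1) ∈ K) :
    ∀ σ : Perm (Fin n), σ ∈ alternatingGroup (Fin n) → σ ∈ K := by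
  have h0 : (0:ℕ) + 1 < n := by omega
  have hsw0 : swn n 0 = Equiv.swap (⟨0, by omega⟩ : Fin n) ⟨1, by omega⟩ := swn_eq h0
  have hsw0ne : (⟨0, by omega⟩ : Fin n) ≠ ⟨1, by omega⟩ := by simp [Fin.ext_iff]
  intro σ hσ
  rw [mem_alternatingGroup] at hσ
  have main : ∀ f : Perm (Fin n),
      (sign f = 1 → f ∈ K) ∧ (sign f = -1 → swn n 0 * f ∈ K) := by
    intro f
    refine Equiv.Perm.swap_induction_on f ?_ ?_
    · constructor
      · intro _; exact one_mem K
      · intro h; simp at h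
    · intro f x y hxy IH
      obtain ⟨IH1, IH2⟩ := IH
      have hsgn : sign (Equiv.swap x y * f) = - sign f := by
        rw [map_mul, sign_swap hxy]; simp
      constructor
      · intro h1
        have hf : sign f = -1 := by
          rcases Int.units_eq_one_or (sign f) with h | h
          · rw [h] at hsgn; rw [hsgn] at h1; exact absurd h1 (by decide)
          · exact h
        have hK2 := IH2 hf
        have : Equiv.swap x y * f = (Equiv.swap x y * swn n 0) * (swn n 0 * f) := by
          calc Equiv.swap x y * f
              = Equiv.swap x y * ((swn n 0 * swn n 0) * f) := by rw [swn_mul_self]; group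
          _ = _ := by group
        rw [this]
        refine mul_mem ?_ hK2
        rw [hsw0]
        exact swap_pair_in_K K hn hgen x y _ _ hxy hsw0ne
      · intro h1
        have hf : sign f = 1 := by
          rcases Int.units_eq_one_or (sign f) with h | h
          · exact h
          · rw [h] at hsgn; rw [hsgn] at h1; exact absurd h1 (by decide)
        have hKf := IH1 hf
        have : swn n 0 * (Equiv.swap x y * f) = (swn n 0 * Equiv.swap x y) * f := by group
        rw [this]
        refine mul_mem ?_ hKf
        rw [hsw0]
        exact swap_pair_in_K K hn hgen _ _ x y hsw0ne hxy
  exact (main σ).1 hσ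

end Surj
section Final
open Equiv Equiv.Perm

lemma phiG_surjective {n : ℕ} (hn : 5 ≤ n) : Function.Surjective (phiG n) := by
  set K : Subgroup (Perm (Fin n)) :=
    ((alternatingGroup (Fin n)).subtype.comp (phiG n)).range with hK
  have hgen : ∀ i, i + 1 < n - 1 → swn n i * swn n (i+1) ∈ K := by
    intro i hi
    have hilt : i < n - 2 := by omega
    have h1 : i + 1 < n := by omega
    have h2 : i + 1 + 1 < n := by omega
    have hval : swn n i * swn n (i+1) = cg n ⟨i, hilt⟩ := by
      rw [swn_eq h1, swn_eq h2, cg, cyc]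
    rw [hval]
    exact ⟨PresentedGroup.of ⟨i, hilt⟩, by
      simp only [MonoidHom.comp_apply, phiG, PresentedGroup.toGroup.of]
      rfl⟩
  intro y
  have hy : (y : Perm (Fin n)) ∈ K := alt_le_K K hn hgen y.val y.2
  obtain ⟨g, hg⟩ := hy
  exact ⟨g, Subtype.ext hg⟩

lemma card_alt {n : ℕ} (hn : 5 ≤ n) :
    2 * Nat.card (alternatingGroup (Fin n)) = Nat.factorial n := by
  have : Nontrivial (Fin n) := by
    have h2 : 2 ≤ n := by omega
    exact Fin.nontrivial_iff_two_le.mpr h2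
  have := two_mul_card_alternatingGroup (α := Fin n)
  rw [Fintype.card_perm, Fintype.card_fin] at this
  rw [Nat.card_eq_fintype_card]
  exact this

end Final

theorem SnPlus_iso_alternatingGroup (n : ℕ) (hn : 5 ≤ n) :
    Nonempty (SnPlus n ≃* alternatingGroup (Fin n)) := by
  obtain ⟨hfin, hcard⟩ := snplus_card n (by omega)
  have hsurj := phiG_surjective hn
  have hA := card_alt hn
  have hle : Nat.card (alternatingGroup (Fin n)) ≤ Nat.card (SnPlus n) :=
    Nat.card_le_card_of_surjective _ hsurj
  have hcardeq : Nat.card (SnPlus n) = Nat.card (alternatingGroup (Fin n)) := by omega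
  have hbij : Function.Bijective (phiG n) :=
    (Nat.bijective_iff_surjective_and_card (phiG n)).mpr ⟨hsurj, hcardeq⟩
  exact ⟨MulEquiv.ofBijective (phiG n) hbij⟩
end

section
/- Let n ≥ 5 be an integer, let G be a group, and let x_1, …, x_{n-2} ∈ G satisfy: (R) x_i^3 = 1 for 1 ≤ i ≤ n-2; (S) (x_i·x_{i+1})^2 = 1 for 1 ≤ i ≤ n-3; (Q) x_i·x_j = x_j·x_i for 1 ≤ i, j ≤ n-2 with |i-j| > 2; and the single relation x_1·x_2^{-1}·x_3 = x_3·x_1. Then x_i·x_{i+1}^{-1}·x_{i+2} = x_{i+2}·x_i holds for every i with 1 ≤ i ≤ n-4. -/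
/-!
Induction on `i`: the relation for `(a, b, c) = (x i, x (i+1), x (i+2))` gives the one for
`(b, c, d)` with `d = x (i+3)`. In a group, `y³ = (x y)² = 1` gives `y x y⁻¹ = x⁻¹ y`; this turns
`(b c)² = 1` into `c b c⁻¹ = b⁻¹ c` and `(c d)² = 1` into `d c d⁻¹ = c⁻¹ d`. The relation for `(a, b, c)`
says `b⁻¹ c = a⁻¹ c a`, and conjugation by `a` fixes `d`, so it carries `d c d⁻¹ = c⁻¹ d` to
`d u d⁻¹ = u⁻¹ d` for `u = b⁻¹ c`. Hence `d b d⁻¹ = c⁻¹ b⁻¹ c = b c⁻¹`.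
-/
section
variable {G : Type*} [Group G]

theorem mul_mul_inv_eq_inv_mul_of_pow_three {x y : G} (hy : y ^ 3 = 1) (hxy : (x * y) ^ 2 = 1) :
    y * x * y⁻¹ = x⁻¹ * y := by
  have hyx : y * x * y = x⁻¹ := eq_inv_of_mul_eq_one_right (by rw [← hxy, sq]; group)
  have hy' : y⁻¹ = y * y := inv_eq_of_mul_eq_one_right (by rw [← hy, pow_three])
  rw [hy', ← mul_assoc, hyx]

def RelT (a b c : G) : Prop := a * b⁻¹ * c = c * a

theorem RelT.shift {a b c d : G} (hT : RelT a b c) (hc : c ^ 3 = 1) (hd : d ^ 3 = 1)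
    (hbc : (b * c) ^ 2 = 1) (hcd : (c * d) ^ 2 = 1) (had : a * d = d * a) : RelT b c d := by
  have hcb := mul_mul_inv_eq_inv_mul_of_pow_three hc hbc
  have hdc := mul_mul_inv_eq_inv_mul_of_pow_three hd hcd
  have hu : a⁻¹ * c * a = b⁻¹ * c := by rw [mul_assoc, ← hT]; group
  have hda : a⁻¹ * d * a = d := by rw [mul_assoc, ← had, inv_mul_cancel_left]
  have hdu : d * (b⁻¹ * c) * d⁻¹ = (b⁻¹ * c)⁻¹ * d := by
    rw [← hu]
    calc d * (a⁻¹ * c * a) * d⁻¹ = (a⁻¹ * d * a) * (a⁻¹ * c * a) * (a⁻¹ * d * a)⁻¹ := by rw [hda]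
      _ = a⁻¹ * (d * c * d⁻¹) * a := by group
      _ = (a⁻¹ * c * a)⁻¹ * (a⁻¹ * d * a) := by rw [hdc]; group
      _ = (a⁻¹ * c * a)⁻¹ * d := by rw [hda]
  have hdb : d * b * d⁻¹ = c⁻¹ * (b⁻¹ * c) := by
    calc d * b * d⁻¹ = (d * c * d⁻¹) * (d * (b⁻¹ * c) * d⁻¹)⁻¹ := by group
      _ = c⁻¹ * (b⁻¹ * c) := by rw [hdc, hdu]; group
  calc b * c⁻¹ * d = c⁻¹ * (c * b * c⁻¹) * d := by group
    _ = d * b * d⁻¹ * d := by rw [hcb, hdb]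
    _ = d * b := by group
end

theorem relT_of_relT_one_general (n : ℕ) (G : Type*) [Group G] (x : ℕ → G)
    (hR : ∀ i, 1 ≤ i → i ≤ n - 2 → (x i) ^ 3 = 1)
    (hS : ∀ i, 1 ≤ i → i ≤ n - 3 → (x i * x (i + 1)) ^ 2 = 1)
    (hQ : ∀ i j, 1 ≤ i → i ≤ n - 2 → 1 ≤ j → j ≤ n - 2 → (i + 2 < j ∨ j + 2 < i) →
      x i * x j = x j * x i)
    (hT1 : x 1 * (x 2)⁻¹ * x 3 = x 3 * x 1) :
    ∀ i, 1 ≤ i → i ≤ n - 4 → x i * (x (i + 1))⁻¹ * x (i + 2) = x (i + 2) * x i := by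
  intro i hi
  induction i, hi using Nat.le_induction with
  | base => exact fun _ => hT1
  | succ k hk ih =>
    intro hkn
    exact RelT.shift (ih (by omega)) (hR (k + 2) (by omega) (by omega))
      (hR (k + 3) (by omega) (by omega)) (hS (k + 1) (by omega) (by omega))
      (hS (k + 2) (by omega) (by omega))
      (hQ k (k + 3) (by omega) (by omega) (by omega) (by omega) (by omega))

theorem relT_of_relT_one (n : ℕ) (hn : 5 ≤ n) (G : Type*) [Group G] (x : ℕ → G)
    (hR : ∀ i, 1 ≤ i → i ≤ n - 2 → (x i) ^ 3 = 1)
    (hS : ∀ i, 1 ≤ i → i ≤ n - 3 → (x i * x (i + 1)) ^ 2 = 1)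
    (hQ : ∀ i j, 1 ≤ i → i ≤ n - 2 → 1 ≤ j → j ≤ n - 2 → (i + 2 < j ∨ j + 2 < i) →
      x i * x j = x j * x i)
    (hT1 : x 1 * (x 2)⁻¹ * x 3 = x 3 * x 1) :
    ∀ i, 1 ≤ i → i ≤ n - 4 → x i * (x (i + 1))⁻¹ * x (i + 2) = x (i + 2) * x i :=
  relT_of_relT_one_general n G x hR hS hQ hT1
end

section
/- Let n ≥ 3 be an integer. For every element X of S_n^+ there exist integers k_1, …, k_{n-2} with 0 ≤ k_j ≤ j+1 for j = 1, …, n-2, such that X = y_{1,k_1} · y_{2,k_2} ⋯ y_{n-2,k_{n-2}}. -/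
/-- The generator `xᵢ` of `Sₙ⁺`, indexed as in the paper by `1 ≤ i ≤ n - 2`
(junk value `1` outside this range). -/
def xGen (n : ℕ) (i : ℕ) : SnPlus n :=
  if h : 1 ≤ i ∧ i - 1 < n - 2 then PresentedGroup.of ⟨i - 1, h.2⟩ else 1

/-- The descending product `x_m · x_{m-1} ⋯ x_k` (equal to `1` when `k = m + 1`). -/
def descProd {G : Type*} [Monoid G] (x : ℕ → G) (m k : ℕ) : G :=
  (((List.range' k (m + 1 - k)).reverse).map x).prod

/-- The element `y_{m,k}`: for `k = 0` it is `x_m · x_{m-1} ⋯ x_2 · x_1²`, for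
`1 ≤ k ≤ m` it is `x_m · x_{m-1} ⋯ x_k`, and for `k = m + 1` it is `1`. -/
def yElem {G : Type*} [Monoid G] (x : ℕ → G) (m k : ℕ) : G :=
  if k = 0 then descProd x m 1 * x 1 else descProd x m k

namespace SnPlusNF

/-! ### Generic `descProd` / `yElem` lemmas -/

section DescProd
variable {G : Type*} [Monoid G] (x : ℕ → G)

theorem descProd_empty (m k : ℕ) (h : m + 1 ≤ k) : descProd x m k = 1 := by
  simp [descProd, Nat.sub_eq_zero_of_le h]

theorem descProd_single (m : ℕ) : descProd x m m = x m := by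
  simp [descProd, Nat.succ_sub (le_refl m), Nat.sub_self]

theorem descProd_peel_right (m k : ℕ) (h : k ≤ m) :
    descProd x m k = descProd x m (k + 1) * x k := by
  unfold descProd
  have h1 : m + 1 - k = (m - k) + 1 := by omega
  have h2 : m + 1 - (k + 1) = m - k := by omega
  rw [h1, h2, List.range'_succ, List.reverse_cons, List.map_append, List.prod_append]
  simp

theorem descProd_peel_left (m k : ℕ) (h0 : 1 ≤ k) (h : k ≤ m) :
    descProd x m k = x m * descProd x (m - 1) k := by
  unfold descProd
  have h1 : m + 1 - k = (m - k) + 1 := by omega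
  have h2 : m - 1 + 1 - k = m - k := by omega
  rw [h1, h2, List.range'_1_concat, List.reverse_append, List.map_append, List.prod_append]
  have h3 : k + (m - k) = m := by omega
  simp [h3]

theorem descProd_split (m k j : ℕ) (hj1 : 1 ≤ j) (hkj : k ≤ j) (hjm : j ≤ m + 1) :
    descProd x m k = descProd x m j * descProd x (j - 1) k := by
  unfold descProd
  have h1 : m + 1 - k = (m + 1 - j) + (j - k) := by omega
  have h2 : j - 1 + 1 - k = j - k := by omega
  have h3 : k + (j - k) = j := by omega
  rw [h1, h2, Nat.add_comm (m + 1 - j), ← List.range'_append_1, h3, List.reverse_append, List.map_append, List.prod_append]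

theorem yElem_top (m : ℕ) : yElem x m (m + 1) = 1 := by
  simp [yElem, descProd_empty]

theorem yElem_of_pos (m k : ℕ) (h : 1 ≤ k) : yElem x m k = descProd x m k := by
  rw [yElem, if_neg (by omega : ¬ k = 0)]

theorem yElem_zero (m : ℕ) : yElem x m 0 = yElem x m 1 * x 1 := by
  simp [yElem]

theorem yElem_peel_right (m k : ℕ) (h1 : 1 ≤ k) (h2 : k ≤ m) :
    yElem x m k = yElem x m (k + 1) * x k := by
  rw [yElem_of_pos x m k h1, yElem_of_pos x m (k + 1) (by omega),
    descProd_peel_right x m k h2]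

theorem yElem_peel_left (m k : ℕ) (h1 : 1 ≤ k) (h2 : k ≤ m) :
    yElem x m k = x m * yElem x (m - 1) k := by
  rw [yElem_of_pos x m k h1, yElem_of_pos x (m - 1) k h1, descProd_peel_left x m k h1 h2]

end DescProd

/-! ### Generic window lemmas in an arbitrary group -/

section Window
variable {G : Type*} [Group G] {a b c : G}

theorem cube_eq_one (ha : a ^ 3 = 1) : a * a * a = 1 := by
  rw [← ha, pow_succ, pow_two]

theorem sq_eq_one' (hab : (a * b) ^ 2 = 1) : a * b * (a * b) = 1 := by
  rw [← hab, pow_two]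

theorem inv_eq_sq (ha : a ^ 3 = 1) : a⁻¹ = a * a := by
  have h := cube_eq_one ha
  calc a⁻¹ = a⁻¹ * (a * a * a) := by rw [h, mul_one]
  _ = a * a := by group

theorem pair_bab (hab : (a * b) ^ 2 = 1) : b * a * b = a⁻¹ := by
  have h := sq_eq_one' hab
  calc b * a * b = a⁻¹ * (a * b * (a * b)) := by group
  _ = a⁻¹ := by rw [h, mul_one]

theorem pair_aba (hab : (a * b) ^ 2 = 1) : a * b * a = b⁻¹ := by
  have h := sq_eq_one' hab
  calc a * b * a = (a * b * (a * b)) * b⁻¹ := by group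
  _ = b⁻¹ := by rw [h, one_mul]

theorem pair_ba (hab : (a * b) ^ 2 = 1) : b * a = a⁻¹ * b⁻¹ := by
  have h := sq_eq_one' hab
  calc b * a = a⁻¹ * (a * b * (a * b)) * b⁻¹ := by group
  _ = a⁻¹ * b⁻¹ := by rw [h]; group

theorem pair_expand (ha : a ^ 3 = 1) (hb : b ^ 3 = 1) (hab : (a * b) ^ 2 = 1) :
    a * b = b * b * (a * a) := by
  have h := sq_eq_one' hab
  calc a * b = (a * b * (a * b)) * b⁻¹ * a⁻¹ := by group
  _ = 1 * b⁻¹ * a⁻¹ := by rw [h]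
  _ = b⁻¹ * a⁻¹ := by group
  _ = (b * b) * (a * a) := by rw [inv_eq_sq ha, inv_eq_sq hb]

theorem W4 (ht : a * b⁻¹ * c = c * a) : c * a * c⁻¹ = a * b⁻¹ := by
  rw [← ht]; group

theorem W3 (ha : a ^ 3 = 1) (hab : (a * b) ^ 2 = 1) (ht : a * b⁻¹ * c = c * a) :
    b * (a * c) = a * c * a := by
  have ha' := cube_eq_one ha
  have hbc : b⁻¹ * c = a⁻¹ * (c * a) := by rw [← ht]; group
  calc b * (a * c) = (b * a) * c := by group
  _ = (a⁻¹ * b⁻¹) * c := by rw [pair_ba hab]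
  _ = a⁻¹ * (b⁻¹ * c) := by group
  _ = a⁻¹ * (a⁻¹ * (c * a)) := by rw [hbc]
  _ = a * (a * a * a)⁻¹ * (c * a) := by group
  _ = a * (1:G)⁻¹ * (c * a) := by rw [ha']
  _ = a * c * a := by group

theorem W2 (ha : a ^ 3 = 1) (hc : c ^ 3 = 1) (hab : (a * b) ^ 2 = 1)
    (hbc : (b * c) ^ 2 = 1) (ht : a * b⁻¹ * c = c * a) :
    c * (b * a) * c = a * (c * (b * a)) := by
  have hc' := cube_eq_one hc
  have hcb : c * b = b⁻¹ * c⁻¹ := pair_ba hbc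
  have hca : c⁻¹ * a = a * c⁻¹ * b := by
    calc c⁻¹ * a = c⁻¹ * (a * b⁻¹ * c) * c⁻¹ * b := by group
    _ = c⁻¹ * (c * a) * c⁻¹ * b := by rw [ht]
    _ = a * c⁻¹ * b := by group
  have hcbc : c⁻¹ * b * c = c * b⁻¹ := by
    calc c⁻¹ * b * c = c * (c * c * c)⁻¹ * (c * b * c) * c⁻¹ * c := by group
    _ = c * (1:G)⁻¹ * (b⁻¹) * c⁻¹ * c := by rw [hc', pair_bab hbc]
    _ = c * b⁻¹ := by group
  have hw3 : b * (a * c) = a * c * a := W3 ha hab ht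
  calc c * (b * a) * c = (c * b) * (a * c) := by group
  _ = (b⁻¹ * c⁻¹) * (a * c) := by rw [hcb]
  _ = b⁻¹ * (c⁻¹ * a) * c := by group
  _ = b⁻¹ * (a * c⁻¹ * b) * c := by rw [hca]
  _ = (b⁻¹ * a) * (c⁻¹ * b * c) := by group
  _ = (b⁻¹ * a) * (c * b⁻¹) := by rw [hcbc]
  _ = b⁻¹ * (a * c * a) * a⁻¹ * b⁻¹ := by group
  _ = b⁻¹ * (b * (a * c)) * a⁻¹ * b⁻¹ := by rw [hw3]
  _ = (a * c) * (a⁻¹ * b⁻¹) := by group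
  _ = (a * c) * (b * a) := by rw [← pair_ba hab]
  _ = a * (c * (b * a)) := by group

end Window


/-! ### Relations in `SnPlus n` -/

section Relations
variable {n : ℕ}

theorem rel_eq_one {r : FreeGroup (Fin (n - 2))} (h : r ∈ altRels n) :
    PresentedGroup.mk (altRels n) r = 1 :=
  (QuotientGroup.eq_one_iff r).mpr (Subgroup.subset_normalClosure h)

theorem xGen_eq (i : ℕ) (h1 : 1 ≤ i) (h2 : i ≤ n - 2) :
    xGen n i = PresentedGroup.of (rels := altRels n) ⟨i - 1, by omega⟩ := by
  rw [xGen, dif_pos ⟨h1, by omega⟩]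

theorem xGen_junk (i : ℕ) (h : ¬ (1 ≤ i ∧ i ≤ n - 2)) : xGen n i = 1 := by
  rw [xGen, dif_neg]; omega

theorem xGen_cube (i : ℕ) : xGen n i ^ 3 = 1 := by
  by_cases h : 1 ≤ i ∧ i ≤ n - 2
  · rw [xGen_eq i h.1 h.2]
    have : (PresentedGroup.of (rels := altRels n) ⟨i - 1, by omega⟩) ^ 3
        = PresentedGroup.mk (altRels n) ((FreeGroup.of (⟨i - 1, by omega⟩ : Fin (n-2))) ^ 3) := by
      rw [map_pow]; rfl
    rw [this]
    exact rel_eq_one (Or.inl ⟨_, rfl⟩)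
  · rw [xGen_junk i h, one_pow]

theorem xGen_S (i : ℕ) (h1 : 1 ≤ i) (h2 : i + 1 ≤ n - 2) :
    (xGen n i * xGen n (i + 1)) ^ 2 = 1 := by
  rw [xGen_eq i h1 (by omega), xGen_eq (i + 1) (by omega) h2]
  have : (PresentedGroup.of (rels := altRels n) ⟨i - 1, by omega⟩ *
      PresentedGroup.of (rels := altRels n) ⟨i + 1 - 1, by omega⟩) ^ 2
      = PresentedGroup.mk (altRels n)
        ((FreeGroup.of (⟨i - 1, by omega⟩ : Fin (n-2)) *
          FreeGroup.of (⟨i + 1 - 1, by omega⟩ : Fin (n-2))) ^ 2) := by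
    rw [map_pow, map_mul]; rfl
  rw [this]
  exact rel_eq_one (Or.inr (Or.inl ⟨_, _, by simp; omega, rfl⟩))

theorem xGen_comm (i j : ℕ) (h : i + 3 ≤ j) : xGen n i * xGen n j = xGen n j * xGen n i := by
  by_cases hi : 1 ≤ i ∧ i ≤ n - 2
  · by_cases hj : 1 ≤ j ∧ j ≤ n - 2
    · rw [xGen_eq i hi.1 hi.2, xGen_eq j hj.1 hj.2]
      have hrel : PresentedGroup.mk (altRels n)
          (FreeGroup.of (⟨i - 1, by omega⟩ : Fin (n-2)) *
           FreeGroup.of (⟨j - 1, by omega⟩ : Fin (n-2)) *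
           (FreeGroup.of (⟨i - 1, by omega⟩ : Fin (n-2)))⁻¹ *
           (FreeGroup.of (⟨j - 1, by omega⟩ : Fin (n-2)))⁻¹) = 1 :=
        rel_eq_one (Or.inr (Or.inr (Or.inl ⟨_, _, Or.inl (by simp; omega), rfl⟩)))
      rw [map_mul, map_mul, map_mul, map_inv, map_inv] at hrel
      have h2 : (PresentedGroup.of (rels := altRels n) ⟨i - 1, by omega⟩ *
          PresentedGroup.of (rels := altRels n) ⟨j - 1, by omega⟩) *
          (PresentedGroup.of (rels := altRels n) ⟨j - 1, by omega⟩ *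
          PresentedGroup.of (rels := altRels n) ⟨i - 1, by omega⟩)⁻¹ = 1 := by
        rw [← hrel]; group; rfl
      exact mul_inv_eq_one.mp h2
    · rw [xGen_junk j hj, mul_one, one_mul]
  · rw [xGen_junk i hi, mul_one, one_mul]

theorem xGen_T (i : ℕ) (h1 : 1 ≤ i) (h2 : i + 2 ≤ n - 2) :
    xGen n i * (xGen n (i + 1))⁻¹ * xGen n (i + 2) = xGen n (i + 2) * xGen n i := by
  rw [xGen_eq i h1 (by omega), xGen_eq (i + 1) (by omega) (by omega),
    xGen_eq (i + 2) (by omega) h2]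
  have hrel : PresentedGroup.mk (altRels n)
      (FreeGroup.of (⟨i - 1, by omega⟩ : Fin (n-2)) *
       (FreeGroup.of (⟨i + 1 - 1, by omega⟩ : Fin (n-2)))⁻¹ *
       FreeGroup.of (⟨i + 2 - 1, by omega⟩ : Fin (n-2)) *
       (FreeGroup.of (⟨i - 1, by omega⟩ : Fin (n-2)))⁻¹ *
       (FreeGroup.of (⟨i + 2 - 1, by omega⟩ : Fin (n-2)))⁻¹) = 1 :=
    rel_eq_one (Or.inr (Or.inr (Or.inr ⟨_, _, _, by simp; omega, by simp; omega, rfl⟩)))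
  simp only [map_mul, map_inv] at hrel
  have h3 : (PresentedGroup.of (rels := altRels n) ⟨i - 1, by omega⟩ *
      (PresentedGroup.of (rels := altRels n) ⟨i + 1 - 1, by omega⟩)⁻¹ *
      PresentedGroup.of (rels := altRels n) ⟨i + 2 - 1, by omega⟩) *
      (PresentedGroup.of (rels := altRels n) ⟨i + 2 - 1, by omega⟩ *
      PresentedGroup.of (rels := altRels n) ⟨i - 1, by omega⟩)⁻¹ = 1 := by
    rw [← hrel]; group; rfl
  exact mul_inv_eq_one.mp h3

end Relations

/-! ### Derived identities and subgroup machinery -/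

section Machinery
variable {n : ℕ}

theorem x_inv (i : ℕ) : (xGen n i)⁻¹ = xGen n i * xGen n i :=
  inv_eq_sq (xGen_cube i)

theorem x_cube' (i : ℕ) : xGen n i * xGen n i * xGen n i = 1 :=
  cube_eq_one (xGen_cube i)

theorem x_bab (t : ℕ) (h1 : 1 ≤ t) (h2 : t + 1 ≤ n - 2) :
    xGen n (t + 1) * xGen n t * xGen n (t + 1) = (xGen n t)⁻¹ :=
  pair_bab (xGen_S t h1 h2)

theorem x_aba (t : ℕ) (h1 : 1 ≤ t) (h2 : t + 1 ≤ n - 2) :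
    xGen n t * xGen n (t + 1) * xGen n t = (xGen n (t + 1))⁻¹ :=
  pair_aba (xGen_S t h1 h2)

theorem x_expand (t : ℕ) (h1 : 1 ≤ t) (h2 : t + 1 ≤ n - 2) :
    xGen n t * xGen n (t + 1)
      = xGen n (t + 1) * xGen n (t + 1) * (xGen n t * xGen n t) :=
  pair_expand (xGen_cube t) (xGen_cube (t + 1)) (xGen_S t h1 h2)

theorem xW4 (t : ℕ) (h1 : 1 ≤ t) (h2 : t + 2 ≤ n - 2) :
    xGen n (t + 2) * xGen n t * (xGen n (t + 2))⁻¹ = xGen n t * (xGen n (t + 1))⁻¹ :=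
  W4 (xGen_T t h1 h2)

theorem xW3 (t : ℕ) (h1 : 1 ≤ t) (h2 : t + 2 ≤ n - 2) :
    xGen n (t + 1) * (xGen n t * xGen n (t + 2))
      = xGen n t * xGen n (t + 2) * xGen n t :=
  W3 (xGen_cube t) (xGen_S t h1 (by omega)) (xGen_T t h1 h2)

theorem xW2 (t : ℕ) (h1 : 1 ≤ t) (h2 : t + 2 ≤ n - 2) :
    xGen n (t + 2) * (xGen n (t + 1) * xGen n t) * xGen n (t + 2)
      = xGen n t * (xGen n (t + 2) * (xGen n (t + 1) * xGen n t)) :=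
  W2 (xGen_cube t) (xGen_cube (t + 2)) (xGen_S t h1 (by omega))
    (xGen_S (t + 1) (by omega) h2) (xGen_T t h1 h2)

theorem commute_desc_right (i m k : ℕ) (h : i + 3 ≤ k) :
    xGen n i * descProd (xGen n) m k = descProd (xGen n) m k * xGen n i := by
  refine (Commute.list_prod_right _ _ fun y hy => ?_).eq
  rw [List.mem_map] at hy
  obtain ⟨t, ht, rfl⟩ := hy
  rw [List.mem_reverse, List.mem_range'] at ht
  obtain ⟨w, _, rfl⟩ := ht
  exact xGen_comm i (k + 1 * w) (by omega)

theorem commute_desc_left (i m k : ℕ) (h : m + 3 ≤ i) :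
    xGen n i * descProd (xGen n) m k = descProd (xGen n) m k * xGen n i := by
  refine (Commute.list_prod_right _ _ fun y hy => ?_).eq
  rw [List.mem_map] at hy
  obtain ⟨t, ht, rfl⟩ := hy
  rw [List.mem_reverse, List.mem_range'] at ht
  obtain ⟨w, hw, rfl⟩ := ht
  exact (xGen_comm (k + 1 * w) i (by omega)).symm

/-- The subgroup generated by `x_1, …, x_r`. -/
def Hgrp (n r : ℕ) : Subgroup (SnPlus n) := Subgroup.closure (xGen n '' Set.Icc 1 r)

theorem x_mem_H (t r : ℕ) (h1 : 1 ≤ t) (h2 : t ≤ r) : xGen n t ∈ Hgrp n r :=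
  Subgroup.subset_closure ⟨t, ⟨h1, h2⟩, rfl⟩

theorem H_mono {r s : ℕ} (h : r ≤ s) : Hgrp n r ≤ Hgrp n s :=
  Subgroup.closure_mono (Set.image_mono (Set.Icc_subset_Icc_right h))

theorem conj_step (m : ℕ) (hm : m ≤ n - 2) :
    ∀ g ∈ Hgrp n (m - 2), xGen n m * g * (xGen n m)⁻¹ ∈ Hgrp n (m - 1) := by
  intro g hg
  induction hg using Subgroup.closure_induction with
  | mem g hgS =>
    obtain ⟨t, ⟨ht1, ht2⟩, rfl⟩ := hgS
    by_cases hcase : t + 3 ≤ m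
    · have hc := xGen_comm (n := n) t m hcase
      have : xGen n m * xGen n t * (xGen n m)⁻¹ = xGen n t := by
        rw [← hc]; group
      rw [this]
      exact x_mem_H t (m - 1) ht1 (by omega)
    · have htm : t = m - 2 := by omega
      have hm3 : 3 ≤ m := by omega
      have e : t + 2 = m := by omega
      have h4 := xW4 (n := n) t ht1 (by omega)
      rw [e] at h4
      rw [h4]
      exact mul_mem (x_mem_H t (m - 1) ht1 (by omega))
        (inv_mem (x_mem_H (t + 1) (m - 1) (by omega) (by omega)))
  | one => simpa using one_mem _
  | mul g₁ g₂ _ _ ih1 ih2 =>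
    have : xGen n m * (g₁ * g₂) * (xGen n m)⁻¹
        = (xGen n m * g₁ * (xGen n m)⁻¹) * (xGen n m * g₂ * (xGen n m)⁻¹) := by group
    rw [this]; exact mul_mem ih1 ih2
  | inv g _ ih =>
    have : xGen n m * g⁻¹ * (xGen n m)⁻¹ = (xGen n m * g * (xGen n m)⁻¹)⁻¹ := by group
    rw [this]; exact inv_mem ih

theorem conjY : ∀ m, m ≤ n - 2 → ∀ j, 2 ≤ j → j ≤ m + 1 →
    ∀ g ∈ Hgrp n (j - 2),
      yElem (xGen n) m j * g * (yElem (xGen n) m j)⁻¹ ∈ Hgrp n (m - 1) := by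
  intro m
  induction m using Nat.strong_induction_on with
  | _ m IH =>
    intro hm j hj2 hjm g hg
    rcases eq_or_lt_of_le hjm with hEq | hLt
    · have : yElem (xGen n) m j = 1 := by rw [hEq]; exact yElem_top _ m
      rw [this]
      simpa using H_mono (by omega) hg
    · have hjm' : j ≤ m := by omega
      have hm1 : 1 ≤ m := by omega
      rw [yElem_peel_left (xGen n) m j (by omega) hjm']
      have hrw : xGen n m * yElem (xGen n) (m - 1) j * g *
          (xGen n m * yElem (xGen n) (m - 1) j)⁻¹
          = xGen n m * (yElem (xGen n) (m - 1) j * g * (yElem (xGen n) (m - 1) j)⁻¹) *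
            (xGen n m)⁻¹ := by group
      rw [hrw]
      have hinner := IH (m - 1) (by omega) (by omega) j hj2 (by omega) g hg
      have := conj_step m hm _ (by
        have e : (m - 1) - 1 = m - 2 := by omega
        rw [e] at hinner; exact hinner)
      simpa using this

end Machinery


/-! ### Shifted-index identities -/

section Shifted
variable {n : ℕ}

theorem xT' (k : ℕ) (h3 : 3 ≤ k) (hk : k ≤ n - 2) :
    xGen n (k - 2) * (xGen n (k - 1))⁻¹ * xGen n k = xGen n k * xGen n (k - 2) := by
  have h := xGen_T (n := n) (k - 2) (by omega) (by omega)
  rw [show k - 2 + 1 = k - 1 by omega, show k - 2 + 2 = k by omega] at h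
  exact h

theorem xW2' (i : ℕ) (h3 : 3 ≤ i) (hi : i ≤ n - 2) :
    xGen n i * (xGen n (i - 1) * xGen n (i - 2)) * xGen n i
      = xGen n (i - 2) * (xGen n i * (xGen n (i - 1) * xGen n (i - 2))) := by
  have h := xW2 (n := n) (i - 2) (by omega) (by omega)
  rw [show i - 2 + 1 = i - 1 by omega, show i - 2 + 2 = i by omega] at h
  exact h

theorem x_aba' (k : ℕ) (h2 : 2 ≤ k) (hk : k ≤ n - 2) :
    xGen n (k - 1) * xGen n k * xGen n (k - 1) = (xGen n k)⁻¹ := by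
  have h := x_aba (n := n) (k - 1) (by omega) (by omega)
  rw [show k - 1 + 1 = k by omega] at h
  exact h

theorem xW3'' (h : 3 ≤ n - 2) :
    xGen n 2 * (xGen n 1 * xGen n 3) = xGen n 1 * xGen n 3 * xGen n 1 := by
  have h' := xW3 (n := n) 1 (le_refl 1) (by omega)
  norm_num at h'
  exact h'

end Shifted

/-! ### The rewriting rules `y_{m,k} · x_i = h · y_{m,k'}` -/

section Star
variable {n : ℕ}

theorem starB1c (m k : ℕ) (hk2 : 2 ≤ k) (hkm : k ≤ m) (hm : m ≤ n - 2) :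
    yElem (xGen n) m k * xGen n k
      = (yElem (xGen n) m (k + 1) * xGen n (k - 1) * (yElem (xGen n) m (k + 1))⁻¹) *
        yElem (xGen n) m (k - 1) := by
  have p1 : yElem (xGen n) m k = yElem (xGen n) m (k + 1) * xGen n k :=
    yElem_peel_right _ m k (by omega) hkm
  have p2 : yElem (xGen n) m (k - 1) = yElem (xGen n) m k * xGen n (k - 1) := by
    have h := yElem_peel_right (xGen n) m (k - 1) (by omega) (by omega)
    rw [show k - 1 + 1 = k by omega] at h
    exact h
  calc yElem (xGen n) m k * xGen n k
      = yElem (xGen n) m (k + 1) * (xGen n k * xGen n k) := by rw [p1]; group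
    _ = yElem (xGen n) m (k + 1) * (xGen n k)⁻¹ := by rw [← x_inv]
    _ = yElem (xGen n) m (k + 1) * (xGen n (k - 1) * xGen n k * xGen n (k - 1)) := by
        rw [x_aba' k hk2 (by omega)]
    _ = (yElem (xGen n) m (k + 1) * xGen n (k - 1) * (yElem (xGen n) m (k + 1))⁻¹) *
        yElem (xGen n) m (k - 1) := by rw [p2, p1]; group

theorem starB2 (m k : ℕ) (hk1 : 1 ≤ k) (hkm : k + 1 ≤ m) (hm : m ≤ n - 2) :
    yElem (xGen n) m k * xGen n (k + 1)
      = (yElem (xGen n) m (k + 2) * (xGen n k)⁻¹ * (yElem (xGen n) m (k + 2))⁻¹) *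
        yElem (xGen n) m (k + 2) := by
  have p1 : yElem (xGen n) m k = yElem (xGen n) m (k + 1) * xGen n k :=
    yElem_peel_right _ m k hk1 (by omega)
  have p2 : yElem (xGen n) m (k + 1) = yElem (xGen n) m (k + 2) * xGen n (k + 1) :=
    yElem_peel_right _ m (k + 1) (by omega) hkm
  calc yElem (xGen n) m k * xGen n (k + 1)
      = yElem (xGen n) m (k + 2) * (xGen n (k + 1) * xGen n k * xGen n (k + 1)) := by
        rw [p1, p2]; group
    _ = yElem (xGen n) m (k + 2) * (xGen n k)⁻¹ := by rw [x_bab k hk1 (by omega)]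
    _ = (yElem (xGen n) m (k + 2) * (xGen n k)⁻¹ * (yElem (xGen n) m (k + 2))⁻¹) *
        yElem (xGen n) m (k + 2) := by group

theorem starB4 (m k : ℕ) (hk3 : 3 ≤ k) (hkm : k ≤ m) (hm : m ≤ n - 2) :
    yElem (xGen n) m k * xGen n (k - 2)
      = (yElem (xGen n) m (k + 1) * (xGen n (k - 2) * (xGen n (k - 1))⁻¹) *
          (yElem (xGen n) m (k + 1))⁻¹) * yElem (xGen n) m k := by
  have p1 : yElem (xGen n) m k = yElem (xGen n) m (k + 1) * xGen n k :=
    yElem_peel_right _ m k (by omega) hkm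
  calc yElem (xGen n) m k * xGen n (k - 2)
      = yElem (xGen n) m (k + 1) * (xGen n k * xGen n (k - 2)) := by rw [p1]; group
    _ = yElem (xGen n) m (k + 1) * (xGen n (k - 2) * (xGen n (k - 1))⁻¹ * xGen n k) := by
        rw [← xT' k hk3 (by omega)]
    _ = (yElem (xGen n) m (k + 1) * (xGen n (k - 2) * (xGen n (k - 1))⁻¹) *
          (yElem (xGen n) m (k + 1))⁻¹) * yElem (xGen n) m k := by rw [p1]; group

theorem starB3 (m i k : ℕ) (hk1 : 1 ≤ k) (hik : k + 2 ≤ i) (him : i ≤ m) (hm : m ≤ n - 2) :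
    yElem (xGen n) m k * xGen n i = xGen n (i - 2) * yElem (xGen n) m k := by
  have hi3 : 3 ≤ i := by omega
  have hd : descProd (xGen n) m k
      = descProd (xGen n) m (i + 1) *
        (xGen n i * (xGen n (i - 1) * (xGen n (i - 2) * descProd (xGen n) (i - 3) k))) := by
    rw [descProd_split (xGen n) m k (i + 1) (by omega) (by omega) (by omega),
      show i + 1 - 1 = i by omega,
      descProd_peel_left (xGen n) i k hk1 (by omega),
      descProd_peel_left (xGen n) (i - 1) k hk1 (by omega),
      show i - 1 - 1 = i - 2 by omega,
      descProd_peel_left (xGen n) (i - 2) k hk1 (by omega),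
      show i - 2 - 1 = i - 3 by omega]
  calc yElem (xGen n) m k * xGen n i
      = descProd (xGen n) m (i + 1) *
          (xGen n i * (xGen n (i - 1) * (xGen n (i - 2) * descProd (xGen n) (i - 3) k))) *
          xGen n i := by rw [yElem_of_pos _ m k hk1, hd]
    _ = descProd (xGen n) m (i + 1) *
          ((xGen n i * (xGen n (i - 1) * xGen n (i - 2))) *
            (descProd (xGen n) (i - 3) k * xGen n i)) := by group
    _ = descProd (xGen n) m (i + 1) *
          ((xGen n i * (xGen n (i - 1) * xGen n (i - 2))) *
            (xGen n i * descProd (xGen n) (i - 3) k)) := by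
        rw [← commute_desc_left i (i - 3) k (by omega)]
    _ = descProd (xGen n) m (i + 1) *
          ((xGen n i * (xGen n (i - 1) * xGen n (i - 2)) * xGen n i) *
            descProd (xGen n) (i - 3) k) := by group
    _ = descProd (xGen n) m (i + 1) *
          ((xGen n (i - 2) * (xGen n i * (xGen n (i - 1) * xGen n (i - 2)))) *
            descProd (xGen n) (i - 3) k) := by rw [xW2' i hi3 (by omega)]
    _ = (descProd (xGen n) m (i + 1) * xGen n (i - 2)) *
          ((xGen n i * (xGen n (i - 1) * xGen n (i - 2))) *
            descProd (xGen n) (i - 3) k) := by group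
    _ = (xGen n (i - 2) * descProd (xGen n) m (i + 1)) *
          ((xGen n i * (xGen n (i - 1) * xGen n (i - 2))) *
            descProd (xGen n) (i - 3) k) := by
        rw [← commute_desc_right (i - 2) m (i + 1) (by omega)]
    _ = xGen n (i - 2) * yElem (xGen n) m k := by rw [yElem_of_pos _ m k hk1, hd]; group

theorem starB5 (m i k : ℕ) (hik : i + 3 ≤ k) (hkm : 1 ≤ k) :
    yElem (xGen n) m k * xGen n i = xGen n i * yElem (xGen n) m k := by
  rw [yElem_of_pos _ m k hkm]
  exact (commute_desc_right i m k hik).symm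

theorem star (m : ℕ) (hm1 : 1 ≤ m) (hm : m ≤ n - 2) (i : ℕ) (hi1 : 1 ≤ i) (him : i ≤ m)
    (k : ℕ) (hk : k ≤ m + 1) :
    ∃ k', k' ≤ m + 1 ∧ ∃ h ∈ Hgrp n (m - 1),
      yElem (xGen n) m k * xGen n i = h * yElem (xGen n) m k' := by
  have q0 : yElem (xGen n) m 0 = yElem (xGen n) m 1 * xGen n 1 := yElem_zero _ m
  by_cases hk0 : k = 0
  · subst hk0
    have q1 : yElem (xGen n) m 1 = yElem (xGen n) m 2 * xGen n 1 :=
      yElem_peel_right _ m 1 le_rfl hm1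
    rcases Nat.lt_or_ge i 4 with hi4 | hi4
    · interval_cases i
      · -- i = 1
        refine ⟨2, by omega, 1, one_mem _, ?_⟩
        calc yElem (xGen n) m 0 * xGen n 1
            = yElem (xGen n) m 2 * (xGen n 1 * xGen n 1 * xGen n 1) := by rw [q0, q1]; group
          _ = 1 * yElem (xGen n) m 2 := by rw [x_cube']; group
      · -- i = 2
        have hm2 : 2 ≤ m := him
        have hB2 := starB2 m 1 le_rfl (by omega) hm
        have q2 : yElem (xGen n) m 2 = yElem (xGen n) m 3 * xGen n 2 :=
          yElem_peel_right _ m 2 (by omega) (by omega)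
        refine ⟨0, by omega, _, conjY m hm 3 (by omega) (by omega) _
          (inv_mem (x_mem_H 1 1 le_rfl le_rfl)), ?_⟩
        calc yElem (xGen n) m 0 * xGen n 2
            = yElem (xGen n) m 1 * (xGen n 1 * xGen n 2) := by rw [q0]; group
          _ = yElem (xGen n) m 1 * (xGen n 2 * xGen n 2 * (xGen n 1 * xGen n 1)) := by
              rw [x_expand 1 le_rfl (by omega)]
          _ = (yElem (xGen n) m 1 * xGen n 2) * (xGen n 2 * xGen n 1 * xGen n 1) := by group
          _ = ((yElem (xGen n) m 3 * (xGen n 1)⁻¹ * (yElem (xGen n) m 3)⁻¹) *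
                yElem (xGen n) m 3) * (xGen n 2 * xGen n 1 * xGen n 1) := by rw [hB2]
          _ = (yElem (xGen n) m 3 * (xGen n 1)⁻¹ * (yElem (xGen n) m 3)⁻¹) *
                (((yElem (xGen n) m 3 * xGen n 2) * xGen n 1) * xGen n 1) := by group
          _ = (yElem (xGen n) m 3 * (xGen n 1)⁻¹ * (yElem (xGen n) m 3)⁻¹) *
                yElem (xGen n) m 0 := by rw [← q2, ← q1, ← q0]
      · -- i = 3
        have hm3 : 3 ≤ m := him
        have hB2 := starB2 m 1 le_rfl (by omega) hm
        have q2 : yElem (xGen n) m 2 = yElem (xGen n) m 3 * xGen n 2 :=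
          yElem_peel_right _ m 2 (by omega) (by omega)
        have hB3 := starB3 m 3 1 le_rfl (by omega) (by omega) hm
        refine ⟨0, by omega, (yElem (xGen n) m 3 * (xGen n 1)⁻¹ * (yElem (xGen n) m 3)⁻¹)
          * xGen n 1, mul_mem (conjY m hm 3 (by omega) (by omega) _
            (inv_mem (x_mem_H 1 1 le_rfl le_rfl))) (x_mem_H 1 (m - 1) le_rfl (by omega)), ?_⟩
        calc yElem (xGen n) m 0 * xGen n 3
            = yElem (xGen n) m 1 * ((xGen n 2 * xGen n 2 * xGen n 2) * (xGen n 1 * xGen n 3)) := by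
              rw [q0, x_cube']; group
          _ = (yElem (xGen n) m 1 * xGen n 2) * (xGen n 2 * (xGen n 2 * (xGen n 1 * xGen n 3))) := by
              group
          _ = (yElem (xGen n) m 1 * xGen n 2) * (xGen n 2 * (xGen n 1 * xGen n 3 * xGen n 1)) := by
              rw [xW3'' (by omega)]
          _ = ((yElem (xGen n) m 3 * (xGen n 1)⁻¹ * (yElem (xGen n) m 3)⁻¹) *
                yElem (xGen n) m 3) * (xGen n 2 * (xGen n 1 * xGen n 3 * xGen n 1)) := by
              rw [hB2]
          _ = (yElem (xGen n) m 3 * (xGen n 1)⁻¹ * (yElem (xGen n) m 3)⁻¹) *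
                ((((yElem (xGen n) m 3 * xGen n 2) * xGen n 1) * xGen n 3) * xGen n 1) := by group
          _ = (yElem (xGen n) m 3 * (xGen n 1)⁻¹ * (yElem (xGen n) m 3)⁻¹) *
                ((yElem (xGen n) m 1 * xGen n 3) * xGen n 1) := by rw [← q2, ← q1]
          _ = (yElem (xGen n) m 3 * (xGen n 1)⁻¹ * (yElem (xGen n) m 3)⁻¹) *
                ((xGen n 1 * yElem (xGen n) m 1) * xGen n 1) := by rw [hB3]
          _ = ((yElem (xGen n) m 3 * (xGen n 1)⁻¹ * (yElem (xGen n) m 3)⁻¹) * xGen n 1) *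
                (yElem (xGen n) m 1 * xGen n 1) := by group
          _ = ((yElem (xGen n) m 3 * (xGen n 1)⁻¹ * (yElem (xGen n) m 3)⁻¹) * xGen n 1) *
                yElem (xGen n) m 0 := by rw [← q0]
    · -- i ≥ 4
      have hB3 := starB3 m i 1 le_rfl (by omega) him hm
      refine ⟨0, by omega, xGen n (i - 2), x_mem_H (i - 2) (m - 1) (by omega) (by omega), ?_⟩
      calc yElem (xGen n) m 0 * xGen n i
          = yElem (xGen n) m 1 * (xGen n 1 * xGen n i) := by rw [q0]; group
        _ = yElem (xGen n) m 1 * (xGen n i * xGen n 1) := by rw [xGen_comm 1 i (by omega)]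
        _ = (yElem (xGen n) m 1 * xGen n i) * xGen n 1 := by group
        _ = (xGen n (i - 2) * yElem (xGen n) m 1) * xGen n 1 := by rw [hB3]
        _ = xGen n (i - 2) * yElem (xGen n) m 0 := by rw [q0]; group
  · have hk1 : 1 ≤ k := by omega
    by_cases hktop : k = m + 1
    · subst hktop
      have hy : yElem (xGen n) m (m + 1) = 1 := yElem_top _ m
      rcases eq_or_lt_of_le him with hEq | hLt
      · subst hEq
        refine ⟨i, by omega, 1, one_mem _, ?_⟩
        rw [hy, yElem_of_pos _ i i hi1, descProd_single]
      · refine ⟨m + 1, le_rfl, xGen n i, x_mem_H i (m - 1) hi1 (by omega), ?_⟩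
        rw [hy]; group
    · have hkm : k ≤ m := by omega
      rcases Nat.lt_or_ge (i + 2) k with hc1 | hc1
      · -- i ≤ k - 3
        refine ⟨k, by omega, xGen n i, x_mem_H i (m - 1) hi1 (by omega), ?_⟩
        exact starB5 m i k (by omega) hk1
      rcases eq_or_lt_of_le hc1 with hc2 | hc2
      · -- i = k - 2
        have hk3 : 3 ≤ k := by omega
        have hik : i = k - 2 := by omega
        subst hik
        refine ⟨k, by omega, _, conjY m hm (k + 1) (by omega) (by omega) _
          (mul_mem (x_mem_H (k - 2) (k - 1) (by omega) (by omega))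
            (inv_mem (x_mem_H (k - 1) (k - 1) (by omega) le_rfl))), ?_⟩
        exact starB4 m k hk3 hkm hm
      · have hc3 : k ≤ i + 1 := by omega
        rcases eq_or_lt_of_le hc3 with hc4 | hc4
        · -- i = k - 1
          have hik : i = k - 1 := by omega
          subst hik
          refine ⟨k - 1, by omega, 1, one_mem _, ?_⟩
          have h := yElem_peel_right (xGen n) m (k - 1) (by omega) (by omega)
          rw [show k - 1 + 1 = k by omega] at h
          rw [← h]; group
        · have hc5 : k ≤ i := by omega
          rcases eq_or_lt_of_le hc5 with hc6 | hc6
          · -- i = k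
            rcases eq_or_lt_of_le hk1 with hi1' | hi2'
            · -- k = 1
              refine ⟨0, by omega, 1, one_mem _, ?_⟩
              rw [← hc6, ← hi1', q0]; group
            · -- k ≥ 2
              refine ⟨k - 1, by omega, _, conjY m hm (k + 1) (by omega) (by omega) _
                (x_mem_H (k - 1) (k - 1) (by omega) le_rfl), ?_⟩
              rw [← hc6]
              exact starB1c m k (by omega) (by omega) hm
          · rcases eq_or_lt_of_le (Nat.succ_le_of_lt hc6) with hc7 | hc7
            · -- i = k + 1
              have hik : i = k + 1 := by omega
              subst hik
              refine ⟨k + 2, by omega, _, conjY m hm (k + 2) (by omega) (by omega) _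
                (inv_mem (x_mem_H k k hk1 le_rfl)), ?_⟩
              exact starB2 m k hk1 him hm
            · -- i ≥ k + 2
              refine ⟨k, by omega, xGen n (i - 2),
                x_mem_H (i - 2) (m - 1) (by omega) (by omega), ?_⟩
              exact starB3 m i k hk1 (by omega) him hm

end Star


/-! ### Normal-form sets and the main closure argument -/

section NF
variable {n : ℕ}

/-- The set of elements that admit a normal form `y_{1,k_1} ⋯ y_{m,k_m}`. -/
def NFset (n m : ℕ) : Set (SnPlus n) :=
  {X | ∃ k : ℕ → ℕ, (∀ j, 1 ≤ j → j ≤ m → k j ≤ j + 1) ∧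
    X = ((List.range' 1 m).map (fun j => yElem (xGen n) j (k j))).prod}

theorem NF_one (m : ℕ) : (1 : SnPlus n) ∈ NFset n m := by
  refine ⟨fun j => j + 1, fun j _ _ => le_rfl, ?_⟩
  rw [eq_comm]
  apply List.prod_eq_one
  intro a ha
  rw [List.mem_map] at ha
  obtain ⟨j, _, rfl⟩ := ha
  exact yElem_top _ j

theorem range'_split (m : ℕ) (hm : 1 ≤ m) :
    List.range' 1 m = List.range' 1 (m - 1) ++ [m] := by
  have h := @List.range'_1_concat 1 (m - 1)
  rw [show m - 1 + 1 = m by omega, show 1 + (m - 1) = m by omega] at h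
  exact h

theorem NF_split (m : ℕ) (hm : 1 ≤ m) {X : SnPlus n} (hX : X ∈ NFset n m) :
    ∃ W ∈ NFset n (m - 1), ∃ κ ≤ m + 1, X = W * yElem (xGen n) m κ := by
  obtain ⟨k, hb, rfl⟩ := hX
  refine ⟨((List.range' 1 (m - 1)).map (fun j => yElem (xGen n) j (k j))).prod,
    ⟨k, fun j h1 h2 => hb j h1 (by omega), rfl⟩, k m, hb m hm le_rfl, ?_⟩
  rw [range'_split m hm, List.map_append, List.prod_append]
  simp

theorem NF_mul (m : ℕ) (hm : 1 ≤ m) {W : SnPlus n} {κ : ℕ} (hW : W ∈ NFset n (m - 1))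
    (hκ : κ ≤ m + 1) : W * yElem (xGen n) m κ ∈ NFset n m := by
  obtain ⟨k, hb, rfl⟩ := hW
  refine ⟨fun j => if j = m then κ else k j, ?_, ?_⟩
  · intro j h1 h2
    rcases eq_or_ne j m with rfl | hj
    · show (if j = j then κ else k j) ≤ j + 1
      rw [if_pos rfl]; exact hκ
    · show (if j = m then κ else k j) ≤ j + 1
      rw [if_neg hj]; exact hb j h1 (by omega)
  · rw [range'_split m hm, List.map_append, List.prod_append]
    have e1 : (List.range' 1 (m - 1)).map
          (fun j => yElem (xGen n) j (if j = m then κ else k j))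
        = (List.range' 1 (m - 1)).map (fun j => yElem (xGen n) j (k j)) := by
      apply List.map_congr_left
      intro j hj
      rw [List.mem_range'] at hj
      obtain ⟨w, hw, rfl⟩ := hj
      rw [if_neg (by omega)]
    rw [e1]
    simp

theorem main_closure : ∀ m, m ≤ n - 2 → ∀ h ∈ Hgrp n m, ∀ W ∈ NFset n m,
    W * h ∈ NFset n m := by
  intro m
  induction m using Nat.strong_induction_on with
  | _ m IH =>
    intro hm h hh W hW
    have key : ∀ t, 1 ≤ t → t ≤ m → ∀ V, V ∈ NFset n m → V * xGen n t ∈ NFset n m := by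
      intro t ht1 htm V hV
      have hm1 : 1 ≤ m := le_trans ht1 htm
      obtain ⟨W₀, hW₀, κ, hκ, rfl⟩ := NF_split m hm1 hV
      obtain ⟨k', hk', h', hh', heq⟩ := star m hm1 hm t ht1 htm κ hκ
      have hrw : W₀ * yElem (xGen n) m κ * xGen n t = (W₀ * h') * yElem (xGen n) m k' := by
        rw [mul_assoc W₀, heq]; group
      rw [hrw]
      exact NF_mul m hm1 (IH (m - 1) (by omega) (by omega) h' hh' W₀ hW₀) hk'
    have hsub : h ∈ Submonoid.closure
        ((xGen n '' Set.Icc 1 m) ∪ (xGen n '' Set.Icc 1 m)⁻¹) := by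
      rw [← Subgroup.closure_toSubmonoid]
      exact hh
    have hall : ∀ g, g ∈ Submonoid.closure
        ((xGen n '' Set.Icc 1 m) ∪ (xGen n '' Set.Icc 1 m)⁻¹) →
        ∀ V, V ∈ NFset n m → V * g ∈ NFset n m := by
      intro g hg
      induction hg using Submonoid.closure_induction with
      | mem g hgS =>
        intro V hV
        rcases hgS with hgS | hgS
        · obtain ⟨t, ⟨ht1, ht2⟩, rfl⟩ := hgS
          exact key t ht1 ht2 V hV
        · rw [Set.mem_inv] at hgS
          obtain ⟨t, ⟨ht1, ht2⟩, hgt⟩ := hgS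
          have hg' : g = (xGen n t)⁻¹ := by rw [hgt, inv_inv]
          rw [hg', x_inv, ← mul_assoc]
          exact key t ht1 ht2 _ (key t ht1 ht2 V hV)
      | one => intro V hV; simpa using hV
      | mul a b ha hb iha ihb =>
        intro V hV
        rw [← mul_assoc]
        exact ihb _ (iha V hV)
    exact hall h hsub W hW

theorem mem_Htop (hn : 3 ≤ n) (X : SnPlus n) : X ∈ Hgrp n (n - 2) := by
  refine PresentedGroup.generated_by (altRels n) (Hgrp n (n - 2)) (fun j => ?_) X
  have hj : (j : ℕ) < n - 2 := j.isLt
  have e : PresentedGroup.of (rels := altRels n) j = xGen n ((j : ℕ) + 1) := by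
    rw [xGen_eq ((j : ℕ) + 1) (by omega) (by omega)]
    congr 1
  rw [e]
  exact x_mem_H _ _ (by omega) (by omega)

end NF

end SnPlusNF

/-- Normal form: every `X ∈ Sₙ⁺` can be written as
`y_{1,k_1} · y_{2,k_2} ⋯ y_{n-2,k_{n-2}}` with `0 ≤ k_j ≤ j + 1`. -/
theorem SnPlus_normal_form (n : ℕ) (hn : 3 ≤ n) (X : SnPlus n) :
    ∃ k : ℕ → ℕ, (∀ j, 1 ≤ j → j ≤ n - 2 → k j ≤ j + 1) ∧
      X = ((List.range' 1 (n - 2)).map (fun j => yElem (xGen n) j (k j))).prod := by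
  have hX : X ∈ SnPlusNF.Hgrp n (n - 2) := SnPlusNF.mem_Htop hn X
  have h := SnPlusNF.main_closure (n - 2) le_rfl X hX 1 (SnPlusNF.NF_one (n - 2))
  rw [one_mul] at h
  exact h
end

section
/- Let n ≥ 5 be an integer. For every element σ of the alternating group A_n there exists a unique tuple of integers (k_1, …, k_{n-2}) with 0 ≤ k_j ≤ j+1 for j = 1, …, n-2, such that σ = y_{1,k_1} · y_{2,k_2} ⋯ y_{n-2,k_{n-2}}. -/
/-- The 3-cycle `(i, i+1, i+2)` in the symmetric group on `{1, …, n}` (identified with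
`Fin n` via `j ↦ j - 1`), defined for `1 ≤ i ≤ n - 2` (junk value `1` otherwise). -/
def threeCycle (n i : ℕ) : Equiv.Perm (Fin n) :=
  if h : 1 ≤ i ∧ i + 1 < n then
    Equiv.swap ⟨i - 1, by omega⟩ ⟨i + 1, h.2⟩ * Equiv.swap ⟨i - 1, by omega⟩ ⟨i, by omega⟩
  else 1

lemma tc_fix {n i : ℕ} (x : Fin n) (h : i + 1 < x.val) : threeCycle n i x = x := by
  unfold threeCycle
  split
  · rename_i hc
    rw [Equiv.Perm.mul_apply]
    have e1 : Equiv.swap (⟨i - 1, by omega⟩ : Fin n) ⟨i, by omega⟩ x = x :=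
      Equiv.swap_apply_of_ne_of_ne (Fin.ne_of_val_ne (show x.val ≠ i - 1 by omega))
        (Fin.ne_of_val_ne (show x.val ≠ i by omega))
    have e2 : Equiv.swap (⟨i - 1, by omega⟩ : Fin n) ⟨i + 1, hc.2⟩ x = x :=
      Equiv.swap_apply_of_ne_of_ne (Fin.ne_of_val_ne (show x.val ≠ i - 1 by omega))
        (Fin.ne_of_val_ne (show x.val ≠ i + 1 by omega))
    rw [e1, e2]
  · rfl

lemma tc_mid {n i : ℕ} (h1 : 1 ≤ i) (h2 : i + 1 < n) :
    threeCycle n i ⟨i, by omega⟩ = ⟨i + 1, h2⟩ := by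
  unfold threeCycle
  rw [dif_pos ⟨h1, h2⟩, Equiv.Perm.mul_apply, Equiv.swap_apply_right,
    Equiv.swap_apply_left]

lemma tc_sub {n i : ℕ} (h1 : 1 ≤ i) (h2 : i + 1 < n) :
    threeCycle n i ⟨i - 1, by omega⟩ = ⟨i, by omega⟩ := by
  unfold threeCycle
  rw [dif_pos ⟨h1, h2⟩, Equiv.Perm.mul_apply, Equiv.swap_apply_left,
    Equiv.swap_apply_of_ne_of_ne (Fin.ne_of_val_ne (show i ≠ i - 1 by omega))
      (Fin.ne_of_val_ne (show i ≠ i + 1 by omega))]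

lemma tc_sign {n i : ℕ} : Equiv.Perm.sign (threeCycle n i) = 1 := by
  unfold threeCycle
  split
  · rename_i h
    rw [map_mul, Equiv.Perm.sign_swap (Fin.ne_of_val_ne (show i - 1 ≠ i + 1 by omega)),
      Equiv.Perm.sign_swap (Fin.ne_of_val_ne (show i - 1 ≠ i by omega))]
    decide
  · exact map_one _

lemma descProd_succ {G : Type*} [Monoid G] (x : ℕ → G) {m k : ℕ} (h : k ≤ m + 1) :
    descProd x (m + 1) k = x (m + 1) * descProd x m k := by
  unfold descProd
  have h2 : m + 2 - k = (m + 1 - k) + 1 := by omega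
  rw [h2, List.range'_concat, List.reverse_append]
  have h3 : k + 1 * (m + 1 - k) = m + 1 := by omega
  simp [h3]
  rw [show k + (m + 1 - k) = m + 1 from by omega]

lemma descProd_top {G : Type*} [Monoid G] (x : ℕ → G) (m : ℕ) :
    descProd x m (m + 1) = 1 := by
  unfold descProd
  simp [Nat.sub_self]

lemma descProd_self {G : Type*} [Monoid G] (x : ℕ → G) (m : ℕ) :
    descProd x m m = x m := by
  unfold descProd
  have : m + 1 - m = 1 := by omega
  simp [this]

lemma listprod_tc_fix {n : ℕ} (x : Fin n) :
    ∀ l : List ℕ, (∀ i ∈ l, i + 1 < x.val) → (l.map (threeCycle n)).prod x = x := by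
  intro l
  induction l with
  | nil => intro _; rfl
  | cons a t ih =>
    intro h
    rw [List.map_cons, List.prod_cons, Equiv.Perm.mul_apply,
      ih (fun i hi => h i (List.mem_cons_of_mem a hi)), tc_fix x (h a List.mem_cons_self)]

lemma descProd_tc_fix {n m k : ℕ} (x : Fin n) (h : m + 1 < x.val) :
    descProd (threeCycle n) m k x = x := by
  unfold descProd
  apply listprod_tc_fix
  intro i hi
  rw [List.mem_reverse, List.mem_range'_1] at hi
  omega

lemma descProd_tc_apply {n m k : ℕ} (hk : 1 ≤ k) (hkm : k ≤ m) (hm : m + 1 < n) :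
    descProd (threeCycle n) m k ⟨k, by omega⟩ = ⟨m + 1, hm⟩ := by
  induction m, hkm using Nat.le_induction with
  | base => rw [descProd_self]; exact tc_mid hk hm
  | succ m hkm ih =>
    rw [descProd_succ _ (by omega), Equiv.Perm.mul_apply, ih (by omega)]
    exact tc_mid (by omega) hm

lemma descProd_tc_sign {n m k : ℕ} : Equiv.Perm.sign (descProd (threeCycle n) m k) = 1 := by
  unfold descProd
  rw [map_list_prod, List.map_map]
  apply List.prod_eq_one
  intro z hz
  rw [List.mem_map] at hz
  obtain ⟨i, -, rfl⟩ := hz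
  exact tc_sign

lemma yElem_sign {n m k : ℕ} : Equiv.Perm.sign (yElem (threeCycle n) m k) = 1 := by
  unfold yElem
  split
  · rw [map_mul, descProd_tc_sign, tc_sign, mul_one]
  · exact descProd_tc_sign

lemma yElem_fix {n m k : ℕ} (hm : 1 ≤ m) (x : Fin n) (h : m + 1 < x.val) :
    yElem (threeCycle n) m k x = x := by
  unfold yElem
  split
  · rw [Equiv.Perm.mul_apply, tc_fix x (by omega), descProd_tc_fix x h]
  · exact descProd_tc_fix x h

lemma yElem_apply {n m k : ℕ} (hm1 : 1 ≤ m) (hm : m + 1 < n) (hk : k ≤ m + 1) :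
    yElem (threeCycle n) m k ⟨k, by omega⟩ = ⟨m + 1, hm⟩ := by
  unfold yElem
  split
  · rename_i h0
    subst h0
    rw [Equiv.Perm.mul_apply]
    have e1 : threeCycle n 1 ⟨0, by omega⟩ = ⟨1, by omega⟩ := tc_sub le_rfl (by omega)
    rw [e1]
    exact descProd_tc_apply le_rfl hm1 hm
  · rename_i h0
    rcases Nat.lt_or_ge k (m + 1) with hlt | hge
    · exact descProd_tc_apply (by omega) (by omega) hm
    · have hk1 : k = m + 1 := by omega
      subst hk1
      rw [descProd_top]
      rfl

def yProd (n m : ℕ) (k : Fin m → ℕ) : Equiv.Perm (Fin n) :=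
  (List.ofFn (fun j : Fin m => yElem (threeCycle n) ((j : ℕ) + 1) (k j))).prod

lemma yProd_succ (n m : ℕ) (k : Fin (m + 1) → ℕ) :
    yProd n (m + 1) k =
      yProd n m (fun j => k j.castSucc) * yElem (threeCycle n) (m + 1) (k (Fin.last m)) := by
  unfold yProd
  rw [List.ofFn_succ', List.prod_concat]
  rfl

lemma yProd_fix {n m : ℕ} (k : Fin m → ℕ) (x : Fin n) (h : m + 1 < x.val) :
    yProd n m k x = x := by
  induction m with
  | zero => rfl
  | succ m ih =>
    rw [yProd_succ, Equiv.Perm.mul_apply, yElem_fix (by omega) x (by omega),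
      ih _ (by omega)]

lemma yProd_top {n m : ℕ} (hm : m + 2 < n) (k : Fin (m + 1) → ℕ)
    (hk : k (Fin.last m) ≤ m + 2) :
    yProd n (m + 1) k ⟨k (Fin.last m), by omega⟩ = ⟨m + 2, hm⟩ := by
  rw [yProd_succ, Equiv.Perm.mul_apply]
  have e1 : yElem (threeCycle n) (m + 1) (k (Fin.last m)) ⟨k (Fin.last m), by omega⟩
      = ⟨m + 2, hm⟩ := yElem_apply (by omega) hm (by omega)
  rw [e1, yProd_fix _ _ (Nat.lt_succ_self _)]

lemma yProd_inj {n : ℕ} : ∀ m, m + 2 ≤ n → ∀ k1 k2 : Fin m → ℕ,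
    (∀ j, k1 j ≤ (j : ℕ) + 2) → (∀ j, k2 j ≤ (j : ℕ) + 2) →
    yProd n m k1 = yProd n m k2 → k1 = k2 := by
  intro m
  induction m with
  | zero => intro _ k1 k2 _ _ _; funext j; exact j.elim0
  | succ m ih =>
    intro hmn k1 k2 hb1 hb2 heq
    have hm : m + 2 < n := by omega
    have hlast : k1 (Fin.last m) = k2 (Fin.last m) := by
      have e1 := yProd_top hm k1 (by simpa using hb1 (Fin.last m))
      have e2 := yProd_top hm k2 (by simpa using hb2 (Fin.last m))
      rw [heq] at e1
      have := (yProd n (m + 1) k2).injective (e1.trans e2.symm)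
      exact (Fin.mk.injEq _ _ _ _ ▸ this : _)
    have hprod : yProd n m (fun j => k1 j.castSucc) = yProd n m (fun j => k2 j.castSucc) := by
      have h1 := yProd_succ n m k1
      have h2 := yProd_succ n m k2
      rw [heq] at h1
      rw [hlast] at h1
      exact mul_right_cancel (h1.symm.trans h2)
    have htail : (fun j : Fin m => k1 j.castSucc) = (fun j : Fin m => k2 j.castSucc) :=
      ih (by omega) _ _ (fun j => by simpa using hb1 j.castSucc)
        (fun j => by simpa using hb2 j.castSucc) hprod
    funext j
    induction j using Fin.lastCases with
    | last => exact hlast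
    | cast j => exact congrFun htail j

lemma even_fix_base {n : ℕ} (hn2 : 2 ≤ n) (σ : Equiv.Perm (Fin n))
    (hs : Equiv.Perm.sign σ = 1) (hfix : ∀ x : Fin n, 1 < x.val → σ x = x) : σ = 1 := by
  have key : ∀ x : Fin n, x.val ≤ 1 → (σ x).val ≤ 1 := by
    intro x hx
    by_contra hcon
    push_neg at hcon
    have h1 : σ (σ x) = σ x := hfix (σ x) hcon
    have h2 : σ x = x := σ.injective h1
    omega
  set a : Fin n := ⟨0, by omega⟩ with ha
  set b : Fin n := ⟨1, by omega⟩ with hb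
  have hab : a ≠ b := Fin.ne_of_val_ne (show (0:ℕ) ≠ 1 by omega)
  have hcases : ∀ x : Fin n, x.val ≤ 1 → x = a ∨ x = b := by
    intro x hx
    rcases Nat.lt_or_ge x.val 1 with h | h
    · left; exact Fin.ext (show x.val = 0 by omega)
    · right; exact Fin.ext (show x.val = 1 by omega)
  rcases hcases (σ a) (key a (Nat.zero_le 1)) with haa | hab2
  · have hbb : σ b = b := by
      rcases hcases (σ b) (key b le_rfl) with h | h
      · exact absurd (σ.injective (h.trans haa.symm)) (Ne.symm hab)
      · exact h
    apply Equiv.ext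
    intro x
    rcases Nat.lt_or_ge 1 x.val with h | h
    · exact hfix x h
    · rcases hcases x (by omega) with rfl | rfl
      · exact haa
      · exact hbb
  · have hba : σ b = a := by
      rcases hcases (σ b) (key b le_rfl) with h | h
      · exact h
      · exact absurd (σ.injective (h.trans hab2.symm)) hab.symm
    have hswap : σ = Equiv.swap a b := by
      apply Equiv.ext
      intro x
      rcases Nat.lt_or_ge 1 x.val with h | h
      · rw [hfix x h, Equiv.swap_apply_of_ne_of_ne (Fin.ne_of_val_ne (show x.val ≠ 0 by omega))
          (Fin.ne_of_val_ne (show x.val ≠ 1 by omega))]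
      · rcases hcases x (by omega) with rfl | rfl
        · rw [hab2, Equiv.swap_apply_left]
        · rw [hba, Equiv.swap_apply_right]
    rw [hswap, Equiv.Perm.sign_swap hab] at hs
    exact absurd hs (by decide)

lemma yProd_surj {n : ℕ} : ∀ m, m + 2 ≤ n → ∀ σ : Equiv.Perm (Fin n),
    Equiv.Perm.sign σ = 1 → (∀ x : Fin n, m + 1 < x.val → σ x = x) →
    ∃ k : Fin m → ℕ, (∀ j, k j ≤ (j : ℕ) + 2) ∧ σ = yProd n m k := by
  intro m
  induction m with
  | zero =>
    intro hmn σ hs hfix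
    exact ⟨fun j => 0, fun j => j.elim0, even_fix_base hmn σ hs hfix⟩
  | succ m ih =>
    intro hmn σ hs hfix
    have hm : m + 2 < n := by omega
    obtain ⟨tv, htn, htv2, hst⟩ :
        ∃ tv : ℕ, ∃ h : tv < n, tv ≤ m + 2 ∧ σ ⟨tv, h⟩ = ⟨m + 2, hm⟩ := by
      refine ⟨(σ⁻¹ ⟨m + 2, hm⟩).val, Fin.isLt _, ?_, ?_⟩
      · by_contra hcon
        push_neg at hcon
        have h1 : σ (σ⁻¹ ⟨m + 2, hm⟩) = σ⁻¹ ⟨m + 2, hm⟩ := hfix _ (by omega)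
        rw [← Equiv.Perm.mul_apply, mul_inv_cancel, Equiv.Perm.one_apply] at h1
        have h2 : m + 2 = (σ⁻¹ (⟨m + 2, hm⟩ : Fin n)).val := congrArg Fin.val h1
        omega
      · rw [Fin.eta]
        exact σ.apply_symm_apply _
    have hyt : yElem (threeCycle n) (m + 1) tv ⟨tv, htn⟩ = ⟨m + 2, hm⟩ :=
      yElem_apply (by omega) hm (by omega)
    have hyfix : ∀ x : Fin n, m + 2 < x.val → yElem (threeCycle n) (m + 1) tv x = x :=
      fun x hx => yElem_fix (by omega) x (by omega)
    have hsign' : Equiv.Perm.sign (σ * (yElem (threeCycle n) (m + 1) tv)⁻¹) = 1 := by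
      rw [map_mul, map_inv, hs, yElem_sign, inv_one, mul_one]
    have hfix' : ∀ x : Fin n, m + 1 < x.val →
        (σ * (yElem (threeCycle n) (m + 1) tv)⁻¹) x = x := by
      intro x hx
      rw [Equiv.Perm.mul_apply]
      rcases Nat.lt_or_ge (m + 2) x.val with h | h
      · have hinv : (yElem (threeCycle n) (m + 1) tv)⁻¹ x = x :=
          Equiv.Perm.inv_eq_iff_eq.2 (hyfix x h).symm
        rw [hinv]
        exact hfix x (by omega)
      · have hx2 : x = ⟨m + 2, hm⟩ := Fin.ext (show x.val = m + 2 by omega)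
        subst hx2
        have hinv : (yElem (threeCycle n) (m + 1) tv)⁻¹ ⟨m + 2, hm⟩ = ⟨tv, htn⟩ :=
          Equiv.Perm.inv_eq_iff_eq.2 hyt.symm
        rw [hinv, hst]
    obtain ⟨k', hk'b, hk'⟩ := ih (by omega) _ hsign' hfix'
    refine ⟨Fin.snoc k' tv, ?_, ?_⟩
    · intro j
      induction j using Fin.lastCases with
      | last =>
        rw [Fin.snoc_last]
        simp only [Fin.val_last]
        omega
      | cast j =>
        rw [Fin.snoc_castSucc]
        simpa using hk'b j
    · rw [yProd_succ]
      have e1 : (fun j : Fin m => Fin.snoc (α := fun _ => ℕ) k' tv j.castSucc) = k' := by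
        funext j
        rw [Fin.snoc_castSucc]
      have e2 : Fin.snoc (α := fun _ => ℕ) k' tv (Fin.last m) = tv := Fin.snoc_last _ _
      rw [e1, e2, ← hk']
      exact (inv_mul_cancel_right σ _).symm


/-- Every element of `Aₙ` has a unique normal form `y_{1,k_1} · y_{2,k_2} ⋯ y_{n-2,k_{n-2}}`
with `0 ≤ k_j ≤ j + 1`.  Here the tuple is indexed by `j : Fin (n - 2)`, corresponding to the
paper's index `j + 1`, so the bound `k_j ≤ j + 1` reads `k j ≤ (j : ℕ) + 2`. -/
theorem alternatingGroup_unique_normal_form (n : ℕ) (hn : 5 ≤ n)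
    (σ : alternatingGroup (Fin n)) :
    ∃! k : Fin (n - 2) → ℕ, (∀ j, k j ≤ (j : ℕ) + 2) ∧
      (σ : Equiv.Perm (Fin n)) =
        (List.ofFn (fun j : Fin (n - 2) =>
          yElem (threeCycle n) ((j : ℕ) + 1) (k j))).prod := by
  obtain ⟨k, hb, he⟩ := yProd_surj (n - 2) (by omega) (σ : Equiv.Perm (Fin n))
    (Equiv.Perm.mem_alternatingGroup.mp σ.2)
    (fun x hx => absurd x.isLt (by omega))
  refine ⟨k, ⟨hb, he⟩, ?_⟩
  intro k2 hk2
  exact yProd_inj (n - 2) (by omega) k2 k hk2.1 hb (hk2.2.symm.trans he)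
end

section
/- Let n ≥ 3 be an integer. The group S_n^+ is finite of order n!/2. -/
set_option maxHeartbeats 1000000

open Equiv Subgroup

/-- the 3-cycle (i, i+1, i+2), as a function on ℕ -/
def pcf (i z : ℕ) : ℕ :=
  if z = i then i + 1 else if z = i + 1 then i + 2 else if z = i + 2 then i else z

lemma pcf_spec (i z : ℕ) :
    (z = i ∧ pcf i z = i + 1) ∨ (z = i + 1 ∧ pcf i z = i + 2) ∨
    (z = i + 2 ∧ pcf i z = i) ∨ (z ≠ i ∧ z ≠ i + 1 ∧ z ≠ i + 2 ∧ pcf i z = z) := by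
  unfold pcf; split_ifs <;> omega

/-- the 3-cycle (i, i+1, i+2) as a permutation of ℕ -/
def pc (i : ℕ) : Equiv.Perm ℕ := Equiv.swap i (i+1) * Equiv.swap (i+1) (i+2)

lemma pc_apply (i z : ℕ) : pc i z = pcf i z := by
  simp only [pc, Perm.mul_apply, Equiv.swap_apply_def, pcf]
  split_ifs <;> omega

lemma pc_cube (i : ℕ) : (pc i)^3 = 1 := by
  have h : (pc i)^3 = pc i * (pc i * pc i) := by
    rw [pow_succ, pow_succ, pow_one, mul_assoc]
  rw [h]
  ext z
  simp only [Perm.mul_apply, Perm.one_apply, pc_apply]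
  have h1 := pcf_spec i z
  have h2 := pcf_spec i (pcf i z)
  have h3 := pcf_spec i (pcf i (pcf i z))
  omega

lemma pc_sq_inv (i : ℕ) : (pc i)⁻¹ = pc i * pc i := by
  rw [eq_comm, ← mul_eq_one_iff_eq_inv]
  have h : (pc i)^3 = pc i * pc i * pc i := by rw [pow_succ, pow_succ, pow_one]
  rw [← h]
  exact pc_cube i

lemma pc_S (i : ℕ) : (pc i * pc (i+1))^2 = 1 := by
  have h : (pc i * pc (i+1))^2 = pc i * (pc (i+1) * (pc i * pc (i+1))) := by
    rw [pow_two]; group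
  rw [h]
  ext z
  simp only [Perm.mul_apply, Perm.one_apply, pc_apply]
  have h1 := pcf_spec (i+1) z
  have h2 := pcf_spec i (pcf (i+1) z)
  have h3 := pcf_spec (i+1) (pcf i (pcf (i+1) z))
  have h4 := pcf_spec i (pcf (i+1) (pcf i (pcf (i+1) z)))
  omega

lemma pc_Q (i j : ℕ) (h : i + 2 < j) : pc i * pc j = pc j * pc i := by
  ext z
  simp only [Perm.mul_apply, pc_apply]
  have h1 := pcf_spec j z
  have h2 := pcf_spec i (pcf j z)
  have h3 := pcf_spec i z
  have h4 := pcf_spec j (pcf i z)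
  omega

lemma pc_T (i : ℕ) : pc i * (pc (i+1))⁻¹ * pc (i+2) = pc (i+2) * pc i := by
  rw [pc_sq_inv]
  ext z
  simp only [Perm.mul_apply, pc_apply]
  have h1 := pcf_spec (i+2) z
  have h2 := pcf_spec (i+1) (pcf (i+2) z)
  have h3 := pcf_spec (i+1) (pcf (i+1) (pcf (i+2) z))
  have h4 := pcf_spec i (pcf (i+1) (pcf (i+1) (pcf (i+2) z)))
  have h5 := pcf_spec i z
  have h6 := pcf_spec (i+2) (pcf i z)
  omega

/-- the subgroup of `Perm ℕ` generated by the first `r` of the `pc i` -/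
def Kp (r : ℕ) : Subgroup (Equiv.Perm ℕ) := Subgroup.closure {g | ∃ i < r, g = pc i}

lemma Kp_fix (r : ℕ) : ∀ σ ∈ Kp r, ∀ z, r + 1 < z → σ z = z := by
  intro σ hσ
  refine Subgroup.closure_induction ?_ ?_ ?_ ?_ hσ
  · rintro g ⟨i, hi, rfl⟩ z hz
    rw [pc_apply]
    have := pcf_spec i z
    omega
  · intro z _; rfl
  · intro a b _ _ ha hb z hz
    rw [Equiv.Perm.mul_apply, hb z hz, ha z hz]
  · intro a _ ha z hz
    have h2 := ha z hz
    have h3 : (a⁻¹ : Equiv.Perm ℕ) (a z) = z := Equiv.symm_apply_apply a z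
    rw [h2] at h3
    exact h3

lemma Kp_le (r : ℕ) : Kp r ≤ Kp (r+1) := by
  apply Subgroup.closure_mono
  rintro g ⟨i, hi, rfl⟩
  exact ⟨i, by omega, rfl⟩

theorem Kp_lower : ∀ r, Finite ↥(Kp r) → (r+2).factorial / 2 ≤ Nat.card ↥(Kp r) := by
  intro r
  induction r with
  | zero =>
    intro _
    have hempty : {g : Equiv.Perm ℕ | ∃ i < 0, g = pc i} = ∅ := by ext g; simp
    have : Kp 0 = ⊥ := by rw [Kp, hempty, Subgroup.closure_empty]
    rw [this]
    simp [Subgroup.card_bot]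
  | succ r ih =>
    intro hfin
    have hle : Kp r ≤ Kp (r+1) := Kp_le r
    have hfinKr : Finite ↥(Kp r) :=
      Finite.of_injective (Subgroup.inclusion hle) (Subgroup.inclusion_injective hle)
    -- every point ≤ r+2 is in the orbit of r+2
    have horbit : ∀ d p, p + d = r + 2 → (p : ℕ) ∈ MulAction.orbit (↥(Kp (r+1))) ((r+2 : ℕ)) := by
      intro d
      induction d with
      | zero =>
        intro p hp
        have : p = r + 2 := by omega
        rw [this]
        exact MulAction.mem_orbit_self _
      | succ d ihd =>
        intro p hp
        obtain ⟨h, hh⟩ := ihd (p+1) (by omega)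
        have hmem : (pc (p-1))⁻¹ ∈ Kp (r+1) :=
          inv_mem (Subgroup.subset_closure ⟨p-1, by omega, rfl⟩)
        refine ⟨⟨(pc (p-1))⁻¹, hmem⟩ * h, ?_⟩
        show (⟨(pc (p-1))⁻¹, hmem⟩ * h) • ((r+2 : ℕ)) = p
        rw [mul_smul]
        have hh' : h • ((r+2 : ℕ)) = p + 1 := hh
        rw [hh']
        show (pc (p-1))⁻¹ (p+1) = p
        rw [Equiv.Perm.inv_def, Equiv.symm_apply_eq, pc_apply]
        have := pcf_spec (p-1) p
        omega
    have horbfin : Finite ↥(MulAction.orbit (↥(Kp (r+1))) ((r+2 : ℕ))) :=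
      Set.Finite.to_subtype (Set.finite_range _)
    have horbcard : r + 3 ≤ Nat.card ↥(MulAction.orbit (↥(Kp (r+1))) ((r+2 : ℕ))) := by
      have hinj : Function.Injective
          (fun p : Fin (r+3) =>
            (⟨(p : ℕ), horbit (r + 2 - (p : ℕ)) p (by omega)⟩ :
              ↥(MulAction.orbit (↥(Kp (r+1))) ((r+2 : ℕ))))) := by
        intro p q hpq
        exact Fin.ext (congrArg Subtype.val hpq)
      have := Nat.card_le_card_of_injective _ hinj
      simpa using this
    -- the stabilizer contains (a copy of) Kp r
    have hstab : (Kp r).subgroupOf (Kp (r+1)) ≤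
        MulAction.stabilizer (↥(Kp (r+1))) ((r+2 : ℕ)) := by
      intro g hg
      have : ((g : Equiv.Perm ℕ)) (r+2) = r+2 :=
        Kp_fix r (g : Equiv.Perm ℕ) hg (r+2) (by omega)
      exact this
    have hstabcard : (r+2).factorial / 2 ≤
        Nat.card ↥(MulAction.stabilizer (↥(Kp (r+1))) ((r+2 : ℕ))) := by
      calc (r+2).factorial / 2 ≤ Nat.card ↥(Kp r) := ih hfinKr
      _ = Nat.card ↥((Kp r).subgroupOf (Kp (r+1))) :=
          (Nat.card_congr (Subgroup.subgroupOfEquivOfLe hle).toEquiv).symm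
      _ ≤ _ := Subgroup.card_le_of_le hstab
    -- orbit-stabilizer
    have hos : Nat.card ↥(MulAction.orbit (↥(Kp (r+1))) ((r+2 : ℕ))) *
        Nat.card ↥(MulAction.stabilizer (↥(Kp (r+1))) ((r+2 : ℕ))) = Nat.card ↥(Kp (r+1)) := by
      rw [← Nat.card_prod]
      exact Nat.card_congr (MulAction.orbitProdStabilizerEquivGroup (↥(Kp (r+1))) ((r+2 : ℕ)))
    have hdvd : 2 ∣ (r+2).factorial := Nat.dvd_factorial (by omega) (by omega)
    calc (r+1+2).factorial / 2 = (r+3) * (r+2).factorial / 2 := by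
          congr 1
    _ = (r+3) * ((r+2).factorial / 2) := Nat.mul_div_assoc _ hdvd
    _ ≤ Nat.card ↥(MulAction.orbit (↥(Kp (r+1))) ((r+2 : ℕ))) *
        Nat.card ↥(MulAction.stabilizer (↥(Kp (r+1))) ((r+2 : ℕ))) :=
          Nat.mul_le_mul horbcard hstabcard
    _ = Nat.card ↥(Kp (r+1)) := hos


open Equiv Subgroup

/-- Key abstract lemma: a group generated by `M` elements satisfying the
relations (R), (S), (Q), (T) is finite of order at most `(M+2)!/2`. -/
theorem snplus_upper : ∀ (M : ℕ) (G : Type) (_ : Group G) (x : ℕ → G),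
    (∀ i, i < M → x i ^ 3 = 1) →
    (∀ i, i + 1 < M → (x i * x (i+1))^2 = 1) →
    (∀ i j, i + 2 < j → j < M → x i * x j = x j * x i) →
    (∀ i, i + 2 < M → x i * (x (i+1))⁻¹ * x (i+2) = x (i+2) * x i) →
    Subgroup.closure {g | ∃ i < M, g = x i} = ⊤ →
    Finite G ∧ Nat.card G ≤ (M+2).factorial / 2 := by
  intro M
  induction M with
  | zero =>
    intro G _ x _ _ _ _ hGen
    have hempty : {g : G | ∃ i < 0, g = x i} = (∅ : Set G) := by
      ext g; simp
    rw [hempty, Subgroup.closure_empty] at hGen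
    have hsub : Subsingleton G := by
      constructor
      intro a b
      have ha : a ∈ (⊥ : Subgroup G) := hGen ▸ Subgroup.mem_top a
      have hb : b ∈ (⊥ : Subgroup G) := hGen ▸ Subgroup.mem_top b
      rw [Subgroup.mem_bot] at ha hb
      rw [ha, hb]
    constructor
    · exact Finite.of_subsingleton
    · have : Nat.card G = 1 := Nat.card_eq_one_iff_unique.2 ⟨hsub, ⟨1⟩⟩
      simp [this]
  | succ M ih =>
    intro G _ x hR hS hQ hT hGen
    set H : Subgroup G := Subgroup.closure {g | ∃ i < M, g = x i} with hH
    have Hgen : ∀ i, i < M → x i ∈ H := fun i hi => Subgroup.subset_closure ⟨i, hi, rfl⟩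
    -- the subgroup H is finite of order at most (M+2)!/2, by induction hypothesis
    have hHcard : Finite ↥H ∧ Nat.card ↥H ≤ (M+2).factorial / 2 := by
      set y : ℕ → ↥H := fun i => if h : i < M then ⟨x i, Hgen i h⟩ else 1 with hy
      have hyc : ∀ i, i < M → ((y i : G) = x i) := by
        intro i hi; simp [hy, dif_pos hi]
      refine ih ↥H inferInstance y ?_ ?_ ?_ ?_ ?_
      · intro i hi
        apply Subtype.ext
        push_cast [hyc i hi]
        exact hR i (by omega)
      · intro i hi
        apply Subtype.ext
        push_cast [hyc i (by omega), hyc (i+1) hi]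
        exact hS i (by omega)
      · intro i j hij hj
        apply Subtype.ext
        push_cast [hyc i (by omega), hyc j hj]
        exact hQ i j hij (by omega)
      · intro i hi
        apply Subtype.ext
        push_cast [hyc i (by omega), hyc (i+1) (by omega), hyc (i+2) hi]
        exact hT i (by omega)
      · rw [eq_top_iff, ← Subgroup.closure_closure_coe_preimage (k := {g | ∃ i < M, g = x i})]
        apply Subgroup.closure_mono
        rintro ⟨g, hg⟩ ⟨i, hi, rfl⟩
        exact ⟨i, hi, Subtype.ext (hyc i hi).symm⟩
    -- the transversal
    set w : ℕ → G := fun k => (((List.range' k (M + 1 - k)).map x).reverse).prod with hw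
    have hwtop : ∀ k, M + 1 ≤ k → w k = 1 := by
      intro k hk
      have : M + 1 - k = 0 := by omega
      simp [hw, this]
    have hwrec : ∀ k, k ≤ M → w k = w (k+1) * x k := by
      intro k hk
      have h1 : M + 1 - k = (M - k) + 1 := by omega
      have h2 : M + 1 - (k+1) = M - k := by omega
      simp only [hw, h1, h2, List.range'_succ, List.map_cons, List.reverse_cons,
        List.prod_append, List.prod_cons, List.prod_nil, mul_one]
    set t : ℕ → G := fun k => if k ≤ M + 1 then x M * w k else 1 with ht
    have httop : ∀ k, M + 2 ≤ k → t k = 1 := by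
      intro k hk; simp only [ht]; rw [if_neg (by omega)]
    have ht1 : t (M+1) = x M := by
      simp only [ht]; rw [if_pos (by omega), hwtop (M+1) (by omega), mul_one]
    have htrec : ∀ k, k ≤ M → t k = t (k+1) * x k := by
      intro k hk
      simp only [ht]
      rw [if_pos (by omega), if_pos (by omega), hwrec k hk, mul_assoc]
    -- basic consequences of the relations
    have hx3 : ∀ i, i ≤ M → x i * x i * x i = 1 := by
      intro i hi
      have := hR i (by omega)
      rwa [pow_succ, pow_succ, pow_one] at this
    have hxinv : ∀ i, i ≤ M → (x i)⁻¹ = x i * x i := by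
      intro i hi
      have h := hx3 i hi
      rw [eq_comm, ← mul_eq_one_iff_eq_inv]
      exact h
    have hx3 : ∀ i, i ≤ M → x i * x i * x i = 1 := by
      intro i hi
      have := hR i (by omega)
      rwa [pow_succ, pow_succ, pow_one] at this
    have hxinv : ∀ i, i ≤ M → (x i)⁻¹ = x i * x i := by
      intro i hi
      rw [eq_comm, ← mul_eq_one_iff_eq_inv]
      exact hx3 i hi
    have hxinv2 : ∀ i, i ≤ M → (x i)⁻¹ * (x i)⁻¹ = x i := by
      intro i hi
      rw [hxinv i hi]
      have h := hx3 i hi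
      calc x i * x i * (x i * x i) = (x i * x i * x i) * x i := by group
      _ = x i := by rw [h, one_mul]
    have hS4 : ∀ i, i + 1 ≤ M → x i * x (i+1) * x i * x (i+1) = 1 := by
      intro i hi
      have := hS i (by omega)
      rw [pow_two] at this
      calc x i * x (i+1) * x i * x (i+1) = (x i * x (i+1)) * (x i * x (i+1)) := by group
      _ = 1 := this
    have hSS : ∀ i, i + 1 ≤ M → x i * x (i+1) * x i = (x (i+1))⁻¹ := by
      intro i hi
      rw [← mul_eq_one_iff_eq_inv]
      exact hS4 i hi
    have hSS2 : ∀ i, i + 1 ≤ M → x (i+1) * x i * x (i+1) = (x i)⁻¹ := by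
      intro i hi
      have h := hS4 i hi
      rw [← mul_eq_one_iff_eq_inv]
      calc x (i+1) * x i * x (i+1) * x i
          = (x i)⁻¹ * (x i * x (i+1) * x i * x (i+1)) * x i := by group
      _ = (x i)⁻¹ * 1 * x i := by rw [h]
      _ = 1 := by group
    have hSinv : ∀ i, i + 1 ≤ M → (x i)⁻¹ * (x (i+1))⁻¹ = x (i+1) * x i := by
      intro i hi
      have h := hSS2 i hi
      calc (x i)⁻¹ * (x (i+1))⁻¹ = (x (i+1) * x i)⁻¹ := by group
      _ = x (i+1) * x i := by
          rw [inv_eq_iff_mul_eq_one]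
          calc x (i+1) * x i * (x (i+1) * x i)
              = (x (i+1) * x i * x (i+1)) * x i := by group
          _ = (x i)⁻¹ * x i := by rw [h]
          _ = 1 := by group
    have r2 : ∀ i, i + 1 ≤ M → x (i+1) * x i * (x (i+1))⁻¹ = (x i)⁻¹ * x (i+1) := by
      intro i hi
      rw [hxinv (i+1) hi]
      calc x (i+1) * x i * (x (i+1) * x (i+1))
          = (x (i+1) * x i * x (i+1)) * x (i+1) := by group
      _ = (x i)⁻¹ * x (i+1) := by rw [hSS2 i hi]
    have r3 : ∀ i, i + 1 ≤ M → x i * x (i+1) * (x i)⁻¹ = (x (i+1))⁻¹ * x i := by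
      intro i hi
      rw [hxinv i (by omega)]
      calc x i * x (i+1) * (x i * x i)
          = (x i * x (i+1) * x i) * x i := by group
      _ = (x (i+1))⁻¹ * x i := by rw [hSS i hi]
    have r4 : ∀ i, i + 2 ≤ M → x (i+2) * x i * (x (i+2))⁻¹ = x i * (x (i+1))⁻¹ := by
      intro i hi
      have h := hT i (by omega)
      calc x (i+2) * x i * (x (i+2))⁻¹
          = (x i * (x (i+1))⁻¹ * x (i+2)) * (x (i+2))⁻¹ := by rw [h]
      _ = x i * (x (i+1))⁻¹ := by group
    have r5 : ∀ i, i + 2 ≤ M → x i * x (i+2) * (x i)⁻¹ = (x (i+1))⁻¹ * (x i * x (i+2)) := by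
      intro i hi
      have h2 : (x (i+1))⁻¹ * (x i)⁻¹ * (x (i+1))⁻¹ = x i := by
        rw [← hSS2 i (by omega)]; group
      have h4 : (x (i+1))⁻¹ * x (i+2) = (x i)⁻¹ * (x (i+2) * x i) := by
        rw [← hT i (by omega)]; group
      calc x i * x (i+2) * (x i)⁻¹
          = ((x (i+1))⁻¹ * (x i)⁻¹ * (x (i+1))⁻¹) * x (i+2) * (x i)⁻¹ := by rw [h2]
      _ = (x (i+1))⁻¹ * (x i)⁻¹ * ((x (i+1))⁻¹ * x (i+2)) * (x i)⁻¹ := by group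
      _ = (x (i+1))⁻¹ * (x i)⁻¹ * ((x i)⁻¹ * (x (i+2) * x i)) * (x i)⁻¹ := by rw [h4]
      _ = (x (i+1))⁻¹ * ((x i)⁻¹ * (x i)⁻¹) * x (i+2) := by group
      _ = (x (i+1))⁻¹ * (x i * x (i+2)) := by rw [hxinv2 i (by omega)]; group
    have rQ : ∀ i j, i + 2 < j → j ≤ M → x j * x i * (x j)⁻¹ = x i := by
      intro i j hij hj
      rw [← hQ i j hij (by omega)]; group
    have rQ' : ∀ i j, i + 2 < j → j ≤ M → x i * x j * (x i)⁻¹ = x j := by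
      intro i j hij hj
      rw [hQ i j hij (by omega)]; group
    obtain ⟨hHfin, hHcard⟩ := hHcard
    -- conjugation step helper
    have cstep : ∀ k, k ≤ M → ∀ y y' : G, x k * y * (x k)⁻¹ = y' →
        t k * y * (t k)⁻¹ = t (k+1) * y' * (t (k+1))⁻¹ := by
      intro k hk y y' hy
      rw [htrec k hk, ← hy]; group
    -- L1 : conjugates of low generators by t k, for k ≥ j + 3
    have L1 : ∀ d k j, k + d = M + 2 → j + 3 ≤ k → t k * x j * (t k)⁻¹ ∈ H := by
      intro d
      induction d with
      | zero =>
        intro k j hk hj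
        have : k = M + 2 := by omega
        rw [this, httop (M+2) (by omega)]
        simpa using Hgen j (by omega)
      | succ d ihd =>
        intro k j hk hj
        rcases eq_or_lt_of_le (show k ≤ M + 1 by omega) with hkM | hkM
        · -- k = M + 1 : t k = x M
          rw [hkM, ht1]
          rcases eq_or_lt_of_le (show j + 3 ≤ M + 1 from hkM ▸ hj) with hjM | hjM
          · -- j + 2 = M : rule r4
            have hj2 : j + 2 = M := by omega
            rw [← hj2, r4 j (by omega)]
            exact mul_mem (Hgen j (by omega)) (inv_mem (Hgen (j+1) (by omega)))
          · rw [rQ j M (by omega) (by omega)]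
            exact Hgen j (by omega)
        · -- k ≤ M
          have hk' : k ≤ M := by omega
          rw [cstep k hk' (x j) (x j) (rQ j k (by omega) (by omega))]
          exact ihd (k+1) j (by omega) (by omega)
    -- Gg : the element t (i+2) * (x i * x (i+1)⁻¹) * t (i+2)⁻¹ lies in H
    have Gg : ∀ d i, i + 1 + d = M → t (i+2) * (x i * (x (i+1))⁻¹) * (t (i+2))⁻¹ ∈ H := by
      intro d
      induction d with
      | zero =>
        intro i hi
        have hi1 : i + 1 = M := by omega
        have h2 : t (i + 2) = x (i+1) := by rw [show i + 2 = M + 1 by omega, ht1, hi1]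
        have : t (i+2) * (x i * (x (i+1))⁻¹) * (t (i+2))⁻¹ = (x i)⁻¹ := by
          rw [h2]
          calc x (i+1) * (x i * (x (i+1))⁻¹) * (x (i+1))⁻¹
              = (x (i+1) * x i * (x (i+1))⁻¹) * (x (i+1) * (x (i+1))⁻¹ * (x (i+1))⁻¹) := by group
          _ = ((x i)⁻¹ * x (i+1)) * (x (i+1))⁻¹ := by rw [r2 i (by omega)]; group
          _ = (x i)⁻¹ := by group
        rw [this]
        exact inv_mem (Hgen i (by omega))
      | succ d ihd =>
        intro i hi
        have hi2 : i + 2 ≤ M := by omega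
        have inner : x (i+2) * (x i * (x (i+1))⁻¹) * (x (i+2))⁻¹
            = x i * (x (i+2) * (x (i+1))⁻¹) := by
          calc x (i+2) * (x i * (x (i+1))⁻¹) * (x (i+2))⁻¹
              = (x (i+2) * x i * (x (i+2))⁻¹) * (x (i+2) * x (i+1) * (x (i+2))⁻¹)⁻¹ := by group
          _ = (x i * (x (i+1))⁻¹) * ((x (i+1))⁻¹ * x (i+2))⁻¹ := by
              rw [r4 i hi2, r2 (i+1) hi2]
          _ = x i * ((x (i+1))⁻¹ * (x (i+2))⁻¹) * x (i+1) := by group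
          _ = x i * (x (i+2) * x (i+1)) * x (i+1) := by rw [hSinv (i+1) hi2]
          _ = x i * (x (i+2) * (x (i+1) * x (i+1))) := by group
          _ = x i * (x (i+2) * (x (i+1))⁻¹) := by rw [← hxinv (i+1) (by omega)]
        have key : t (i+2) * (x i * (x (i+1))⁻¹) * (t (i+2))⁻¹
            = (t (i+3) * x i * (t (i+3))⁻¹) *
              (t (i+3) * (x (i+1) * (x (i+2))⁻¹) * (t (i+3))⁻¹)⁻¹ := by
          rw [cstep (i+2) hi2 _ _ inner]; group
        rw [key]
        exact mul_mem (L1 (M - 1 - i) (i+3) i (by omega) (by omega)) (inv_mem (ihd (i+1) (by omega)))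
    -- L2 : conjugation of x i by t k for i ≥ k+2
    have L2A : ∀ a, a + 2 ≤ M → t a * x (a+2) * (t a)⁻¹ ∈ H := by
      intro a ha
      have inner1 : x a * x (a+2) * (x a)⁻¹ = (x (a+1))⁻¹ * (x a * x (a+2)) := r5 a ha
      have inner2 : x (a+1) * ((x (a+1))⁻¹ * (x a * x (a+2))) * (x (a+1))⁻¹
          = x a * x (a+2) * (x (a+1))⁻¹ := by group
      have inner3 : x (a+2) * (x a * x (a+2) * (x (a+1))⁻¹) * (x (a+2))⁻¹ = x a := by
        calc x (a+2) * (x a * x (a+2) * (x (a+1))⁻¹) * (x (a+2))⁻¹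
            = (x (a+2) * x a * (x (a+2))⁻¹) * x (a+2) *
              (x (a+2) * x (a+1) * (x (a+2))⁻¹)⁻¹ := by group
        _ = (x a * (x (a+1))⁻¹) * x (a+2) * ((x (a+1))⁻¹ * x (a+2))⁻¹ := by
            rw [r4 a ha, r2 (a+1) ha]
        _ = x a := by group
      rw [cstep a (by omega) _ _ inner1, cstep (a+1) (by omega) _ _ inner2,
        cstep (a+2) (by omega) _ _ inner3]
      exact L1 (M - 1 - a) (a+3) a (by omega) (by omega)
    have L2 : ∀ d k, k + 2 + d ≤ M → t k * x (k+2+d) * (t k)⁻¹ ∈ H := by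
      intro d
      induction d with
      | zero => intro k hk; exact L2A k hk
      | succ d ihd =>
        intro k hk
        rw [cstep k (by omega) _ _ (rQ' k (k+2+(d+1)) (by omega) (by omega))]
        have := ihd (k+1) (by omega)
        rwa [show k+1+2+d = k+2+(d+1) by omega] at this
    have L3 : ∀ a, a + 1 ≤ M → t a * x (a+1) * (t a)⁻¹ ∈ H := by
      intro a ha
      have inner2 : x (a+1) * ((x (a+1))⁻¹ * x a) * (x (a+1))⁻¹
          = x a * (x (a+1))⁻¹ := by group
      rw [cstep a (by omega) _ _ (r3 a ha), cstep (a+1) ha _ _ inner2]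
      exact Gg (M - 1 - a) a (by omega)
    have hx3' : ∀ i, i ≤ M → x i * x i * x i = 1 := by
      intro i hi
      rw [← hxinv i hi]; group
    -- main coset lemma
    have N : ∀ k i, i ≤ M → k ≤ M + 2 → ∃ h ∈ H, ∃ k' ≤ M + 2, t k * x i = h * t k' := by
      intro k i hi hk
      by_cases hk1 : k = i + 1
      · refine ⟨1, one_mem H, i, by omega, ?_⟩
        rw [hk1, one_mul, ← htrec i hi]
      by_cases hk0 : k = i
      · rcases eq_or_lt_of_le hi with hiM | hiM
        · refine ⟨1, one_mem H, M + 2, by omega, ?_⟩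
          rw [hk0, hiM, httop (M+2) (by omega), htrec M (by omega), ht1, mul_one,
            mul_assoc, ← mul_assoc]
          exact hx3' M (by omega)
        · refine ⟨(t (i+2) * (x i * (x (i+1))⁻¹) * (t (i+2))⁻¹)⁻¹,
            inv_mem (Gg (M - 1 - i) i (by omega)), i + 2, by omega, ?_⟩
          rw [hk0]
          calc t i * x i = t (i+2) * x (i+1) * (x i * x i) := by
                rw [htrec i (by omega), htrec (i+1) (by omega)]; group
          _ = t (i+2) * x (i+1) * (x i)⁻¹ := by rw [← hxinv i (by omega)]
          _ = (t (i+2) * (x i * (x (i+1))⁻¹) * (t (i+2))⁻¹)⁻¹ * t (i+2) := by group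
      by_cases hk2 : k = i + 2
      · rcases eq_or_lt_of_le hi with hiM | hiM
        · refine ⟨1, one_mem H, M + 1, by omega, ?_⟩
          rw [hk2, hiM, httop (M+2) (by omega), ht1, one_mul]
        · refine ⟨t (i+2) * (x i * (x (i+1))⁻¹) * (t (i+2))⁻¹,
            Gg (M - 1 - i) i (by omega), i + 1, by omega, ?_⟩
          rw [hk2, htrec (i+1) (by omega)]
          group
      -- remaining : x i commutes into the coset
      refine ⟨t k * x i * (t k)⁻¹, ?_, k, hk, by group⟩
      by_cases hik : i + 3 ≤ k
      · exact L1 (M + 2 - k) k i (by omega) hik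
      by_cases hki : k + 2 ≤ i
      · have := L2 (i - (k+2)) k (by omega)
        rwa [show k + 2 + (i - (k+2)) = i by omega] at this
      · have hik1 : i = k + 1 := by omega
        rw [hik1]
        exact L3 k (by omega)
    -- the union of the cosets H * t k is all of G
    set S : Set G := {g : G | ∃ p ∈ H, ∃ k ≤ M + 2, g = p * t k} with hSdef
    have hone : (1 : G) ∈ S := by
      refine ⟨1, one_mem H, M + 2, by omega, ?_⟩
      rw [httop (M+2) (by omega), mul_one]
    have hstep : ∀ g ∈ S, ∀ i, i ≤ M → g * x i ∈ S := by
      rintro g ⟨p, hp, k, hk, rfl⟩ i hi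
      obtain ⟨h, hh, k', hk', he⟩ := N k i hi hk
      exact ⟨p * h, mul_mem hp hh, k', hk', by rw [mul_assoc, he, ← mul_assoc]⟩
    have huniv : ∀ g : G, g ∈ S := by
      have key : ∀ g : G, (∀ s ∈ S, s * g ∈ S) ∧ (∀ s ∈ S, s * g⁻¹ ∈ S) := by
        intro g
        have hg : g ∈ Subgroup.closure {g : G | ∃ i < M + 1, g = x i} := by
          rw [hGen]; trivial
        refine Subgroup.closure_induction ?_ ?_ ?_ ?_ hg
        · rintro g ⟨i, hi, rfl⟩
          constructor
          · exact fun s hs => hstep s hs i (by omega)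
          · intro s hs
            rw [hxinv i (by omega), ← mul_assoc]
            exact hstep _ (hstep s hs i (by omega)) i (by omega)
        · constructor <;> intro s hs <;> simpa using hs
        · intro a b _ _ hA hB
          constructor
          · intro s hs; rw [← mul_assoc]; exact hB.1 _ (hA.1 s hs)
          · intro s hs; rw [mul_inv_rev, ← mul_assoc]; exact hA.2 _ (hB.2 s hs)
        · intro a _ hA
          exact ⟨hA.2, by simpa using hA.1⟩
      intro g
      have := (key g).1 1 hone
      simpa using this
    -- counting
    set F : ↥H × Fin (M+3) → G := fun p => (p.1 : G) * t p.2 with hF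
    have hFsurj : Function.Surjective F := by
      intro g
      obtain ⟨p, hp, k, hk, rfl⟩ := huniv g
      exact ⟨(⟨p, hp⟩, ⟨k, by omega⟩), rfl⟩
    have hGfin : Finite G := Finite.of_surjective F hFsurj
    refine ⟨hGfin, ?_⟩
    have h1 : Nat.card G ≤ Nat.card (↥H × Fin (M+3)) :=
      Nat.card_le_card_of_surjective F hFsurj
    have h2 : Nat.card (↥H × Fin (M+3)) = Nat.card ↥H * (M+3) := by
      rw [Nat.card_prod]
      congr 1
      exact Nat.card_eq_of_equiv_fin (Equiv.refl _)
    have hdvd : 2 ∣ (M+2).factorial := Nat.dvd_factorial (by omega) (by omega)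
    calc Nat.card G ≤ Nat.card ↥H * (M+3) := by rw [← h2]; exact h1
    _ ≤ ((M+2).factorial / 2) * (M+3) := Nat.mul_le_mul_right _ hHcard
    _ = (M+3) * ((M+2).factorial / 2) := by ring
    _ = (M+3) * (M+2).factorial / 2 := (Nat.mul_div_assoc _ hdvd).symm
    _ = (M+1+2).factorial / 2 := by congr 1



theorem SnPlus_finite_card (n : ℕ) (hn : 3 ≤ n) :
    Finite (SnPlus n) ∧ Nat.card (SnPlus n) = n.factorial / 2 := by
  classical
  have hm : n - 2 + 2 = n := by omega
  -- relators die in the presented group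
  have relone : ∀ r ∈ altRels n, PresentedGroup.mk (altRels n) r = 1 := by
    intro r hr
    have h1 : r ∈ Subgroup.normalClosure (altRels n) := Subgroup.subset_normalClosure hr
    exact (QuotientGroup.eq_one_iff r).2 h1
  set X : ℕ → SnPlus n := fun i => if h : i < n - 2 then PresentedGroup.of ⟨i, h⟩ else 1
    with hX
  have hXval : ∀ i (h : i < n - 2), X i = PresentedGroup.mk (altRels n) (FreeGroup.of ⟨i, h⟩) := by
    intro i h
    simp only [hX, dif_pos h]
    rfl
  -- the four families of relations hold for X
  have hXR : ∀ i, i < n - 2 → X i ^ 3 = 1 := by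
    intro i h
    rw [hXval i h, ← map_pow]
    exact relone _ (Or.inl ⟨⟨i, h⟩, rfl⟩)
  have hXS : ∀ i, i + 1 < n - 2 → (X i * X (i+1))^2 = 1 := by
    intro i h
    rw [hXval i (by omega), hXval (i+1) h, ← map_mul, ← map_pow]
    exact relone _ (Or.inr (Or.inl ⟨⟨i, by omega⟩, ⟨i+1, h⟩, rfl, rfl⟩))
  have hXQ : ∀ i j, i + 2 < j → j < n - 2 → X i * X j = X j * X i := by
    intro i j hij hj
    have h1 : X i * X j * (X i)⁻¹ * (X j)⁻¹ = 1 := by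
      rw [hXval i (by omega), hXval j hj, ← map_inv, ← map_inv, ← map_mul, ← map_mul,
        ← map_mul]
      exact relone _ (Or.inr (Or.inr (Or.inl ⟨⟨i, by omega⟩, ⟨j, hj⟩, Or.inl hij, rfl⟩)))
    have h2 : (X i * X j) * (X j * X i)⁻¹ = 1 := by
      rw [mul_inv_rev, ← mul_assoc]
      exact h1
    exact mul_inv_eq_one.1 h2
  have hXT : ∀ i, i + 2 < n - 2 → X i * (X (i+1))⁻¹ * X (i+2) = X (i+2) * X i := by
    intro i h
    have h1 : X i * (X (i+1))⁻¹ * X (i+2) * (X i)⁻¹ * (X (i+2))⁻¹ = 1 := by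
      rw [hXval i (by omega), hXval (i+1) (by omega), hXval (i+2) h,
        ← map_inv, ← map_inv, ← map_inv, ← map_mul, ← map_mul, ← map_mul, ← map_mul]
      exact relone _ (Or.inr (Or.inr (Or.inr
        ⟨⟨i, by omega⟩, ⟨i+1, by omega⟩, ⟨i+2, h⟩, rfl, rfl, rfl⟩)))
    have h2 : (X i * (X (i+1))⁻¹ * X (i+2)) * (X (i+2) * X i)⁻¹ = 1 := by
      rw [mul_inv_rev, ← mul_assoc]
      exact h1
    exact mul_inv_eq_one.1 h2
  have hXgen : Subgroup.closure {g | ∃ i < n - 2, g = X i} = ⊤ := by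
    have h0 := PresentedGroup.closure_range_of (altRels n)
    have hset : Set.range (PresentedGroup.of : Fin (n-2) → SnPlus n)
        = {g | ∃ i < n - 2, g = X i} := by
      ext g
      constructor
      · rintro ⟨a, rfl⟩
        exact ⟨a.1, a.2, by simp only [hX, dif_pos a.2, Fin.eta]⟩
      · rintro ⟨i, hi, rfl⟩
        exact ⟨⟨i, hi⟩, by simp only [hX, dif_pos hi]⟩
    rw [← hset]
    exact h0
  obtain ⟨hfin, hupper⟩ := snplus_upper (n-2) (SnPlus n) inferInstance X hXR hXS hXQ hXT hXgen
  rw [hm] at hupper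
  -- the homomorphism to permutations of ℕ
  have hrels : ∀ r ∈ altRels n,
      FreeGroup.lift (fun a : Fin (n-2) => pc (a : ℕ)) r = 1 := by
    rintro r (⟨a, rfl⟩ | ⟨a, b, hab, rfl⟩ | ⟨a, b, hab, rfl⟩ | ⟨a, b, c, hab, hac, rfl⟩)
    · rw [map_pow, FreeGroup.lift_apply_of]
      exact pc_cube a
    · rw [map_pow, map_mul, FreeGroup.lift_apply_of, FreeGroup.lift_apply_of, ← hab]
      exact pc_S a
    · rw [map_mul, map_mul, map_mul, map_inv, map_inv, FreeGroup.lift_apply_of, FreeGroup.lift_apply_of]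
      have hcomm : pc (a : ℕ) * pc (b : ℕ) = pc (b : ℕ) * pc (a : ℕ) := by
        rcases hab with h | h
        · exact pc_Q _ _ h
        · exact (pc_Q _ _ h).symm
      rw [hcomm]
      group
    · rw [map_mul, map_mul, map_mul, map_mul, map_inv, map_inv, map_inv,
        FreeGroup.lift_apply_of, FreeGroup.lift_apply_of, FreeGroup.lift_apply_of, ← hab, ← hac]
      have h2 : pc (a:ℕ) * (pc ((a:ℕ)+1))⁻¹ * pc ((a:ℕ)+2) * (pc (a:ℕ))⁻¹ * (pc ((a:ℕ)+2))⁻¹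
          = (pc (a:ℕ) * (pc ((a:ℕ)+1))⁻¹ * pc ((a:ℕ)+2)) * (pc ((a:ℕ)+2) * pc (a:ℕ))⁻¹ := by
        group
      rw [h2, pc_T]
      group
  set φ : SnPlus n →* Equiv.Perm ℕ := PresentedGroup.toGroup hrels with hφ
  have hφX : ∀ i, i < n - 2 → φ (X i) = pc i := by
    intro i h
    simp only [hX, dif_pos h, hφ, PresentedGroup.toGroup.of]
  have hrange : φ.range = Kp (n-2) := by
    rw [MonoidHom.range_eq_map, ← hXgen, MonoidHom.map_closure]
    congr 1
    ext g
    constructor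
    · rintro ⟨-, ⟨i, hi, rfl⟩, rfl⟩
      exact ⟨i, hi, (hφX i hi)⟩
    · rintro ⟨i, hi, rfl⟩
      exact ⟨X i, ⟨i, hi, rfl⟩, hφX i hi⟩
  have hfinrange : Finite ↥(φ.range) := by
    have : (Set.range φ).Finite := Set.finite_range φ
    exact this.to_subtype
  have hfinK : Finite ↥(Kp (n-2)) := by rw [← hrange]; exact hfinrange
  have hlow := Kp_lower (n-2) hfinK
  rw [hm] at hlow
  have h1 : Nat.card ↥(φ.range) ≤ Nat.card (SnPlus n) :=
    Nat.card_le_card_of_surjective φ.rangeRestrict φ.rangeRestrict_surjective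
  have h2 : Nat.card ↥(Kp (n-2)) = Nat.card ↥(φ.range) := by rw [hrange]
  exact ⟨hfin, le_antisymm hupper (le_trans (le_trans (h2 ▸ hlow) h1) le_rfl)⟩
end
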